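/- arXiv:math/0010097 — 4 statements merged into one kernel-verified Lean document; each statement's English description precedes it below -/
import Mathlib

section
/- The map φ : Ω → Λ sending x ∈ Ω to the equivalence class of the sequence (γ_n)_{n≥0} with γ₀ = e and γ_n = x(1)x(2)⋯x(n) is well defined and is a bijection from Ω onto Λ. -/
/-- A reduced word over the coset representatives `Ω i ∖ {1}`. -/
def IsRWord {I Γ : Type*} [Group Γ] (Ω : I → Set Γ) (w : List (I × Γ)) : Prop :=
  (w.map Prod.fst).Chain' (· ≠ ·) ∧ ∀ p ∈ w, p.2 ∈ Ω p.1 ∧ p.2 ≠ 1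

/-- The product in `Γ` of the letters of a word. -/
def wprod {I Γ : Type*} [Group Γ] (w : List (I × Γ)) : Γ :=
  (w.map Prod.snd).prod

/-- A boundary sequence: `x n ∈ Ω (idx n) ∖ {1}`, with `x n ∈ {a i, (a i)⁻¹}` if the factor
`idx n` is infinite, `idx n ≠ idx (n+1)` if the factor `idx n` is finite, and
`x n = x (n+1)` whenever `idx n` is infinite and `idx n = idx (n+1)`.
(`fin i` is the predicate "`G i` is finite".) -/
def BSeq {I Γ : Type*} [Group Γ] (Ω : I → Set Γ) (fin : I → Prop) (a : I → Γ)
    (x : ℕ → Γ) (idx : ℕ → I) : Prop :=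
  ∀ n, x n ∈ Ω (idx n) ∧ x n ≠ 1 ∧
    (¬ fin (idx n) → x n = a (idx n) ∨ x n = (a (idx n))⁻¹) ∧
    (fin (idx n) → idx n ≠ idx (n + 1)) ∧
    (¬ fin (idx n) → idx n = idx (n + 1) → x n = x (n + 1))

/-- The sequence of partial products `γ_n = x(1) x(2) ⋯ x(n)` (with `γ_0 = e`). -/
def phiSeq {Γ : Type*} [Group Γ] (x : ℕ → Γ) (n : ℕ) : Γ :=
  ((List.range n).map x).prod

/-- Membership in `Λ̃`: for all sufficiently large `n`,
`|γ_n| + 1 = |γ_{n+1}|` and `|γ_n⁻¹ γ_{n+1}| = 1`. -/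
def LambdaSeq {Γ : Type*} [Group Γ] (len : Γ → ℕ) (γ : ℕ → Γ) : Prop :=
  ∃ N : ℕ, ∀ n, N ≤ n → len (γ n) + 1 = len (γ (n + 1)) ∧ len ((γ n)⁻¹ * γ (n + 1)) = 1

/-- The equivalence on `Λ̃`: `(γ_n) ∼ (γ'_n)` iff there is `k ∈ ℤ` with
`γ_n H = γ'_{n+k} H` for all sufficiently large `n`. -/
def LambdaEquiv {Γ : Type*} [Group Γ] (H : Subgroup Γ) (γ γ' : ℕ → Γ) : Prop :=
  ∃ k : ℤ, ∃ N : ℕ, ∀ n : ℕ, N ≤ n →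
    0 ≤ (n : ℤ) + k ∧ (γ n)⁻¹ * γ' ((n : ℤ) + k).toNat ∈ H

namespace AFPaux

theorem wprod_nil {I Γ : Type*} [Group Γ] : wprod (I := I) (Γ := Γ) [] = 1 := rfl

theorem wprod_append {I Γ : Type*} [Group Γ] (w w' : List (I × Γ)) :
    wprod (w ++ w') = wprod w * wprod w' := by
  simp [wprod]

theorem wprod_concat {I Γ : Type*} [Group Γ] (w : List (I × Γ)) (p : I × Γ) :
    wprod (w ++ [p]) = wprod w * p.2 := by
  simp [wprod]

theorem phiSeq_succ {Γ : Type*} [Group Γ] (x : ℕ → Γ) (n : ℕ) :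
    phiSeq x (n + 1) = phiSeq x n * x n := by
  simp [phiSeq, List.range_succ]

theorem phiSeq_zero {Γ : Type*} [Group Γ] (x : ℕ → Γ) : phiSeq x 0 = 1 := rfl

section Basic

variable {I Γ : Type*} [Group Γ] {G : I → Subgroup Γ} {H : Subgroup Γ} {a : I → Γ}
  {Ω : I → Set Γ} {len : Γ → ℕ}

theorem mem_Omega_not_in_H (hΩG : ∀ i, Ω i ⊆ (G i : Set Γ)) (hΩ1 : ∀ i, (1 : Γ) ∈ Ω i)
    (hΩrep : ∀ i, ∀ g ∈ G i, ∃! x, x ∈ Ω i ∧ x⁻¹ * g ∈ H)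
    {i : I} {g : Γ} (hg : g ∈ Ω i) (hne : g ≠ 1) : g ∉ H := by
  intro hgH
  obtain ⟨x, -, hx⟩ := hΩrep i g (hΩG i hg)
  have h1 : g = x := hx g ⟨hg, by simpa using H.one_mem⟩
  have h2 : (1 : Γ) = x := hx 1 ⟨hΩ1 i, by simpa using hgH⟩
  exact hne (h1.trans h2.symm)

theorem apow_mem_H_iff
    (hcase : ∀ i, (G i : Set Γ).Finite ∨
      (a i ∈ G i ∧ (∀ h ∈ H, a i * h = h * a i) ∧
       (∀ g ∈ G i, ∃ n : ℤ, ∃ h ∈ H, g = a i ^ n * h) ∧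
       (∀ n : ℤ, a i ^ n ∈ H → n = 0)))
    {i : I} (hfin : ¬ (G i : Set Γ).Finite) (k : ℤ) : a i ^ k ∈ H ↔ k = 0 := by
  rcases hcase i with h | h
  · exact absurd h hfin
  · exact ⟨h.2.2.2 k, by rintro rfl; simpa using H.one_mem⟩

theorem apow_inj
    (hcase : ∀ i, (G i : Set Γ).Finite ∨
      (a i ∈ G i ∧ (∀ h ∈ H, a i * h = h * a i) ∧
       (∀ g ∈ G i, ∃ n : ℤ, ∃ h ∈ H, g = a i ^ n * h) ∧
       (∀ n : ℤ, a i ^ n ∈ H → n = 0)))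
    {i : I} (hfin : ¬ (G i : Set Γ).Finite) {k m : ℤ} (h : a i ^ k = a i ^ m) : k = m := by
  have : a i ^ (k - m) ∈ H := by
    rw [zpow_sub, h, mul_inv_cancel]; exact H.one_mem
  have := (apow_mem_H_iff hcase hfin _).1 this
  omega

theorem apow_facts
    (hcase : ∀ i, (G i : Set Γ).Finite ∨
      (a i ∈ G i ∧ (∀ h ∈ H, a i * h = h * a i) ∧
       (∀ g ∈ G i, ∃ n : ℤ, ∃ h ∈ H, g = a i ^ n * h) ∧
       (∀ n : ℤ, a i ^ n ∈ H → n = 0)))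
    (hΩa : ∀ i, ¬ (G i : Set Γ).Finite → Ω i = {g : Γ | ∃ n : ℤ, g = a i ^ n})
    (hlenZ : ∀ i, ¬ (G i : Set Γ).Finite → ∀ n : ℤ, ∀ h ∈ H, len (a i ^ n * h) = n.natAbs)
    {i : I} (hfin : ¬ (G i : Set Γ).Finite) (k : ℤ) :
    a i ^ k ∈ Ω i ∧ (k ≠ 0 → a i ^ k ≠ 1) ∧ len (a i ^ k) = k.natAbs := by
  refine ⟨by rw [hΩa i hfin]; exact ⟨k, rfl⟩, fun hk h1 => ?_, ?_⟩
  · exact hk ((apow_mem_H_iff hcase hfin k).1 (h1 ▸ H.one_mem))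
  · have := hlenZ i hfin k 1 H.one_mem
    simpa using this

/-- `u` is a `±1` power of `a i`. -/
theorem unit_zpow {u : Γ} {i : I} (hu : u = a i ∨ u = (a i)⁻¹) :
    ∃ ε : ℤ, (ε = 1 ∨ ε = -1) ∧ u = a i ^ ε := by
  rcases hu with rfl | rfl
  · exact ⟨1, Or.inl rfl, (zpow_one _).symm⟩
  · exact ⟨-1, Or.inr rfl, by simp⟩

theorem unit_len
    (hcase : ∀ i, (G i : Set Γ).Finite ∨
      (a i ∈ G i ∧ (∀ h ∈ H, a i * h = h * a i) ∧
       (∀ g ∈ G i, ∃ n : ℤ, ∃ h ∈ H, g = a i ^ n * h) ∧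
       (∀ n : ℤ, a i ^ n ∈ H → n = 0)))
    (hΩG : ∀ i, Ω i ⊆ (G i : Set Γ)) (hΩ1 : ∀ i, (1 : Γ) ∈ Ω i)
    (hΩrep : ∀ i, ∀ g ∈ G i, ∃! x, x ∈ Ω i ∧ x⁻¹ * g ∈ H)
    (hΩa : ∀ i, ¬ (G i : Set Γ).Finite → Ω i = {g : Γ | ∃ n : ℤ, g = a i ^ n})
    (hlen1 : ∀ i, (G i : Set Γ).Finite → ∀ g ∈ G i, g ∉ H → len g = 1)
    (hlenZ : ∀ i, ¬ (G i : Set Γ).Finite → ∀ n : ℤ, ∀ h ∈ H, len (a i ^ n * h) = n.natAbs)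
    {i : I} {u : Γ} (hu : u ∈ Ω i) (hne : u ≠ 1)
    (hsg : ¬ (G i : Set Γ).Finite → u = a i ∨ u = (a i)⁻¹) : len u = 1 := by
  by_cases hfin : (G i : Set Γ).Finite
  · exact hlen1 i hfin u (hΩG i hu) (mem_Omega_not_in_H hΩG hΩ1 hΩrep hu hne)
  · obtain ⟨ε, hε, rfl⟩ := unit_zpow (hsg hfin)
    have := (apow_facts hcase hΩa hlenZ hfin ε).2.2
    rcases hε with rfl | rfl <;> simpa using this

end Basic

open scoped Classical in
noncomputable def gWord {I Γ : Type*} [Group Γ] (fin : I → Prop) (x : ℕ → Γ) (idx : ℕ → I) :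
    ℕ → List (I × Γ)
  | 0 => []
  | n+1 =>
    if 0 < n ∧ idx (n-1) = idx n ∧ ¬ fin (idx n)
    then (gWord fin x idx n).dropLast ++
      [(idx n, ((gWord fin x idx n).getLast?.getD (idx n, 1)).2 * x n)]
    else gWord fin x idx n ++ [(idx n, x n)]

section GWS

variable {I Γ : Type*} [Group Γ]

theorem gWord_succ_cont {fin : I → Prop} {x : ℕ → Γ} {idx : ℕ → I} {n : ℕ}
    (h : 0 < n ∧ idx (n-1) = idx n ∧ ¬ fin (idx n)) :
    gWord fin x idx (n+1) = (gWord fin x idx n).dropLast ++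
      [(idx n, ((gWord fin x idx n).getLast?.getD (idx n, 1)).2 * x n)] := by
  simp only [gWord]
  rw [if_pos h]

theorem gWord_succ_app {fin : I → Prop} {x : ℕ → Γ} {idx : ℕ → I} {n : ℕ}
    (h : ¬ (0 < n ∧ idx (n-1) = idx n ∧ ¬ fin (idx n))) :
    gWord fin x idx (n+1) = gWord fin x idx n ++ [(idx n, x n)] := by
  simp only [gWord]
  rw [if_neg h]

end GWS

section GW

variable {I Γ : Type*} [Group Γ] {G : I → Subgroup Γ} {H : Subgroup Γ} {a : I → Γ}
  {Ω : I → Set Γ} {len : Γ → ℕ}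

theorem gw_spec
    (hcase : ∀ i, (G i : Set Γ).Finite ∨
      (a i ∈ G i ∧ (∀ h ∈ H, a i * h = h * a i) ∧
       (∀ g ∈ G i, ∃ n : ℤ, ∃ h ∈ H, g = a i ^ n * h) ∧
       (∀ n : ℤ, a i ^ n ∈ H → n = 0)))
    (hΩG : ∀ i, Ω i ⊆ (G i : Set Γ)) (hΩ1 : ∀ i, (1 : Γ) ∈ Ω i)
    (hΩrep : ∀ i, ∀ g ∈ G i, ∃! x, x ∈ Ω i ∧ x⁻¹ * g ∈ H)
    (hΩa : ∀ i, ¬ (G i : Set Γ).Finite → Ω i = {g : Γ | ∃ n : ℤ, g = a i ^ n})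
    (hlen1 : ∀ i, (G i : Set Γ).Finite → ∀ g ∈ G i, g ∉ H → len g = 1)
    (hlenZ : ∀ i, ¬ (G i : Set Γ).Finite → ∀ n : ℤ, ∀ h ∈ H, len (a i ^ n * h) = n.natAbs)
    (x : ℕ → Γ) (idx : ℕ → I)
    (hx : BSeq Ω (fun i => (G i : Set Γ).Finite) a x idx) :
    ∀ n : ℕ,
    IsRWord Ω (gWord (fun i => (G i : Set Γ).Finite) x idx n) ∧
    wprod (gWord (fun i => (G i : Set Γ).Finite) x idx n) = phiSeq x n ∧
    ((gWord (fun i => (G i : Set Γ).Finite) x idx n).map (fun p => len p.2)).sum = n ∧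
    (n ≠ 0 → ∃ w' g, gWord (fun i => (G i : Set Γ).Finite) x idx n = w' ++ [(idx (n-1), g)] ∧
      ((G (idx (n-1)) : Set Γ).Finite → g = x (n-1)) ∧
      (¬ (G (idx (n-1)) : Set Γ).Finite → ∃ m : ℕ, 1 ≤ m ∧ g = x (n-1) ^ m ∧ len g = m)) := by
  intro n
  induction n with
  | zero => refine ⟨⟨by simp [gWord, List.Chain'], by simp [gWord]⟩, by simp [gWord, wprod, phiSeq], by simp [gWord], fun h => absurd rfl h⟩
  | succ n IH =>
    obtain ⟨hRW, hprod, hsum, hlast⟩ := IH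
    by_cases hc : 0 < n ∧ idx (n - 1) = idx n ∧ ¬ (G (idx n) : Set Γ).Finite
    · -- continuation case
      obtain ⟨hn, hii, hfin⟩ := hc
      obtain ⟨m, rfl⟩ : ∃ m, n = m + 1 := ⟨n - 1, by omega⟩
      simp only [Nat.add_sub_cancel] at hii
      obtain ⟨w', g, hW, hgfin, hginf⟩ := hlast (by omega)
      simp only [Nat.add_sub_cancel] at hW hgfin hginf
      have hfinm : ¬ (G (idx m) : Set Γ).Finite := by rw [hii]; exact hfin
      obtain ⟨m', hm', hg, hlg⟩ := hginf hfinm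
      have hxm : x m = x (m + 1) := (hx m).2.2.2.2 hfinm hii
      obtain ⟨ε, hε, hεeq⟩ := unit_zpow ((hx (m+1)).2.2.1 hfin)
      have hpow : x (m+1) ^ (m' + 1) = a (idx (m+1)) ^ (ε * (m' + 1 : ℕ)) := by
        rw [hεeq, ← zpow_natCast (a (idx (m+1)) ^ ε), ← zpow_mul]
      have hεne : ε * (m' + 1 : ℕ) ≠ 0 := by
        rcases hε with rfl | rfl <;> simp <;> omega
      have hfacts := apow_facts (len := len) hcase hΩa hlenZ hfin (ε * (m' + 1 : ℕ))
      have hnatabs : (ε * (m' + 1 : ℕ)).natAbs = m' + 1 := by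
        rcases hε with rfl | rfl <;> simp <;> omega
      have hmem : x (m+1) ^ (m' + 1) ∈ Ω (idx (m+1)) := by rw [hpow]; exact hfacts.1
      have hne1 : x (m+1) ^ (m' + 1) ≠ 1 := by rw [hpow]; exact hfacts.2.1 hεne
      have hlen' : len (x (m+1) ^ (m' + 1)) = m' + 1 := by rw [hpow, hfacts.2.2, hnatabs]
      have hgu : g * x (m + 1) = x (m + 1) ^ (m' + 1) := by
        rw [hg, hxm, pow_succ]
      rw [show gWord (fun i => (G i : Set Γ).Finite) x idx (m + 1 + 1)
          = (gWord (fun i => (G i : Set Γ).Finite) x idx (m+1)).dropLast ++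
            [(idx (m+1), (((gWord (fun i => (G i : Set Γ).Finite) x idx (m+1)).getLast?.getD
              (idx (m+1), 1)).2 * x (m+1)))] from by
        simp only [gWord]
        rw [if_pos ⟨by omega, by simpa using hii, hfin⟩]]
      rw [hW]
      simp only [List.dropLast_concat, List.getLast?_concat, Option.getD_some, hgu]
      have hmapfst : (w' ++ [(idx (m+1), x (m+1) ^ (m' + 1))]).map Prod.fst
          = (w' ++ [(idx m, g)]).map Prod.fst := by
        simp [hii]
      refine ⟨⟨?_, ?_⟩, ?_, ?_, ?_⟩
      · rw [hmapfst, ← hW]; exact hRW.1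
      · intro p hp
        rcases List.mem_append.1 hp with hp | hp
        · exact hRW.2 p (by rw [hW]; exact List.mem_append.2 (Or.inl hp))
        · simp only [List.mem_singleton] at hp
          subst hp
          exact ⟨hmem, hne1⟩
      · show wprod (w' ++ [(idx (m+1), x (m+1) ^ (m' + 1))]) = phiSeq x (m + 1 + 1)
        rw [wprod_concat]
        show wprod w' * x (m+1) ^ (m' + 1) = _
        have h2 : wprod w' * g = phiSeq x (m + 1) := by
          have h3 := hprod
          rw [hW, wprod_concat] at h3
          simpa using h3
        rw [phiSeq_succ, ← h2, ← hgu, mul_assoc]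
      · rw [List.map_append, List.sum_append]
        have : ((w' ++ [(idx m, g)]).map (fun p => len p.2)).sum = m + 1 := by rw [← hW]; exact hsum
        rw [List.map_append, List.sum_append] at this
        simp only [List.map_cons, List.map_nil, List.sum_cons, List.sum_nil] at this ⊢
        rw [hlen'] at *
        omega
      · intro _
        refine ⟨w', x (m+1) ^ (m' + 1), by simp, fun h => absurd h hfin, fun _ => ⟨m' + 1, by omega, rfl, hlen'⟩⟩
    · -- append case
      rw [show gWord (fun i => (G i : Set Γ).Finite) x idx (n + 1)
          = gWord (fun i => (G i : Set Γ).Finite) x idx n ++ [(idx n, x n)] from by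
        simp only [gWord]; rw [if_neg hc]]
      have hxlen : len (x n) = 1 :=
        unit_len hcase hΩG hΩ1 hΩrep hΩa hlen1 hlenZ (hx n).1 (hx n).2.1 (hx n).2.2.1
      have hchain : ((gWord (fun i => (G i : Set Γ).Finite) x idx n ++ [(idx n, x n)]).map Prod.fst).Chain'
          (· ≠ ·) := by
        rcases Nat.eq_zero_or_pos n with rfl | hn
        · simp [gWord, List.Chain']
        · obtain ⟨w', g, hW, -, -⟩ := hlast (by omega)
          have hne : idx (n-1) ≠ idx n := by
            intro h
            have hfin : (G (idx n) : Set Γ).Finite := by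
              by_contra hf
              exact hc ⟨hn, h, hf⟩
            have : (G (idx (n-1)) : Set Γ).Finite := by rw [h]; exact hfin
            have h6 := (hx (n-1)).2.2.2.1 this
            rw [Nat.sub_add_cancel hn] at h6
            exact h6 h
          rw [List.map_append, List.Chain', List.isChain_append]
          refine ⟨hRW.1, List.isChain_singleton _, ?_⟩
          intro p hp q hq
          have hp' : p = idx (n - 1) := by
            rw [hW] at hp
            simp only [List.map_append, List.map_cons, List.map_nil, List.getLast?_concat,
              Option.mem_def, Option.some.injEq] at hp
            exact hp.symm
          have hq' : q = idx n := by
            simp only [List.map_cons, List.map_nil, List.head?_cons, Option.mem_def,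
              Option.some.injEq] at hq
            exact hq.symm
          rw [hp', hq']
          exact hne
      refine ⟨⟨hchain, ?_⟩, ?_, ?_, ?_⟩
      · intro p hp
        rcases List.mem_append.1 hp with hp | hp
        · exact hRW.2 p hp
        · simp only [List.mem_singleton] at hp; subst hp
          exact ⟨(hx n).1, (hx n).2.1⟩
      · rw [wprod_concat, hprod, phiSeq_succ]
      · rw [List.map_append, List.sum_append, hsum]
        simp [hxlen]
      · intro _
        exact ⟨gWord (fun i => (G i : Set Γ).Finite) x idx n, x n, by simp, fun _ => rfl,
          fun _ => ⟨1, le_refl 1, (pow_one _).symm, by rw [hxlen]⟩⟩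

theorem concat_inj' {α : Type*} {A B : List α} {p q : α} (h : A ++ [p] = B ++ [q]) :
    A = B ∧ p = q := by
  have h1 := congrArg List.dropLast h
  have h2 := congrArg List.getLast? h
  simp only [List.dropLast_concat, List.getLast?_concat, Option.some.injEq] at h1 h2
  exact ⟨h1, h2⟩

theorem unit_pow_facts
    (hcase : ∀ i, (G i : Set Γ).Finite ∨
      (a i ∈ G i ∧ (∀ h ∈ H, a i * h = h * a i) ∧
       (∀ g ∈ G i, ∃ n : ℤ, ∃ h ∈ H, g = a i ^ n * h) ∧
       (∀ n : ℤ, a i ^ n ∈ H → n = 0)))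
    (hΩa : ∀ i, ¬ (G i : Set Γ).Finite → Ω i = {g : Γ | ∃ n : ℤ, g = a i ^ n})
    (hlenZ : ∀ i, ¬ (G i : Set Γ).Finite → ∀ n : ℤ, ∀ h ∈ H, len (a i ^ n * h) = n.natAbs)
    {i : I} {u : Γ} (hfin : ¬ (G i : Set Γ).Finite) (hu : u = a i ∨ u = (a i)⁻¹)
    (m : ℕ) (hm : 1 ≤ m) : u ^ m ∈ Ω i ∧ u ^ m ≠ 1 ∧ len (u ^ m) = m := by
  obtain ⟨ε, hε, rfl⟩ := unit_zpow hu
  have hpow : (a i ^ ε) ^ m = a i ^ (ε * m) := by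
    rw [← zpow_natCast (a i ^ ε), ← zpow_mul]
  have hne : ε * (m : ℤ) ≠ 0 := by rcases hε with rfl | rfl <;> simp <;> omega
  have hf := apow_facts (len := len) hcase hΩa hlenZ hfin (ε * m)
  have hab : (ε * (m : ℤ)).natAbs = m := by rcases hε with rfl | rfl <;> simp
  rw [hpow]
  exact ⟨hf.1, hf.2.1 hne, by rw [hf.2.2, hab]⟩

theorem len_phiSeq
    (hcase : ∀ i, (G i : Set Γ).Finite ∨
      (a i ∈ G i ∧ (∀ h ∈ H, a i * h = h * a i) ∧
       (∀ g ∈ G i, ∃ n : ℤ, ∃ h ∈ H, g = a i ^ n * h) ∧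
       (∀ n : ℤ, a i ^ n ∈ H → n = 0)))
    (hΩG : ∀ i, Ω i ⊆ (G i : Set Γ)) (hΩ1 : ∀ i, (1 : Γ) ∈ Ω i)
    (hΩrep : ∀ i, ∀ g ∈ G i, ∃! x, x ∈ Ω i ∧ x⁻¹ * g ∈ H)
    (hΩa : ∀ i, ¬ (G i : Set Γ).Finite → Ω i = {g : Γ | ∃ n : ℤ, g = a i ^ n})
    (hlen1 : ∀ i, (G i : Set Γ).Finite → ∀ g ∈ G i, g ∉ H → len g = 1)
    (hlenZ : ∀ i, ¬ (G i : Set Γ).Finite → ∀ n : ℤ, ∀ h ∈ H, len (a i ^ n * h) = n.natAbs)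
    (hlenAdd : ∀ w : List (I × Γ), ∀ h ∈ H, IsRWord Ω w →
      len (wprod w * h) = (w.map (fun p => len p.2)).sum)
    (x : ℕ → Γ) (idx : ℕ → I)
    (hx : BSeq Ω (fun i => (G i : Set Γ).Finite) a x idx) (n : ℕ) :
    len (phiSeq x n) = n := by
  obtain ⟨hRW, hprod, hsum, -⟩ := gw_spec hcase hΩG hΩ1 hΩrep hΩa hlen1 hlenZ x idx hx n
  have := hlenAdd _ 1 H.one_mem hRW
  rw [mul_one, hprod, hsum] at this
  exact this

theorem gw_inj
    (hcase : ∀ i, (G i : Set Γ).Finite ∨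
      (a i ∈ G i ∧ (∀ h ∈ H, a i * h = h * a i) ∧
       (∀ g ∈ G i, ∃ n : ℤ, ∃ h ∈ H, g = a i ^ n * h) ∧
       (∀ n : ℤ, a i ^ n ∈ H → n = 0)))
    (hΩG : ∀ i, Ω i ⊆ (G i : Set Γ)) (hΩ1 : ∀ i, (1 : Γ) ∈ Ω i)
    (hΩrep : ∀ i, ∀ g ∈ G i, ∃! x, x ∈ Ω i ∧ x⁻¹ * g ∈ H)
    (hΩa : ∀ i, ¬ (G i : Set Γ).Finite → Ω i = {g : Γ | ∃ n : ℤ, g = a i ^ n})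
    (hlen1 : ∀ i, (G i : Set Γ).Finite → ∀ g ∈ G i, g ∉ H → len g = 1)
    (hlenZ : ∀ i, ¬ (G i : Set Γ).Finite → ∀ n : ℤ, ∀ h ∈ H, len (a i ^ n * h) = n.natAbs)
    (x : ℕ → Γ) (idx : ℕ → I) (y : ℕ → Γ) (idy : ℕ → I)
    (hx : BSeq Ω (fun i => (G i : Set Γ).Finite) a x idx)
    (hy : BSeq Ω (fun i => (G i : Set Γ).Finite) a y idy) :
    ∀ N : ℕ, gWord (fun i => (G i : Set Γ).Finite) x idx N
      = gWord (fun i => (G i : Set Γ).Finite) y idy N →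
    ∀ m, m < N → x m = y m := by
  intro N
  induction N with
  | zero => intro _ m hm; omega
  | succ N ih =>
    intro hEq m hm
    obtain ⟨wx, gx, hWx, hgxf, hgxi⟩ :=
      (gw_spec hcase hΩG hΩ1 hΩrep hΩa hlen1 hlenZ x idx hx (N+1)).2.2.2 (Nat.succ_ne_zero N)
    obtain ⟨wy, gy, hWy, hgyf, hgyi⟩ :=
      (gw_spec hcase hΩG hΩ1 hΩrep hΩa hlen1 hlenZ y idy hy (N+1)).2.2.2 (Nat.succ_ne_zero N)
    simp only [Nat.add_sub_cancel] at hWx hgxf hgxi hWy hgyf hgyi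
    have e : wx ++ [(idx N, gx)] = wy ++ [(idy N, gy)] := by rw [← hWx, ← hWy]; exact hEq
    obtain ⟨hw, hpq⟩ := concat_inj' e
    have hidN : idx N = idy N := congrArg Prod.fst hpq
    have hg : gx = gy := congrArg Prod.snd hpq
    suffices h : x N = y N ∧ gWord (fun i => (G i : Set Γ).Finite) x idx N
        = gWord (fun i => (G i : Set Γ).Finite) y idy N by
      rcases Nat.lt_succ_iff_lt_or_eq.1 hm with hm' | rfl
      · exact ih h.2 m hm'
      · exact h.1
    by_cases hfin : (G (idx N) : Set Γ).Finite
    · -- finite index: both steps are appends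
      have hfin' : (G (idy N) : Set Γ).Finite := hidN ▸ hfin
      have hxN : gx = x N := hgxf hfin
      have hyN : gy = y N := hgyf hfin'
      have hcx : ¬(0 < N ∧ idx (N-1) = idx N ∧ ¬(G (idx N) : Set Γ).Finite) := by tauto
      have hcy : ¬(0 < N ∧ idy (N-1) = idy N ∧ ¬(G (idy N) : Set Γ).Finite) := by tauto
      have hx1 : gWord (fun i => (G i : Set Γ).Finite) x idx (N+1)
          = gWord (fun i => (G i : Set Γ).Finite) x idx N ++ [(idx N, x N)] := by
        simp only [gWord]; rw [if_neg hcx]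
      have hy1 : gWord (fun i => (G i : Set Γ).Finite) y idy (N+1)
          = gWord (fun i => (G i : Set Γ).Finite) y idy N ++ [(idy N, y N)] := by
        simp only [gWord]; rw [if_neg hcy]
      have ex := concat_inj' (hx1.symm.trans hWx)
      have ey := concat_inj' (hy1.symm.trans hWy)
      refine ⟨by rw [← hxN, hg, hyN], ?_⟩
      rw [ex.1, ey.1, hw]
    · -- infinite index
      have hfin' : ¬ (G (idy N) : Set Γ).Finite := hidN ▸ hfin
      obtain ⟨mx, hmx1, hgxpow, hgxlen⟩ := hgxi hfin
      obtain ⟨my, hmy1, hgypow, hgylen⟩ := hgyi hfin'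
      have hmxy : mx = my := by rw [← hgxlen, ← hgylen, hg]
      have hux : x N = a (idx N) ∨ x N = (a (idx N))⁻¹ := (hx N).2.2.1 hfin
      have huy : y N = a (idx N) ∨ y N = (a (idx N))⁻¹ := by
        rw [hidN]; exact (hy N).2.2.1 hfin'
      -- x N = y N
      obtain ⟨εx, hεx, hexx⟩ := unit_zpow hux
      obtain ⟨εy, hεy, heyy⟩ := unit_zpow huy
      have hxyN : x N = y N := by
        have h1 : a (idx N) ^ (εx * mx) = a (idx N) ^ (εy * mx) := by
          rw [zpow_mul, zpow_mul, ← hexx, ← heyy, zpow_natCast, zpow_natCast,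
            ← hgxpow, hmxy, ← hgypow, hg]
        have h2 := apow_inj hcase hfin h1
        have h3 : εx = εy := by
          have : (mx : ℤ) ≠ 0 := by omega
          exact mul_right_cancel₀ this h2
        rw [hexx, heyy, h3]
      -- structure of gWord at level N for x
      have hDx : (2 ≤ mx ∧ gWord (fun i => (G i : Set Γ).Finite) x idx N
            = wx ++ [(idx N, x N ^ (mx - 1))]) ∨
          (mx = 1 ∧ gWord (fun i => (G i : Set Γ).Finite) x idx N = wx) := by
        by_cases hcx : 0 < N ∧ idx (N-1) = idx N ∧ ¬(G (idx N) : Set Γ).Finite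
        · obtain ⟨hN0, hii, -⟩ := hcx
          obtain ⟨wx', gx', hWx', hgxf', hgxi'⟩ :=
            (gw_spec hcase hΩG hΩ1 hΩrep hΩa hlen1 hlenZ x idx hx N).2.2.2 (by omega)
          have hfinN1 : ¬ (G (idx (N-1)) : Set Γ).Finite := by rw [hii]; exact hfin
          obtain ⟨mx', hmx1', hgx'pow, hgx'len⟩ := hgxi' hfinN1
          have hxm : x (N-1) = x N := by
            have := (hx (N-1)).2.2.2.2 hfinN1
            rw [Nat.sub_add_cancel hN0] at this
            exact this hii
          have hx1 : gWord (fun i => (G i : Set Γ).Finite) x idx (N+1)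
              = wx' ++ [(idx N, gx' * x N)] := by
            rw [gWord_succ_cont ⟨hN0, hii, hfin⟩, hWx']
            simp
          have ex := concat_inj' (hx1.symm.trans hWx)
          have h5 := ex.2
          rw [Prod.mk.injEq] at h5
          have hgx2 : gx = x N ^ (mx' + 1) := by
            rw [← h5.2, hgx'pow, hxm, pow_succ]
          have hlen2 : len (x N ^ (mx' + 1)) = mx' + 1 :=
            (unit_pow_facts hcase hΩa hlenZ hfin hux (mx' + 1) (by omega)).2.2
          have hmx2 : mx = mx' + 1 := by rw [← hgxlen, hgx2, hlen2]
          left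
          refine ⟨by omega, ?_⟩
          rw [hWx', ex.1, hmx2]
          simp only [Nat.add_sub_cancel]
          rw [hgx'pow, hxm, hii]
        · have hx1 : gWord (fun i => (G i : Set Γ).Finite) x idx (N+1)
              = gWord (fun i => (G i : Set Γ).Finite) x idx N ++ [(idx N, x N)] := by
            simp only [gWord]; rw [if_neg hcx]
          have ex := concat_inj' (hx1.symm.trans hWx)
          have hgx2 : gx = x N := (congrArg Prod.snd ex.2).symm
          have hlen2 : len (x N) = 1 :=
            unit_len hcase hΩG hΩ1 hΩrep hΩa hlen1 hlenZ (hx N).1 (hx N).2.1 (hx N).2.2.1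
          right
          exact ⟨by rw [← hgxlen, hgx2, hlen2], ex.1⟩
      have hDy : (2 ≤ my ∧ gWord (fun i => (G i : Set Γ).Finite) y idy N
            = wy ++ [(idy N, y N ^ (my - 1))]) ∨
          (my = 1 ∧ gWord (fun i => (G i : Set Γ).Finite) y idy N = wy) := by
        by_cases hcy : 0 < N ∧ idy (N-1) = idy N ∧ ¬(G (idy N) : Set Γ).Finite
        · obtain ⟨hN0, hii, -⟩ := hcy
          obtain ⟨wy', gy', hWy', hgyf', hgyi'⟩ :=
            (gw_spec hcase hΩG hΩ1 hΩrep hΩa hlen1 hlenZ y idy hy N).2.2.2 (by omega)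
          have hfinN1 : ¬ (G (idy (N-1)) : Set Γ).Finite := by rw [hii]; exact hfin'
          obtain ⟨my', hmy1', hgy'pow, hgy'len⟩ := hgyi' hfinN1
          have hym : y (N-1) = y N := by
            have := (hy (N-1)).2.2.2.2 hfinN1
            rw [Nat.sub_add_cancel hN0] at this
            exact this hii
          have hy1 : gWord (fun i => (G i : Set Γ).Finite) y idy (N+1)
              = wy' ++ [(idy N, gy' * y N)] := by
            rw [gWord_succ_cont ⟨hN0, hii, hfin'⟩, hWy']
            simp
          have ey := concat_inj' (hy1.symm.trans hWy)
          have h5 := ey.2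
          rw [Prod.mk.injEq] at h5
          have hgy2 : gy = y N ^ (my' + 1) := by
            rw [← h5.2, hgy'pow, hym, pow_succ]
          have hlen2 : len (y N ^ (my' + 1)) = my' + 1 := by
            refine (unit_pow_facts hcase hΩa hlenZ hfin' ?_ (my' + 1) (by omega)).2.2
            exact (hy N).2.2.1 hfin'
          have hmy2 : my = my' + 1 := by rw [← hgylen, hgy2, hlen2]
          left
          refine ⟨by omega, ?_⟩
          rw [hWy', ey.1, hmy2]
          simp only [Nat.add_sub_cancel]
          rw [hgy'pow, hym, hii]
        · have hy1 : gWord (fun i => (G i : Set Γ).Finite) y idy (N+1)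
              = gWord (fun i => (G i : Set Γ).Finite) y idy N ++ [(idy N, y N)] := by
            simp only [gWord]; rw [if_neg hcy]
          have ey := concat_inj' (hy1.symm.trans hWy)
          have hgy2 : gy = y N := (congrArg Prod.snd ey.2).symm
          have hlen2 : len (y N) = 1 := by
            refine unit_len hcase hΩG hΩ1 hΩrep hΩa hlen1 hlenZ (hy N).1 (hy N).2.1 (hy N).2.2.1
          right
          exact ⟨by rw [← hgylen, hgy2, hlen2], ey.1⟩
      refine ⟨hxyN, ?_⟩
      rcases hDx with ⟨hmx2, hDx⟩ | ⟨hmx2, hDx⟩ <;> rcases hDy with ⟨hmy2, hDy⟩ | ⟨hmy2, hDy⟩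
      · rw [hDx, hDy, hw, hxyN, hmxy, hidN]
      · omega
      · omega
      · rw [hDx, hDy, hw]

theorem part1
    (hcase : ∀ i, (G i : Set Γ).Finite ∨
      (a i ∈ G i ∧ (∀ h ∈ H, a i * h = h * a i) ∧
       (∀ g ∈ G i, ∃ n : ℤ, ∃ h ∈ H, g = a i ^ n * h) ∧
       (∀ n : ℤ, a i ^ n ∈ H → n = 0)))
    (hΩG : ∀ i, Ω i ⊆ (G i : Set Γ)) (hΩ1 : ∀ i, (1 : Γ) ∈ Ω i)
    (hΩrep : ∀ i, ∀ g ∈ G i, ∃! x, x ∈ Ω i ∧ x⁻¹ * g ∈ H)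
    (hΩa : ∀ i, ¬ (G i : Set Γ).Finite → Ω i = {g : Γ | ∃ n : ℤ, g = a i ^ n})
    (hlen1 : ∀ i, (G i : Set Γ).Finite → ∀ g ∈ G i, g ∉ H → len g = 1)
    (hlenZ : ∀ i, ¬ (G i : Set Γ).Finite → ∀ n : ℤ, ∀ h ∈ H, len (a i ^ n * h) = n.natAbs)
    (hlenAdd : ∀ w : List (I × Γ), ∀ h ∈ H, IsRWord Ω w →
      len (wprod w * h) = (w.map (fun p => len p.2)).sum)
    (x : ℕ → Γ) (idx : ℕ → I)
    (hx : BSeq Ω (fun i => (G i : Set Γ).Finite) a x idx) :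
    LambdaSeq len (phiSeq x) := by
  refine ⟨0, fun n _ => ?_⟩
  have h1 := len_phiSeq hcase hΩG hΩ1 hΩrep hΩa hlen1 hlenZ hlenAdd x idx hx n
  have h2 := len_phiSeq hcase hΩG hΩ1 hΩrep hΩa hlen1 hlenZ hlenAdd x idx hx (n+1)
  refine ⟨by rw [h1, h2], ?_⟩
  have h3 : (phiSeq x n)⁻¹ * phiSeq x (n+1) = x n := by rw [phiSeq_succ]; group
  rw [h3]
  exact unit_len hcase hΩG hΩ1 hΩrep hΩa hlen1 hlenZ (hx n).1 (hx n).2.1 (hx n).2.2.1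

theorem part2
    (hcase : ∀ i, (G i : Set Γ).Finite ∨
      (a i ∈ G i ∧ (∀ h ∈ H, a i * h = h * a i) ∧
       (∀ g ∈ G i, ∃ n : ℤ, ∃ h ∈ H, g = a i ^ n * h) ∧
       (∀ n : ℤ, a i ^ n ∈ H → n = 0)))
    (hΩG : ∀ i, Ω i ⊆ (G i : Set Γ)) (hΩ1 : ∀ i, (1 : Γ) ∈ Ω i)
    (hΩrep : ∀ i, ∀ g ∈ G i, ∃! x, x ∈ Ω i ∧ x⁻¹ * g ∈ H)
    (hΩa : ∀ i, ¬ (G i : Set Γ).Finite → Ω i = {g : Γ | ∃ n : ℤ, g = a i ^ n})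
    (hNF : ∀ γ : Γ, ∃! wh : List (I × Γ) × Γ,
      IsRWord Ω wh.1 ∧ wh.2 ∈ H ∧ γ = wprod wh.1 * wh.2)
    (hlen1 : ∀ i, (G i : Set Γ).Finite → ∀ g ∈ G i, g ∉ H → len g = 1)
    (hlenZ : ∀ i, ¬ (G i : Set Γ).Finite → ∀ n : ℤ, ∀ h ∈ H, len (a i ^ n * h) = n.natAbs)
    (hlenAdd : ∀ w : List (I × Γ), ∀ h ∈ H, IsRWord Ω w →
      len (wprod w * h) = (w.map (fun p => len p.2)).sum)
    (x : ℕ → Γ) (idx : ℕ → I) (y : ℕ → Γ) (idy : ℕ → I)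
    (hx : BSeq Ω (fun i => (G i : Set Γ).Finite) a x idx)
    (hy : BSeq Ω (fun i => (G i : Set Γ).Finite) a y idy)
    (he : LambdaEquiv H (phiSeq x) (phiSeq y)) : x = y := by
  obtain ⟨k, N0, hk⟩ := he
  have lenx := len_phiSeq hcase hΩG hΩ1 hΩrep hΩa hlen1 hlenZ hlenAdd x idx hx
  have leny := len_phiSeq hcase hΩG hΩ1 hΩrep hΩa hlen1 hlenZ hlenAdd y idy hy
  have hk0 : k = 0 := by
    obtain ⟨hge, hmem⟩ := hk N0 le_rfl
    obtain ⟨hRWx, hprodx, -, -⟩ := gw_spec hcase hΩG hΩ1 hΩrep hΩa hlen1 hlenZ x idx hx N0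
    have he1 : phiSeq y (((N0:ℤ)+k).toNat)
        = wprod (gWord (fun i => (G i : Set Γ).Finite) x idx N0)
          * ((phiSeq x N0)⁻¹ * phiSeq y (((N0:ℤ)+k).toNat)) := by
      rw [hprodx]; group
    have hsum0 : len (wprod (gWord (fun i => (G i : Set Γ).Finite) x idx N0) * 1)
        = ((gWord (fun i => (G i : Set Γ).Finite) x idx N0).map (fun p => len p.2)).sum :=
      hlenAdd _ 1 H.one_mem hRWx
    have hl : len (phiSeq y (((N0:ℤ)+k).toNat)) = N0 := by
      rw [he1, hlenAdd _ _ hmem hRWx, ← hsum0, mul_one, hprodx, lenx]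
    rw [leny] at hl
    omega
  have hWeq : ∀ n, N0 ≤ n → gWord (fun i => (G i : Set Γ).Finite) x idx n
      = gWord (fun i => (G i : Set Γ).Finite) y idy n := by
    intro n hn
    have hmem := (hk n hn).2
    rw [hk0] at hmem
    have hnn : ((n:ℤ) + 0).toNat = n := by omega
    rw [hnn] at hmem
    obtain ⟨hRWx, hprodx, -, -⟩ := gw_spec hcase hΩG hΩ1 hΩrep hΩa hlen1 hlenZ x idx hx n
    obtain ⟨hRWy, hprody, -, -⟩ := gw_spec hcase hΩG hΩ1 hΩrep hΩa hlen1 hlenZ y idy hy n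
    obtain ⟨wh, -, huniq⟩ := hNF (phiSeq y n)
    have e1 : (gWord (fun i => (G i : Set Γ).Finite) y idy n, (1:Γ)) = wh :=
      huniq _ ⟨hRWy, H.one_mem, by rw [mul_one, hprody]⟩
    have e2 : (gWord (fun i => (G i : Set Γ).Finite) x idx n,
        (phiSeq x n)⁻¹ * phiSeq y n) = wh :=
      huniq _ ⟨hRWx, hmem, by rw [hprodx]; group⟩
    exact congrArg Prod.fst (e2.trans e1.symm)
  funext m
  exact gw_inj hcase hΩG hΩ1 hΩrep hΩa hlen1 hlenZ x idx y idy hx hy (max N0 (m+1))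
    (hWeq _ (le_max_left _ _)) m (by omega)

end GW

abbrev RelU2 {I Γ : Type*} [Group Γ] (fin : I → Prop) (Ω : I → Set Γ) (a : I → Γ)
    (w w' : List (I × Γ)) (ju : I × Γ) : Prop :=
  (w' = w ++ [ju] ∧ ju.2 ∈ Ω ju.1 ∧ ju.2 ≠ 1 ∧
    (¬ fin ju.1 → ju.2 = a ju.1 ∨ ju.2 = (a ju.1)⁻¹))
  ∨ (∃ (pre : List (I × Γ)) (k ε : ℤ), ¬ fin ju.1 ∧ (ε = 1 ∨ ε = -1) ∧ 0 < k * ε ∧ ju.2 = a ju.1 ^ ε ∧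
      w = pre ++ [(ju.1, a ju.1 ^ k)] ∧ w' = pre ++ [(ju.1, a ju.1 ^ (k + ε))])

theorem rword_adj {I Γ : Type*} [Group Γ] {Ω : I → Set Γ} {l : List (I × Γ)} {p q : I × Γ}
    (h : IsRWord Ω (l ++ [p, q])) : p.1 ≠ q.1 := by
  have h1 := h.1
  rw [show l ++ [p, q] = (l ++ [p]) ++ [q] by simp] at h1
  rw [List.map_append, List.Chain', List.isChain_append] at h1
  have h2 := h1.2.2 p.1 (by simp) q.1 (by simp)
  exact h2

section Step

variable {I Γ : Type*} [Group Γ] {G : I → Subgroup Γ} {H : Subgroup Γ} {a : I → Γ}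
  {Ω : I → Set Γ} {len : Γ → ℕ}

theorem letter_len_pos
    (hcase : ∀ i, (G i : Set Γ).Finite ∨
      (a i ∈ G i ∧ (∀ h ∈ H, a i * h = h * a i) ∧
       (∀ g ∈ G i, ∃ n : ℤ, ∃ h ∈ H, g = a i ^ n * h) ∧
       (∀ n : ℤ, a i ^ n ∈ H → n = 0)))
    (hΩG : ∀ i, Ω i ⊆ (G i : Set Γ)) (hΩ1 : ∀ i, (1 : Γ) ∈ Ω i)
    (hΩrep : ∀ i, ∀ g ∈ G i, ∃! x, x ∈ Ω i ∧ x⁻¹ * g ∈ H)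
    (hΩa : ∀ i, ¬ (G i : Set Γ).Finite → Ω i = {g : Γ | ∃ n : ℤ, g = a i ^ n})
    (hlen1 : ∀ i, (G i : Set Γ).Finite → ∀ g ∈ G i, g ∉ H → len g = 1)
    (hlenZ : ∀ i, ¬ (G i : Set Γ).Finite → ∀ n : ℤ, ∀ h ∈ H, len (a i ^ n * h) = n.natAbs)
    {i : I} {g : Γ} (hg : g ∈ Ω i) (h1 : g ≠ 1) : 1 ≤ len g := by
  by_cases hfin : (G i : Set Γ).Finite
  · rw [hlen1 i hfin g (hΩG i hg) (mem_Omega_not_in_H hΩG hΩ1 hΩrep hg h1)]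
  · have hmem := hg
    rw [hΩa i hfin] at hmem
    simp only [Set.mem_setOf_eq] at hmem
    obtain ⟨k, rfl⟩ := hmem
    have hk : k ≠ 0 := fun h => h1 (by simp [h])
    have := (apow_facts hcase hΩa hlenZ hfin k).2.2
    omega

theorem len_one_letter
    (hcase : ∀ i, (G i : Set Γ).Finite ∨
      (a i ∈ G i ∧ (∀ h ∈ H, a i * h = h * a i) ∧
       (∀ g ∈ G i, ∃ n : ℤ, ∃ h ∈ H, g = a i ^ n * h) ∧
       (∀ n : ℤ, a i ^ n ∈ H → n = 0)))
    (hΩG : ∀ i, Ω i ⊆ (G i : Set Γ)) (hΩ1 : ∀ i, (1 : Γ) ∈ Ω i)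
    (hΩrep : ∀ i, ∀ g ∈ G i, ∃! x, x ∈ Ω i ∧ x⁻¹ * g ∈ H)
    (hΩa : ∀ i, ¬ (G i : Set Γ).Finite → Ω i = {g : Γ | ∃ n : ℤ, g = a i ^ n})
    (hNF : ∀ γ : Γ, ∃! wh : List (I × Γ) × Γ,
      IsRWord Ω wh.1 ∧ wh.2 ∈ H ∧ γ = wprod wh.1 * wh.2)
    (hlen1 : ∀ i, (G i : Set Γ).Finite → ∀ g ∈ G i, g ∉ H → len g = 1)
    (hlenZ : ∀ i, ¬ (G i : Set Γ).Finite → ∀ n : ℤ, ∀ h ∈ H, len (a i ^ n * h) = n.natAbs)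
    (hlenAdd : ∀ w : List (I × Γ), ∀ h ∈ H, IsRWord Ω w →
      len (wprod w * h) = (w.map (fun p => len p.2)).sum)
    {s : Γ} (hs : len s = 1) :
    ∃ j g h₁, h₁ ∈ H ∧ g ∈ Ω j ∧ g ≠ 1 ∧ len g = 1 ∧ s = g * h₁ ∧
      (¬ (G j : Set Γ).Finite → g = a j ∨ g = (a j)⁻¹) := by
  obtain ⟨⟨w, h⟩, ⟨hRW, hh, hse⟩, -⟩ := hNF s
  have hsum : (w.map (fun p => len p.2)).sum = 1 := by
    rw [← hlenAdd w h hh hRW, ← hse, hs]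
  have hpos : ∀ p ∈ w, 1 ≤ len p.2 := fun p hp =>
    letter_len_pos hcase hΩG hΩ1 hΩrep hΩa hlen1 hlenZ (hRW.2 p hp).1 (hRW.2 p hp).2
  rcases w with _ | ⟨p, t⟩
  · simp at hsum
  rcases t with _ | ⟨q, t'⟩
  · refine ⟨p.1, p.2, h, hh, (hRW.2 p (by simp)).1, (hRW.2 p (by simp)).2, ?_, ?_, ?_⟩
    · simpa using hsum
    · rw [hse]; simp [wprod]
    · intro hfin
      have hmem := (hRW.2 p (by simp)).1
      rw [hΩa p.1 hfin] at hmem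
      simp only [Set.mem_setOf_eq] at hmem
      obtain ⟨k, hk⟩ := hmem
      have hl := (apow_facts hcase hΩa hlenZ hfin k).2.2
      rw [← hk] at hl
      have hlp : len p.2 = 1 := by simpa using hsum
      have hk1 : k = 1 ∨ k = -1 := by omega
      rcases hk1 with rfl | rfl
      · left; rw [hk, zpow_one]
      · right; rw [hk]; simp
  · exfalso
    have h1 := hpos p (by simp)
    have h2 := hpos q (by simp)
    simp only [List.map_cons, List.sum_cons] at hsum
    omega

theorem step_lemma
    (hHG : ∀ i, H ≤ G i)
    (hcase : ∀ i, (G i : Set Γ).Finite ∨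
      (a i ∈ G i ∧ (∀ h ∈ H, a i * h = h * a i) ∧
       (∀ g ∈ G i, ∃ n : ℤ, ∃ h ∈ H, g = a i ^ n * h) ∧
       (∀ n : ℤ, a i ^ n ∈ H → n = 0)))
    (hΩG : ∀ i, Ω i ⊆ (G i : Set Γ)) (hΩ1 : ∀ i, (1 : Γ) ∈ Ω i)
    (hΩrep : ∀ i, ∀ g ∈ G i, ∃! x, x ∈ Ω i ∧ x⁻¹ * g ∈ H)
    (hΩa : ∀ i, ¬ (G i : Set Γ).Finite → Ω i = {g : Γ | ∃ n : ℤ, g = a i ^ n})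
    (hNF : ∀ γ : Γ, ∃! wh : List (I × Γ) × Γ,
      IsRWord Ω wh.1 ∧ wh.2 ∈ H ∧ γ = wprod wh.1 * wh.2)
    (hlen1 : ∀ i, (G i : Set Γ).Finite → ∀ g ∈ G i, g ∉ H → len g = 1)
    (hlenZ : ∀ i, ¬ (G i : Set Γ).Finite → ∀ n : ℤ, ∀ h ∈ H, len (a i ^ n * h) = n.natAbs)
    (hlenAdd : ∀ w : List (I × Γ), ∀ h ∈ H, IsRWord Ω w →
      len (wprod w * h) = (w.map (fun p => len p.2)).sum)
    {γ γ' : Γ} {w : List (I × Γ)} {h : Γ}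
    (hRW : IsRWord Ω w) (hh : h ∈ H) (hγ : γ = wprod w * h)
    (hstep1 : len (γ⁻¹ * γ') = 1) (hstep2 : len γ' = len γ + 1) :
    ∃ q' : List (I × Γ) × Γ, (IsRWord Ω q'.1 ∧ q'.2 ∈ H ∧ γ' = wprod q'.1 * q'.2) ∧
      ∃ ju, RelU2 (fun i => (G i : Set Γ).Finite) Ω a w q'.1 ju := by
  obtain ⟨j, g, h₁, hh₁, hgΩ, hg1, hlg, hse, hsinf⟩ :=
    len_one_letter hcase hΩG hΩ1 hΩrep hΩa hNF hlen1 hlenZ hlenAdd hstep1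
  have hγ'2 : γ' = wprod w * (h * (g * h₁)) := by
    have h4 : γ' = γ * (γ⁻¹ * γ') := by group
    rw [h4, hse, hγ]; group
  have hlenγ : len γ = (w.map (fun p => len p.2)).sum := by
    rw [hγ]; exact hlenAdd w h hh hRW
  by_cases hlastj : ∃ pre g₀, w = pre ++ [(j, g₀)]
  · -- merge with last letter
    obtain ⟨pre, g₀, rfl⟩ := hlastj
    have hg₀ := hRW.2 (j, g₀) (by simp)
    have hRWpre : IsRWord Ω pre := by
      constructor
      · have h5 := hRW.1
        rw [List.map_append, List.Chain', List.isChain_append] at h5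
        exact h5.1
      · exact fun p hp => hRW.2 p (List.mem_append.2 (Or.inl hp))
    have hsum2 : ((pre ++ [(j,g₀)]).map (fun p => len p.2)).sum
        = (pre.map (fun p => len p.2)).sum + len g₀ := by simp
    by_cases hfin : (G j : Set Γ).Finite
    · exfalso
      have hq : g₀ * (h * (g * h₁)) ∈ G j :=
        mul_mem (hΩG j hg₀.1) (mul_mem (hHG j hh) (mul_mem (hΩG j hgΩ) (hHG j hh₁)))
      obtain ⟨r, ⟨hrΩ, hrH⟩, -⟩ := hΩrep j _ hq
      have hγ'3 : γ' = wprod pre * (g₀ * (h * (g * h₁))) := by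
        rw [hγ'2, wprod_concat]; group
      have hlg₀ : len g₀ = 1 := hlen1 j hfin g₀ (hΩG j hg₀.1)
        (mem_Omega_not_in_H hΩG hΩ1 hΩrep hg₀.1 hg₀.2)
      by_cases hr1 : r = 1
      · subst hr1
        rw [inv_one, one_mul] at hrH
        have h7 : len γ' = (pre.map (fun p => len p.2)).sum := by
          rw [hγ'3]; exact hlenAdd pre _ hrH hRWpre
        rw [hsum2] at hlenγ
        omega
      · have hRW'' : IsRWord Ω (pre ++ [(j, r)]) := by
          constructor
          · have h6 : (pre ++ [(j, r)]).map Prod.fst = (pre ++ [(j, g₀)]).map Prod.fst := by simp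
            rw [h6]; exact hRW.1
          · intro p hp
            rcases List.mem_append.1 hp with hp | hp
            · exact hRW.2 p (List.mem_append.2 (Or.inl hp))
            · simp only [List.mem_singleton] at hp; subst hp; exact ⟨hrΩ, hr1⟩
        have hγ'4 : γ' = wprod (pre ++ [(j, r)]) * (r⁻¹ * (g₀ * (h * (g * h₁)))) := by
          rw [hγ'3, wprod_concat]; group
        have hlr : len r = 1 := hlen1 j hfin r (hΩG j hrΩ)
          (mem_Omega_not_in_H hΩG hΩ1 hΩrep hrΩ hr1)
        have h7 : len γ' = (pre.map (fun p => len p.2)).sum + 1 := by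
          rw [hγ'4, hlenAdd _ _ hrH hRW'']
          simp [hlr]
        rw [hsum2] at hlenγ
        omega
    · -- infinite merge
      have hmem := hg₀.1
      rw [hΩa j hfin] at hmem
      simp only [Set.mem_setOf_eq] at hmem
      obtain ⟨k, rfl⟩ := hmem
      have hk0 : k ≠ 0 := by rintro rfl; exact hg₀.2 (by simp)
      obtain ⟨ε, hε, rfl⟩ := unit_zpow (hsinf hfin)
      have hcomm : Commute (a j) h := by
        rcases hcase j with hf | hc
        · exact absurd hf hfin
        · exact hc.2.1 h hh
      have hmove : h * (a j ^ ε * h₁) = a j ^ ε * (h * h₁) := by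
        rw [← mul_assoc, ((hcomm.zpow_left ε).symm.eq : h * a j ^ ε = a j ^ ε * h), mul_assoc]
      have hγ'3 : γ' = wprod pre * (a j ^ (k + ε) * (h * h₁)) :=
        calc γ' = wprod (pre ++ [(j, a j ^ k)]) * (h * (a j ^ ε * h₁)) := hγ'2
        _ = (wprod pre * a j ^ k) * (a j ^ ε * (h * h₁)) := by rw [wprod_concat, hmove]
        _ = wprod pre * (a j ^ (k + ε) * (h * h₁)) := by rw [zpow_add]; group
      have hlk := (apow_facts (len := len) hcase hΩa hlenZ hfin k).2.2
      have hlenγ2 : len γ = (pre.map (fun p => len p.2)).sum + k.natAbs := by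
        rw [hlenγ, hsum2, hlk]
      by_cases hkε : k + ε = 0
      · exfalso
        rw [hkε, zpow_zero, one_mul] at hγ'3
        have h7 : len γ' = (pre.map (fun p => len p.2)).sum := by
          rw [hγ'3]; exact hlenAdd pre _ (mul_mem hh hh₁) hRWpre
        omega
      · have happ := apow_facts (len := len) hcase hΩa hlenZ hfin (k + ε)
        have hRW' : IsRWord Ω (pre ++ [(j, a j ^ (k + ε))]) := by
          constructor
          · have h6 : (pre ++ [(j, a j ^ (k + ε))]).map Prod.fst
                = (pre ++ [(j, a j ^ k)]).map Prod.fst := by simp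
            rw [h6]; exact hRW.1
          · intro p hp
            rcases List.mem_append.1 hp with hp | hp
            · exact hRW.2 p (List.mem_append.2 (Or.inl hp))
            · simp only [List.mem_singleton] at hp; subst hp
              exact ⟨happ.1, happ.2.1 hkε⟩
        have hγ'4 : γ' = wprod (pre ++ [(j, a j ^ (k + ε))]) * (h * h₁) := by
          rw [hγ'3, wprod_concat]
          exact (mul_assoc _ _ _).symm
        have h7 : len γ' = (pre.map (fun p => len p.2)).sum + (k + ε).natAbs := by
          rw [hγ'4, hlenAdd _ _ (mul_mem hh hh₁) hRW']
          simp [happ.2.2]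
        have hsign : 0 < k * ε := by rcases hε with rfl | rfl <;> omega
        exact ⟨(pre ++ [(j, a j ^ (k + ε))], h * h₁), ⟨hRW', mul_mem hh hh₁, hγ'4⟩,
          (j, a j ^ ε), Or.inr ⟨pre, k, ε, hfin, hε, hsign, rfl, rfl, rfl⟩⟩
  · -- append case
    have hq : h * (g * h₁) ∈ G j := mul_mem (hHG j hh) (mul_mem (hΩG j hgΩ) (hHG j hh₁))
    obtain ⟨r, ⟨hrΩ, hrH⟩, -⟩ := hΩrep j _ hq
    by_cases hr1 : r = 1
    · exfalso
      subst hr1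
      rw [inv_one, one_mul] at hrH
      have h7 : len γ' = (w.map (fun p => len p.2)).sum := by
        rw [hγ'2]; exact hlenAdd w _ hrH hRW
      omega
    · have hRW' : IsRWord Ω (w ++ [(j, r)]) := by
        constructor
        · rw [List.map_append, List.Chain', List.isChain_append]
          refine ⟨hRW.1, by simp, ?_⟩
          intro p hp q hq'
          simp only [List.map_cons, List.map_nil, List.head?_cons, Option.mem_def,
            Option.some.injEq] at hq'
          subst hq'
          rcases List.eq_nil_or_concat w with rfl | ⟨pre, ⟨i₀, g₀⟩, hw⟩
          · simp at hp
          · rw [hw, List.concat_eq_append] at hp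
            simp only [List.map_append, List.map_cons, List.map_nil,
              List.getLast?_concat, Option.mem_def, Option.some.injEq] at hp
            subst hp
            intro hij
            exact hlastj ⟨pre, g₀, by rw [hw, List.concat_eq_append, hij]⟩
        · intro p hp
          rcases List.mem_append.1 hp with hp | hp
          · exact hRW.2 p hp
          · simp only [List.mem_singleton] at hp; subst hp; exact ⟨hrΩ, hr1⟩
      have hγ'3 : γ' = wprod (w ++ [(j, r)]) * (r⁻¹ * (h * (g * h₁))) := by
        rw [hγ'2, wprod_concat]; group
      have hlr1 : len γ' = (w.map (fun p => len p.2)).sum + len r := by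
        rw [hγ'3, hlenAdd _ _ hrH hRW']
        simp
      have hlr : len r = 1 := by omega
      have hrsgn : ¬ (G j : Set Γ).Finite → r = a j ∨ r = (a j)⁻¹ := by
        intro hfin
        have hmem := hrΩ
        rw [hΩa j hfin] at hmem
        simp only [Set.mem_setOf_eq] at hmem
        obtain ⟨k, hk⟩ := hmem
        have hl := (apow_facts hcase hΩa hlenZ hfin k).2.2
        rw [← hk, hlr] at hl
        have hk1 : k = 1 ∨ k = -1 := by omega
        rcases hk1 with rfl | rfl
        · left; rw [hk, zpow_one]
        · right; rw [hk]; simp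
      exact ⟨(w ++ [(j, r)], r⁻¹ * (h * (g * h₁))), ⟨hRW', hrH, hγ'3⟩,
        (j, r), Or.inl ⟨rfl, hrΩ, hr1, hrsgn⟩⟩

theorem relU2_wprod {fin : I → Prop} {w w' : List (I × Γ)} {ju : I × Γ}
    (h : RelU2 fin Ω a w w' ju) : wprod w' = wprod w * ju.2 := by
  rcases h with ⟨rfl, -⟩ | ⟨pre, k, ε, -, -, -, hju, hw, hw'⟩
  · rw [wprod_concat]
  · rw [hw, hw', wprod_concat, wprod_concat, hju, zpow_add]
    exact (mul_assoc _ _ _).symm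

theorem relU2_unit
    (hcase : ∀ i, (G i : Set Γ).Finite ∨
      (a i ∈ G i ∧ (∀ h ∈ H, a i * h = h * a i) ∧
       (∀ g ∈ G i, ∃ n : ℤ, ∃ h ∈ H, g = a i ^ n * h) ∧
       (∀ n : ℤ, a i ^ n ∈ H → n = 0)))
    (hΩa : ∀ i, ¬ (G i : Set Γ).Finite → Ω i = {g : Γ | ∃ n : ℤ, g = a i ^ n})
    (hlenZ : ∀ i, ¬ (G i : Set Γ).Finite → ∀ n : ℤ, ∀ h ∈ H, len (a i ^ n * h) = n.natAbs)
    {w w' : List (I × Γ)} {ju : I × Γ}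
    (h : RelU2 (fun i => (G i : Set Γ).Finite) Ω a w w' ju) :
    ju.2 ∈ Ω ju.1 ∧ ju.2 ≠ 1 ∧
      (¬ (G ju.1 : Set Γ).Finite → ju.2 = a ju.1 ∨ ju.2 = (a ju.1)⁻¹) := by
  rcases h with ⟨-, h1, h2, h3⟩ | ⟨pre, k, ε, hfin, hε, hsign, hju, -, -⟩
  · exact ⟨h1, h2, h3⟩
  · have hf := apow_facts (len := len) hcase hΩa hlenZ hfin ε
    have hε0 : ε ≠ 0 := by rcases hε with rfl | rfl <;> simp
    refine ⟨hju ▸ hf.1, hju ▸ hf.2.1 hε0, fun _ => ?_⟩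
    rcases hε with rfl | rfl
    · left; rw [hju, zpow_one]
    · right; rw [hju]; simp

theorem relU2_last {fin : I → Prop} {w w' : List (I × Γ)} {ju : I × Γ}
    (h : RelU2 fin Ω a w w' ju) :
    ∃ pre g, w' = pre ++ [(ju.1, g)] ∧ (fin ju.1 → g = ju.2) ∧
      (¬ fin ju.1 → ∃ (kk εε : ℤ), g = a ju.1 ^ kk ∧ ju.2 = a ju.1 ^ εε ∧
        (εε = 1 ∨ εε = -1) ∧ 0 < kk * εε) := by
  rcases h with ⟨hw', h1, h2, h3⟩ | ⟨pre, k, ε, hfin, hε, hsign, hju, hw, hw'⟩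
  · refine ⟨w, ju.2, by simpa using hw', fun _ => rfl, fun hf => ?_⟩
    obtain ⟨ε, hε, hju⟩ := unit_zpow (h3 hf)
    exact ⟨ε, ε, hju, hju, hε, by rcases hε with rfl | rfl <;> norm_num⟩
  · exact ⟨pre, a ju.1 ^ (k + ε), hw', fun hf => absurd hf hfin,
      fun _ => ⟨k + ε, ε, rfl, hju, hε, by rcases hε with rfl | rfl <;> omega⟩⟩

theorem relU2_next
    (hcase : ∀ i, (G i : Set Γ).Finite ∨
      (a i ∈ G i ∧ (∀ h ∈ H, a i * h = h * a i) ∧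
       (∀ g ∈ G i, ∃ n : ℤ, ∃ h ∈ H, g = a i ^ n * h) ∧
       (∀ n : ℤ, a i ^ n ∈ H → n = 0)))
    {w' w'' : List (I × Γ)} {i : I} {g u : Γ}
    (hRW'' : IsRWord Ω w'')
    (hlast : ∃ pre, w' = pre ++ [(i, g)])
    (hfin1 : (G i : Set Γ).Finite → g = u)
    (hinf1 : ¬ (G i : Set Γ).Finite → ∃ (k ε : ℤ), g = a i ^ k ∧ u = a i ^ ε ∧
      (ε = 1 ∨ ε = -1) ∧ 0 < k * ε)
    {ju' : I × Γ} (h2 : RelU2 (fun i => (G i : Set Γ).Finite) Ω a w' w'' ju') :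
    ((G i : Set Γ).Finite → i ≠ ju'.1) ∧
    (¬ (G i : Set Γ).Finite → i = ju'.1 → u = ju'.2) := by
  obtain ⟨pre, rfl⟩ := hlast
  rcases h2 with ⟨hw'', -, -, -⟩ | ⟨pre', k', ε', hfin', hε', hsign', hju', hw, hw''⟩
  · have hne : i ≠ ju'.1 := by
      have h5 : IsRWord Ω (pre ++ [(i, g), ju']) := by
        rw [show pre ++ [(i, g), ju'] = (pre ++ [(i, g)]) ++ [ju'] by simp, ← hw'']
        exact hRW''
      exact rword_adj h5
    exact ⟨fun _ => hne, fun _ hiju => absurd hiju hne⟩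
  · obtain ⟨hpre, hpq⟩ := concat_inj' hw
    have hi : i = ju'.1 := congrArg Prod.fst hpq
    have hgk : g = a ju'.1 ^ k' := congrArg Prod.snd hpq
    constructor
    · intro hf
      exact absurd (hi ▸ hf) hfin'
    · intro hnf _
      obtain ⟨k, ε, hgk2, huε, hε, hsign⟩ := hinf1 hnf
      rw [← hi] at hgk hju' hfin'
      have hk : k = k' := apow_inj hcase hnf (hgk2.symm.trans hgk)
      have hεε : ε = ε' := by
        subst hk
        rcases hε with rfl | rfl <;> rcases hε' with rfl | rfl <;> omega
      rw [huε, hju', hεε, hi]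

theorem relU2_chain
    (hcase : ∀ i, (G i : Set Γ).Finite ∨
      (a i ∈ G i ∧ (∀ h ∈ H, a i * h = h * a i) ∧
       (∀ g ∈ G i, ∃ n : ℤ, ∃ h ∈ H, g = a i ^ n * h) ∧
       (∀ n : ℤ, a i ^ n ∈ H → n = 0)))
    {w w' w'' : List (I × Γ)} {ju ju' : I × Γ}
    (hRW'' : IsRWord Ω w'')
    (h1 : RelU2 (fun i => (G i : Set Γ).Finite) Ω a w w' ju)
    (h2 : RelU2 (fun i => (G i : Set Γ).Finite) Ω a w' w'' ju') :
    ((G ju.1 : Set Γ).Finite → ju.1 ≠ ju'.1) ∧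
    (¬ (G ju.1 : Set Γ).Finite → ju.1 = ju'.1 → ju.2 = ju'.2) := by
  obtain ⟨pre, g, hw', hfin1, hinf1⟩ := relU2_last h1
  exact relU2_next hcase hRW'' ⟨pre, hw'⟩ hfin1 hinf1 h2

end Step

open scoped Classical in
noncomputable def expand {I Γ : Type*} [Group Γ] (fin : I → Prop) (a : I → Γ) (len : Γ → ℕ)
    (p : I × Γ) : List (I × Γ) :=
  if fin p.1 then [p]
  else List.replicate (len p.2)
    (p.1, if ∃ k : ℤ, 0 < k ∧ p.2 = a p.1 ^ k then a p.1 else (a p.1)⁻¹)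

noncomputable def ungroup {I Γ : Type*} [Group Γ] (fin : I → Prop) (a : I → Γ) (len : Γ → ℕ)
    (w : List (I × Γ)) : List (I × Γ) :=
  w.flatMap (expand fin a len)

abbrev okpair {I Γ : Type*} (fin : I → Prop) (p q : I × Γ) : Prop :=
  (fin p.1 → p.1 ≠ q.1) ∧ (¬ fin p.1 → p.1 = q.1 → p.2 = q.2)

section Ungroup

variable {I Γ : Type*} [Group Γ] {G : I → Subgroup Γ} {H : Subgroup Γ} {a : I → Γ}
  {Ω : I → Set Γ} {len : Γ → ℕ}

theorem expand_letter
    (hcase : ∀ i, (G i : Set Γ).Finite ∨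
      (a i ∈ G i ∧ (∀ h ∈ H, a i * h = h * a i) ∧
       (∀ g ∈ G i, ∃ n : ℤ, ∃ h ∈ H, g = a i ^ n * h) ∧
       (∀ n : ℤ, a i ^ n ∈ H → n = 0)))
    (hΩG : ∀ i, Ω i ⊆ (G i : Set Γ)) (hΩ1 : ∀ i, (1 : Γ) ∈ Ω i)
    (hΩrep : ∀ i, ∀ g ∈ G i, ∃! x, x ∈ Ω i ∧ x⁻¹ * g ∈ H)
    (hΩa : ∀ i, ¬ (G i : Set Γ).Finite → Ω i = {g : Γ | ∃ n : ℤ, g = a i ^ n})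
    (hlen1 : ∀ i, (G i : Set Γ).Finite → ∀ g ∈ G i, g ∉ H → len g = 1)
    (hlenZ : ∀ i, ¬ (G i : Set Γ).Finite → ∀ n : ℤ, ∀ h ∈ H, len (a i ^ n * h) = n.natAbs)
    {i : I} {g : Γ} (hg : g ∈ Ω i) (h1 : g ≠ 1) :
    ∃ u m, expand (fun i => (G i : Set Γ).Finite) a len (i, g) = List.replicate m (i, u) ∧
      1 ≤ m ∧ m = len g ∧ u ∈ Ω i ∧ u ≠ 1 ∧
      (¬ (G i : Set Γ).Finite → u = a i ∨ u = (a i)⁻¹) ∧ u ^ m = g ∧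
      ((G i : Set Γ).Finite → u = g ∧ m = 1) ∧
      (¬ (G i : Set Γ).Finite → ∃ (k ε : ℤ), g = a i ^ k ∧ u = a i ^ ε ∧
        (ε = 1 ∨ ε = -1) ∧ 0 < k * ε) := by
  by_cases hfin : (G i : Set Γ).Finite
  · have hl : len g = 1 := hlen1 i hfin g (hΩG i hg)
      (mem_Omega_not_in_H hΩG hΩ1 hΩrep hg h1)
    refine ⟨g, 1, ?_, le_refl 1, hl.symm, hg, h1, fun hf => absurd hfin hf, pow_one g,
      fun _ => ⟨rfl, rfl⟩, fun hf => absurd hfin hf⟩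
    simp [expand, hfin]
  · have hmem := hg
    rw [hΩa i hfin] at hmem
    simp only [Set.mem_setOf_eq] at hmem
    obtain ⟨k, rfl⟩ := hmem
    have hk0 : k ≠ 0 := by rintro rfl; exact h1 (by simp)
    have hlk := (apow_facts (len := len) hcase hΩa hlenZ hfin k).2.2
    have hm1 : 1 ≤ len (a i ^ k) := by omega
    by_cases hpos : 0 < k
    · have hcond : ∃ k' : ℤ, 0 < k' ∧ a i ^ k = a i ^ k' := ⟨k, hpos, rfl⟩
      have hexp : expand (fun i => (G i : Set Γ).Finite) a len (i, a i ^ k)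
          = List.replicate (len (a i ^ k)) (i, a i) := by
        simp only [expand, hfin, if_false, if_pos hcond]
      have hone := apow_facts (len := len) hcase hΩa hlenZ hfin 1
      have hpow : (a i) ^ (len (a i ^ k)) = a i ^ k := by
        rw [hlk, ← zpow_natCast]
        congr 1
        omega
      refine ⟨a i, len (a i ^ k), hexp, hm1, rfl, by simpa using hone.1,
        by have := hone.2.1 one_ne_zero; simpa using this,
        fun _ => Or.inl rfl, hpow, fun hf => absurd hf hfin,
        fun _ => ⟨k, 1, rfl, (zpow_one _).symm, Or.inl rfl, by omega⟩⟩
    · have hneg : k < 0 := by omega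
      have hcond : ¬ ∃ k' : ℤ, 0 < k' ∧ a i ^ k = a i ^ k' := by
        rintro ⟨k', hk', he⟩
        have := apow_inj hcase hfin he
        omega
      have hexp : expand (fun i => (G i : Set Γ).Finite) a len (i, a i ^ k)
          = List.replicate (len (a i ^ k)) (i, (a i)⁻¹) := by
        simp only [expand, hfin, if_false, if_neg hcond]
      have hone := apow_facts (len := len) hcase hΩa hlenZ hfin (-1)
      have hpow : ((a i)⁻¹) ^ (len (a i ^ k)) = a i ^ k := by
        rw [hlk, inv_pow, ← zpow_natCast, ← zpow_neg]
        congr 1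
        omega
      refine ⟨(a i)⁻¹, len (a i ^ k), hexp, hm1, rfl, by simpa using hone.1,
        by have := hone.2.1 (by norm_num); simpa using this,
        fun _ => Or.inr rfl, hpow, fun hf => absurd hf hfin,
        fun _ => ⟨k, -1, rfl, by simp, Or.inr rfl, by omega⟩⟩

theorem isRWord_tail {p : I × Γ} {t : List (I × Γ)} (hRW : IsRWord Ω (p :: t)) :
    IsRWord Ω t := by
  refine ⟨?_, fun q hq => hRW.2 q (List.mem_cons_of_mem _ hq)⟩
  have h1 := hRW.1
  rw [List.map_cons] at h1
  exact h1.tail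

theorem ungroup_cons (fin : I → Prop) (a : I → Γ) (len : Γ → ℕ) (p : I × Γ)
    (t : List (I × Γ)) :
    ungroup fin a len (p :: t) = expand fin a len p ++ ungroup fin a len t := by
  simp [ungroup]

variable (hcase : ∀ i, (G i : Set Γ).Finite ∨
      (a i ∈ G i ∧ (∀ h ∈ H, a i * h = h * a i) ∧
       (∀ g ∈ G i, ∃ n : ℤ, ∃ h ∈ H, g = a i ^ n * h) ∧
       (∀ n : ℤ, a i ^ n ∈ H → n = 0)))
    (hΩG : ∀ i, Ω i ⊆ (G i : Set Γ)) (hΩ1 : ∀ i, (1 : Γ) ∈ Ω i)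
    (hΩrep : ∀ i, ∀ g ∈ G i, ∃! x, x ∈ Ω i ∧ x⁻¹ * g ∈ H)
    (hΩa : ∀ i, ¬ (G i : Set Γ).Finite → Ω i = {g : Γ | ∃ n : ℤ, g = a i ^ n})
    (hlen1 : ∀ i, (G i : Set Γ).Finite → ∀ g ∈ G i, g ∉ H → len g = 1)
    (hlenZ : ∀ i, ¬ (G i : Set Γ).Finite → ∀ n : ℤ, ∀ h ∈ H, len (a i ^ n * h) = n.natAbs)

include hcase hΩG hΩ1 hΩrep hΩa hlen1 hlenZ

theorem ungroup_prod : ∀ w : List (I × Γ), IsRWord Ω w →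
    ((ungroup (fun i => (G i : Set Γ).Finite) a len w).map Prod.snd).prod = wprod w := by
  intro w
  induction w with
  | nil => simp [ungroup, wprod]
  | cons p t IH =>
    intro hRW
    obtain ⟨i, g⟩ := p
    obtain ⟨u, m, hexp, hm1, hmlen, huΩ, hu1, husgn, hupow, hfin', hinf'⟩ :=
      expand_letter hcase hΩG hΩ1 hΩrep hΩa hlen1 hlenZ
        (hRW.2 (i, g) (by simp)).1 (hRW.2 (i, g) (by simp)).2
    rw [ungroup_cons, List.map_append, List.prod_append, hexp, List.map_replicate,
      List.prod_replicate, IH (isRWord_tail hRW)]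
    show u ^ m * wprod t = wprod ((i, g) :: t)
    rw [hupow]
    simp [wprod]

theorem ungroup_length : ∀ w : List (I × Γ), IsRWord Ω w →
    (ungroup (fun i => (G i : Set Γ).Finite) a len w).length
      = (w.map (fun p => len p.2)).sum := by
  intro w
  induction w with
  | nil => simp [ungroup]
  | cons p t IH =>
    intro hRW
    obtain ⟨i, g⟩ := p
    obtain ⟨u, m, hexp, hm1, hmlen, huΩ, hu1, husgn, hupow, hfin', hinf'⟩ :=
      expand_letter hcase hΩG hΩ1 hΩrep hΩa hlen1 hlenZ
        (hRW.2 (i, g) (by simp)).1 (hRW.2 (i, g) (by simp)).2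
    rw [ungroup_cons, List.length_append, hexp, List.length_replicate,
      IH (isRWord_tail hRW), List.map_cons, List.sum_cons, ← hmlen]

theorem ungroup_elems : ∀ w : List (I × Γ), IsRWord Ω w →
    ∀ q ∈ ungroup (fun i => (G i : Set Γ).Finite) a len w,
      q.2 ∈ Ω q.1 ∧ q.2 ≠ 1 ∧
        (¬ (G q.1 : Set Γ).Finite → q.2 = a q.1 ∨ q.2 = (a q.1)⁻¹) := by
  intro w hRW q hq
  rw [ungroup, List.mem_flatMap] at hq
  obtain ⟨p, hp, hqe⟩ := hq
  obtain ⟨i, g⟩ := p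
  obtain ⟨u, m, hexp, hm1, hmlen, huΩ, hu1, husgn, hupow, hfin', hinf'⟩ :=
    expand_letter hcase hΩG hΩ1 hΩrep hΩa hlen1 hlenZ (hRW.2 _ hp).1 (hRW.2 _ hp).2
  rw [hexp, List.mem_replicate] at hqe
  rw [hqe.2]
  exact ⟨huΩ, hu1, husgn⟩

theorem ungroup_chain : ∀ w : List (I × Γ), IsRWord Ω w →
    (ungroup (fun i => (G i : Set Γ).Finite) a len w).Chain'
      (okpair (fun i => (G i : Set Γ).Finite)) ∧
    (ungroup (fun i => (G i : Set Γ).Finite) a len w).head?.map Prod.fst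
      = w.head?.map Prod.fst := by
  intro w
  induction w with
  | nil => simp [ungroup, List.Chain']
  | cons p t IH =>
    intro hRW
    obtain ⟨i, g⟩ := p
    obtain ⟨u, m, hexp, hm1, hmlen, huΩ, hu1, husgn, hupow, hfin', hinf'⟩ :=
      expand_letter hcase hΩG hΩ1 hΩrep hΩa hlen1 hlenZ
        (hRW.2 (i, g) (by simp)).1 (hRW.2 (i, g) (by simp)).2
    have hIH := IH (isRWord_tail hRW)
    have hcons : ungroup (fun i => (G i : Set Γ).Finite) a len ((i, g) :: t)
        = List.replicate m (i, u) ++ ungroup (fun i => (G i : Set Γ).Finite) a len t := by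
      rw [ungroup_cons, hexp]
    constructor
    · rw [hcons, List.Chain', List.isChain_append]
      refine ⟨?_, hIH.1, ?_⟩
      · by_cases hfin : (G i : Set Γ).Finite
        · rw [(hfin' hfin).2, List.replicate_one]
          exact List.isChain_singleton _
        · exact List.isChain_replicate_of_rel _ ⟨fun hf => absurd hf hfin, fun _ _ => rfl⟩
      · intro q1 hq1 q2 hq2
        obtain ⟨m', rfl⟩ : ∃ m', m = m' + 1 := ⟨m - 1, by omega⟩
        rw [List.replicate_succ', List.getLast?_concat, Option.mem_def,
          Option.some.injEq] at hq1
        subst hq1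
        rcases t with _ | ⟨p', t'⟩
        · simp [ungroup] at hq2
        · have h8 := hIH.2
          rw [Option.mem_def] at hq2
          rw [hq2] at h8
          simp only [Option.map_some, List.head?_cons, Option.some.injEq] at h8
          have hne : i ≠ p'.1 := by
            have h9 := hRW.1
            rw [List.map_cons, List.map_cons, List.Chain', List.isChain_cons_cons] at h9
            exact h9.1
          exact ⟨fun _ => by rw [h8]; exact hne,
            fun _ hiq => absurd (hiq.trans h8) hne⟩
    · rw [hcons]
      obtain ⟨m', rfl⟩ : ∃ m', m = m' + 1 := ⟨m - 1, by omega⟩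
      rw [List.replicate_succ]
      simp

theorem ungroup_last {pre : List (I × Γ)} {i : I} {g : Γ}
    (hRW : IsRWord Ω (pre ++ [(i, g)])) :
    ∃ u, (ungroup (fun i => (G i : Set Γ).Finite) a len (pre ++ [(i, g)])).getLast?
        = some (i, u) ∧
      ((G i : Set Γ).Finite → g = u) ∧
      (¬ (G i : Set Γ).Finite → ∃ (k ε : ℤ), g = a i ^ k ∧ u = a i ^ ε ∧
        (ε = 1 ∨ ε = -1) ∧ 0 < k * ε) := by
  have hg := hRW.2 (i, g) (by simp)
  obtain ⟨u, m, hexp, hm1, hmlen, huΩ, hu1, husgn, hupow, hfin', hinf'⟩ :=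
    expand_letter hcase hΩG hΩ1 hΩrep hΩa hlen1 hlenZ hg.1 hg.2
  refine ⟨u, ?_, fun hf => ((hfin' hf).1).symm, hinf'⟩
  rw [show ungroup (fun i => (G i : Set Γ).Finite) a len (pre ++ [(i, g)])
      = ungroup (fun i => (G i : Set Γ).Finite) a len pre
        ++ expand (fun i => (G i : Set Γ).Finite) a len (i, g) from by
    simp [ungroup]]
  rw [hexp]
  obtain ⟨m', rfl⟩ : ∃ m', m = m' + 1 := ⟨m - 1, by omega⟩
  rw [List.replicate_succ', ← List.append_assoc, List.getLast?_concat]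

end Ungroup

theorem seq_build {α : Type*} {P : ℕ → α → Prop} {R : ℕ → α → α → Prop}
    (h0 : ∃ q, P 0 q) (hstep : ∀ t q, P t q → ∃ q', P (t+1) q' ∧ R t q q') :
    ∃ f : ℕ → α, (∀ t, P t (f t)) ∧ ∀ t, R t (f t) (f (t+1)) := by
  obtain ⟨q0, hq0⟩ := h0
  let F : ∀ t : ℕ, {q // P t q} := fun t => Nat.rec ⟨q0, hq0⟩
    (fun t ih => ⟨(hstep t ih.1 ih.2).choose, (hstep t ih.1 ih.2).choose_spec.1⟩) t
  exact ⟨fun t => (F t).1, fun t => (F t).2,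
    fun t => (hstep t (F t).1 (F t).2).choose_spec.2⟩

section Part3

variable {I Γ : Type*} [Group Γ] {G : I → Subgroup Γ} {H : Subgroup Γ} {a : I → Γ}
  {Ω : I → Set Γ} {len : Γ → ℕ}

theorem part3
    (hHG : ∀ i, H ≤ G i)
    (hcase : ∀ i, (G i : Set Γ).Finite ∨
      (a i ∈ G i ∧ (∀ h ∈ H, a i * h = h * a i) ∧
       (∀ g ∈ G i, ∃ n : ℤ, ∃ h ∈ H, g = a i ^ n * h) ∧
       (∀ n : ℤ, a i ^ n ∈ H → n = 0)))
    (hΩG : ∀ i, Ω i ⊆ (G i : Set Γ)) (hΩ1 : ∀ i, (1 : Γ) ∈ Ω i)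
    (hΩrep : ∀ i, ∀ g ∈ G i, ∃! x, x ∈ Ω i ∧ x⁻¹ * g ∈ H)
    (hΩa : ∀ i, ¬ (G i : Set Γ).Finite → Ω i = {g : Γ | ∃ n : ℤ, g = a i ^ n})
    (hNF : ∀ γ : Γ, ∃! wh : List (I × Γ) × Γ,
      IsRWord Ω wh.1 ∧ wh.2 ∈ H ∧ γ = wprod wh.1 * wh.2)
    (hlen1 : ∀ i, (G i : Set Γ).Finite → ∀ g ∈ G i, g ∉ H → len g = 1)
    (hlenZ : ∀ i, ¬ (G i : Set Γ).Finite → ∀ n : ℤ, ∀ h ∈ H, len (a i ^ n * h) = n.natAbs)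
    (hlenAdd : ∀ w : List (I × Γ), ∀ h ∈ H, IsRWord Ω w →
      len (wprod w * h) = (w.map (fun p => len p.2)).sum)
    (γ : ℕ → Γ) (hγ : LambdaSeq len γ) :
    ∃ (x : ℕ → Γ) (idx : ℕ → I), BSeq Ω (fun i => (G i : Set Γ).Finite) a x idx ∧
      LambdaEquiv H (phiSeq x) γ := by
  classical
  obtain ⟨N, hN⟩ := hγ
  obtain ⟨q0, hq0, -⟩ := hNF (γ N)
  have hstep : ∀ (t : ℕ) (q : List (I × Γ) × Γ),
      (IsRWord Ω q.1 ∧ q.2 ∈ H ∧ γ (N + t) = wprod q.1 * q.2) →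
      ∃ q' : List (I × Γ) × Γ,
        (IsRWord Ω q'.1 ∧ q'.2 ∈ H ∧ γ (N + (t + 1)) = wprod q'.1 * q'.2) ∧
        ∃ ju, RelU2 (fun i => (G i : Set Γ).Finite) Ω a q.1 q'.1 ju := by
    intro t q hq
    have h1 := hN (N + t) (by omega)
    have h2 := step_lemma hHG hcase hΩG hΩ1 hΩrep hΩa hNF hlen1 hlenZ hlenAdd
      hq.1 hq.2.1 hq.2.2 h1.2 h1.1.symm
    obtain ⟨q', hq', hju⟩ := h2
    exact ⟨q', ⟨hq'.1, hq'.2.1, by rw [show N + (t + 1) = N + t + 1 by omega]; exact hq'.2.2⟩, hju⟩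
  obtain ⟨f, hfP, hfR⟩ := seq_build ⟨q0, hq0⟩ hstep
  choose ju hju using hfR
  have hRW0 : IsRWord Ω (f 0).1 := (hfP 0).1
  have hUchain := (ungroup_chain hcase hΩG hΩ1 hΩrep hΩa hlen1 hlenZ (f 0).1 hRW0).1
  have hUelems := ungroup_elems hcase hΩG hΩ1 hΩrep hΩa hlen1 hlenZ (f 0).1 hRW0
  have hjufacts := fun t => relU2_unit hcase hΩa hlenZ (hju t)
  have hjuchain := fun t => relU2_chain hcase (hfP (t + 2)).1 (hju t) (hju (t + 1))
  set U : List (I × Γ) := ungroup (fun i => (G i : Set Γ).Finite) a len (f 0).1 with hU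
  set L : ℕ := U.length with hL
  let x : ℕ → Γ := fun m => if h : m < L then (U.get ⟨m, h⟩).2 else (ju (m - L)).2
  let idx : ℕ → I := fun m => if h : m < L then (U.get ⟨m, h⟩).1 else (ju (m - L)).1
  have hxlt : ∀ m (h : m < L), x m = (U.get ⟨m, h⟩).2 := fun m h => dif_pos h
  have hxge : ∀ m, L ≤ m → x m = (ju (m - L)).2 := fun m h => dif_neg (by omega)
  have hilt : ∀ m (h : m < L), idx m = (U.get ⟨m, h⟩).1 := fun m h => dif_pos h
  have hige : ∀ m, L ≤ m → idx m = (ju (m - L)).1 := fun m h => dif_neg (by omega)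
  refine ⟨x, idx, ?_, ?_⟩
  · -- BSeq
    intro m
    have helem : x m ∈ Ω (idx m) ∧ x m ≠ 1 ∧
        (¬ (G (idx m) : Set Γ).Finite → x m = a (idx m) ∨ x m = (a (idx m))⁻¹) := by
      by_cases hm : m < L
      · rw [hxlt m hm, hilt m hm]
        exact hUelems _ (List.get_mem U ⟨m, hm⟩)
      · rw [hxge m (by omega), hige m (by omega)]
        exact hjufacts (m - L)
    have hadj : ((G (idx m) : Set Γ).Finite → idx m ≠ idx (m + 1)) ∧
        (¬ (G (idx m) : Set Γ).Finite → idx m = idx (m + 1) → x m = x (m + 1)) := by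
      by_cases hm1 : m + 1 < L
      · have hm : m < L := by omega
        rw [hxlt m hm, hilt m hm, hxlt (m+1) hm1, hilt (m+1) hm1]
        have hok := List.isChain_iff_getElem.1 hUchain m (by omega)
        exact ⟨hok.1, hok.2⟩
      · by_cases hm2 : m + 1 = L
        · -- boundary between prefix and tail units
          have hm : m < L := by omega
          have hL0 : L ≠ 0 := by omega
          rcases List.eq_nil_or_concat (f 0).1 with h00 | ⟨pre, pg, h00⟩
          · exfalso
            apply hL0
            rw [hL, hU, h00]
            rfl
          obtain ⟨i2, g2⟩ := pg
          rw [List.concat_eq_append] at h00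
          obtain ⟨u, hulast, hufin, huinf⟩ :=
            ungroup_last hcase hΩG hΩ1 hΩrep hΩa hlen1 hlenZ (h00 ▸ hRW0)
          have hulast' : U.getLast? = some (i2, u) := by rw [hU, h00]; exact hulast
          have hgetm : U.get ⟨m, hm⟩ = (i2, u) := by
            have h9 : U.getLast? = some (U.get ⟨m, hm⟩) := by
              rw [List.getLast?_eq_getElem?]
              have h10 : U.length - 1 = m := by omega
              rw [h10]
              exact List.getElem?_eq_getElem hm
            rw [hulast'] at h9
            exact (Option.some.injEq _ _ ▸ h9).symm
          have hnext := relU2_next hcase (hfP 1).1 ⟨pre, h00⟩ hufin huinf (hju 0)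
          have hm10 : m + 1 - L = 0 := by omega
          rw [hilt m hm, hxlt m hm, hige (m+1) (by omega), hxge (m+1) (by omega),
            hm10, hgetm]
          exact hnext
        · -- both in the tail
          have hm : L ≤ m := by omega
          have ht1 : m + 1 - L = (m - L) + 1 := by omega
          rw [hige m hm, hxge m hm, hige (m+1) (by omega), hxge (m+1) (by omega), ht1]
          exact hjuchain (m - L)
    exact ⟨helem.1, helem.2.1, helem.2.2, hadj.1, hadj.2⟩
  · -- LambdaEquiv
    have hphiL : phiSeq x L = wprod (f 0).1 := by
      have hlist : (List.range L).map x = U.map Prod.snd := by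
        apply List.ext_getElem
        · simp [hL]
        · intro n h1 h2
          have hn : n < L := by simpa using h1
          rw [List.getElem_map, List.getElem_range, List.getElem_map]
          rw [hxlt n hn]
          rfl
      rw [phiSeq, hlist]
      exact ungroup_prod hcase hΩG hΩ1 hΩrep hΩa hlen1 hlenZ (f 0).1 hRW0
    have hphi : ∀ t, phiSeq x (L + t) = wprod (f t).1 := by
      intro t
      induction t with
      | zero => exact hphiL
      | succ t IH =>
        rw [show L + (t + 1) = (L + t) + 1 by omega, phiSeq_succ, IH, hxge (L + t) (by omega)]
        have h11 : L + t - L = t := by omega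
        rw [h11, ← relU2_wprod (hju t)]
    refine ⟨(N : ℤ) - (L : ℤ), L, fun n hn => ⟨by omega, ?_⟩⟩
    have htn : ((n : ℤ) + ((N : ℤ) - (L : ℤ))).toNat = N + (n - L) := by omega
    rw [htn]
    have h9 : phiSeq x n = wprod (f (n - L)).1 := by
      have h10 := hphi (n - L)
      rw [show L + (n - L) = n by omega] at h10
      exact h10
    rw [h9, (hfP (n - L)).2.2]
    have h12 : (wprod (f (n - L)).1)⁻¹ * (wprod (f (n - L)).1 * (f (n - L)).2)
        = (f (n - L)).2 := by group
    rw [h12]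
    exact (hfP (n - L)).2.1

end Part3

end AFPaux

/-- In the amalgamated free product `Γ = ∗_H G i` (each `G i` finite or
`ℤ × H`, `H` finite, `⋃ᵢ Ω i ∖ {1}` having at least three elements), the map
`φ : Ω → Λ` sending `x ∈ Ω` to the class of `(γ_n)` with `γ_0 = e`, `γ_n = x(1)⋯x(n)`,
is well defined and a bijection from `Ω` onto `Λ`: `φ x ∈ Λ̃` for every `x ∈ Ω`;
`φ` is injective modulo the equivalence; and every element of `Λ̃` is equivalent to `φ x`
for some `x ∈ Ω`. -/
theorem stmt_1 {I Γ : Type*} [Fintype I] [DecidableEq I] [Group Γ]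
    (G : I → Subgroup Γ) (H : Subgroup Γ) (a : I → Γ)
    (Ω : I → Set Γ) (len : Γ → ℕ)
    (hHG : ∀ i, H ≤ G i)
    (hHfin : (H : Set Γ).Finite)
    (hcase : ∀ i, (G i : Set Γ).Finite ∨
      (a i ∈ G i ∧ (∀ h ∈ H, a i * h = h * a i) ∧
       (∀ g ∈ G i, ∃ n : ℤ, ∃ h ∈ H, g = a i ^ n * h) ∧
       (∀ n : ℤ, a i ^ n ∈ H → n = 0)))
    (hΩG : ∀ i, Ω i ⊆ (G i : Set Γ))
    (hΩ1 : ∀ i, (1 : Γ) ∈ Ω i)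
    (hΩrep : ∀ i, ∀ g ∈ G i, ∃! x, x ∈ Ω i ∧ x⁻¹ * g ∈ H)
    (hΩa : ∀ i, ¬ (G i : Set Γ).Finite → Ω i = {g : Γ | ∃ n : ℤ, g = a i ^ n})
    (hNF : ∀ γ : Γ, ∃! wh : List (I × Γ) × Γ,
      IsRWord Ω wh.1 ∧ wh.2 ∈ H ∧ γ = wprod wh.1 * wh.2)
    (hlenH : ∀ h ∈ H, len h = 0)
    (hlen1 : ∀ i, (G i : Set Γ).Finite → ∀ g ∈ G i, g ∉ H → len g = 1)
    (hlenZ : ∀ i, ¬ (G i : Set Γ).Finite → ∀ n : ℤ, ∀ h ∈ H, len (a i ^ n * h) = n.natAbs)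
    (hlenAdd : ∀ w : List (I × Γ), ∀ h ∈ H, IsRWord Ω w →
      len (wprod w * h) = (w.map (fun p => len p.2)).sum)
    (h3 : ∃ x y z : Γ, x ≠ y ∧ x ≠ z ∧ y ≠ z ∧ x ≠ 1 ∧ y ≠ 1 ∧ z ≠ 1 ∧
      (∃ i, x ∈ Ω i) ∧ (∃ i, y ∈ Ω i) ∧ (∃ i, z ∈ Ω i)) :
    (∀ (x : ℕ → Γ) (idx : ℕ → I), BSeq Ω (fun i => (G i : Set Γ).Finite) a x idx →
      LambdaSeq len (phiSeq x)) ∧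
    (∀ (x : ℕ → Γ) (idx : ℕ → I) (y : ℕ → Γ) (idy : ℕ → I),
      BSeq Ω (fun i => (G i : Set Γ).Finite) a x idx →
      BSeq Ω (fun i => (G i : Set Γ).Finite) a y idy →
      LambdaEquiv H (phiSeq x) (phiSeq y) → x = y) ∧
    (∀ γ : ℕ → Γ, LambdaSeq len γ →
      ∃ (x : ℕ → Γ) (idx : ℕ → I), BSeq Ω (fun i => (G i : Set Γ).Finite) a x idx ∧
        LambdaEquiv H (phiSeq x) γ) := by
  refine ⟨fun x idx hx =>
      AFPaux.part1 hcase hΩG hΩ1 hΩrep hΩa hlen1 hlenZ hlenAdd x idx hx,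
    fun x idx y idy hx hy he =>
      AFPaux.part2 hcase hΩG hΩ1 hΩrep hΩa hNF hlen1 hlenZ hlenAdd x idx y idy hx hy he,
    fun γ' hγ' =>
      AFPaux.part3 hHG hcase hΩG hΩ1 hΩrep hΩa hNF hlen1 hlenZ hlenAdd γ' hγ'⟩
end

section
/- Let μ ∈ Δ with normal form μ = μ₁⋯μ_n, μ_k ∈ Ω_{i_k}∖{e}, and let g ∈ G_i∖H with |g| = 1 and i ≠ i_n (so that |μg| = |μ| + 1). Then μgHg⁻¹μ⁻¹ ∩ H ⊆ μHμ⁻¹ ∩ H. -/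
/-- Moving an element of `H` across a reduced word: `k * wprod w = wprod w' * h'` with
`w'` having the same sequence of indices as `w`. -/
theorem hmove_aux {I Γ : Type*} [Group Γ] (G : I → Subgroup Γ) (H : Subgroup Γ)
    (Ω : I → Set Γ) (hHG : ∀ i, H ≤ G i) (hΩG : ∀ i, Ω i ⊆ (G i : Set Γ))
    (hΩ1 : ∀ i, (1 : Γ) ∈ Ω i)
    (hΩrep : ∀ i, ∀ g ∈ G i, ∃! x, x ∈ Ω i ∧ x⁻¹ * g ∈ H) :
    ∀ w : List (I × Γ), IsRWord Ω w → ∀ k ∈ H, ∃ w' h', IsRWord Ω w' ∧ h' ∈ H ∧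
      k * wprod w = wprod w' * h' ∧ w'.map Prod.fst = w.map Prod.fst := by
  intro w
  induction w with
  | nil =>
    intro _ k hk
    exact ⟨[], k, ⟨List.isChain_nil, by simp⟩, hk, by simp [wprod], rfl⟩
  | cons p rest ih =>
    intro hw k hk
    obtain ⟨i₁, g₁⟩ := p
    have hg₁Ω : g₁ ∈ Ω i₁ := (hw.2 (i₁, g₁) (List.mem_cons_self)).1
    have hg₁1 : g₁ ≠ 1 := (hw.2 (i₁, g₁) (List.mem_cons_self)).2
    have hg₁G : g₁ ∈ G i₁ := hΩG i₁ hg₁Ω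
    have hg₁H : g₁ ∉ H := by
      intro hmem
      obtain ⟨y, -, huniq⟩ := hΩrep i₁ g₁ hg₁G
      have h1 : g₁ = y := huniq g₁ ⟨hg₁Ω, by simpa using one_mem H⟩
      have h2 : (1 : Γ) = y := huniq 1 ⟨hΩ1 i₁, by simpa using hmem⟩
      exact hg₁1 (h1.trans h2.symm)
    have hkg : k * g₁ ∈ G i₁ := mul_mem (hHG i₁ hk) hg₁G
    obtain ⟨x, ⟨hxΩ, hxH⟩, -⟩ := hΩrep i₁ (k * g₁) hkg
    have hx1 : x ≠ 1 := by
      intro hx1; apply hg₁H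
      have : k * g₁ ∈ H := by simpa [hx1] using hxH
      simpa using mul_mem (inv_mem hk) this
    have hrest : IsRWord Ω rest :=
      ⟨hw.1.tail, fun q hq => hw.2 q (List.mem_cons_of_mem _ hq)⟩
    obtain ⟨w'', h'', hw'', hh'', heq, hfst⟩ := ih hrest (x⁻¹ * (k * g₁)) hxH
    refine ⟨(i₁, x) :: w'', h'', ⟨?_, ?_⟩, hh'', ?_, by simpa using hfst⟩
    · have : ((i₁, x) :: w'').map Prod.fst = (((i₁, g₁) :: rest)).map Prod.fst := by
        simpa using hfst
      rw [this]; exact hw.1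
    · intro q hq
      rcases List.mem_cons.mp hq with h | h
      · subst h; exact ⟨hxΩ, hx1⟩
      · exact hw''.2 q h
    · have h1 : wprod ((i₁, g₁) :: rest) = g₁ * wprod rest := by simp [wprod]
      have h2 : wprod ((i₁, x) :: w'') = x * wprod w'' := by simp [wprod]
      rw [h1, h2]
      calc k * (g₁ * wprod rest) = x * (x⁻¹ * (k * g₁) * wprod rest) := by group
        _ = x * (wprod w'' * h'') := by rw [heq]
        _ = x * wprod w'' * h'' := by group

/-- In the amalgamated free product `Γ = ∗_H G i` (each `G i` finite or
`ℤ × H`, `H` finite, with fixed coset representatives `Ω i` and the length function `len`),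
let `μ ∈ Δ` have normal form `μ = μ₁⋯μₙ` (encoded by the reduced word `w` of length-one
letters) and let `g ∈ G i ∖ H` with `len g = 1` and `i` different from the index of the last
letter of `μ`.  Then `μgHg⁻¹μ⁻¹ ∩ H ⊆ μHμ⁻¹ ∩ H`. -/
theorem stmt_4 {I Γ : Type*} [Fintype I] [DecidableEq I] [Group Γ]
    (G : I → Subgroup Γ) (H : Subgroup Γ) (a : I → Γ)
    (Ω : I → Set Γ) (len : Γ → ℕ)
    (hHG : ∀ i, H ≤ G i)
    (hHfin : (H : Set Γ).Finite)
    (hcase : ∀ i, (G i : Set Γ).Finite ∨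
      (a i ∈ G i ∧ (∀ h ∈ H, a i * h = h * a i) ∧
       (∀ g ∈ G i, ∃ n : ℤ, ∃ h ∈ H, g = a i ^ n * h) ∧
       (∀ n : ℤ, a i ^ n ∈ H → n = 0)))
    (hΩG : ∀ i, Ω i ⊆ (G i : Set Γ))
    (hΩ1 : ∀ i, (1 : Γ) ∈ Ω i)
    (hΩrep : ∀ i, ∀ g ∈ G i, ∃! x, x ∈ Ω i ∧ x⁻¹ * g ∈ H)
    (hΩa : ∀ i, ¬ (G i : Set Γ).Finite → Ω i = {g : Γ | ∃ n : ℤ, g = a i ^ n})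
    (hNF : ∀ γ : Γ, ∃! wh : List (I × Γ) × Γ,
      IsRWord Ω wh.1 ∧ wh.2 ∈ H ∧ γ = wprod wh.1 * wh.2)
    (hlenH : ∀ h ∈ H, len h = 0)
    (hlen1 : ∀ i, (G i : Set Γ).Finite → ∀ g ∈ G i, g ∉ H → len g = 1)
    (hlenZ : ∀ i, ¬ (G i : Set Γ).Finite → ∀ n : ℤ, ∀ h ∈ H, len (a i ^ n * h) = n.natAbs)
    (hlenAdd : ∀ w : List (I × Γ), ∀ h ∈ H, IsRWord Ω w →
      len (wprod w * h) = (w.map (fun p => len p.2)).sum)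
    -- the data of the statement
    (w : List (I × Γ)) (hw : IsRWord Ω w) (hwne : w ≠ [])
    (hw1 : ∀ p ∈ w, len p.2 = 1)
    (i : I) (g : Γ) (hg : g ∈ G i) (hgH : g ∉ H) (hglen : len g = 1)
    (hlast : ∀ p : I × Γ, w.getLast? = some p → p.1 ≠ i) :
    ((fun x : Γ => (wprod w * g) * x * (wprod w * g)⁻¹) '' (H : Set Γ)) ∩ (H : Set Γ) ⊆
      ((fun x : Γ => wprod w * x * (wprod w)⁻¹) '' (H : Set Γ)) ∩ (H : Set Γ) := by
  rintro y ⟨⟨h, hh, rfl⟩, hyH⟩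
  set x : Γ := g * h * g⁻¹ with hxdef
  have hxG : x ∈ G i := mul_mem (mul_mem hg (hHG i hh)) (inv_mem hg)
  have hyeq : wprod w * g * h * (wprod w * g)⁻¹ = wprod w * x * (wprod w)⁻¹ := by
    simp only [hxdef]; group
  by_cases hxH : x ∈ H
  · exact ⟨⟨x, hxH, hyeq.symm⟩, hyH⟩
  · exfalso
    -- normal form of `y * wprod w` via `hmove_aux`
    set y : Γ := wprod w * g * h * (wprod w * g)⁻¹ with hydef
    obtain ⟨w', h', hw', hh', heq', hfst⟩ :=
      hmove_aux G H Ω hHG hΩG hΩ1 hΩrep w hw y (by rwa [hydef])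
    -- the other normal form: `w ++ [(i, x₀)]` and `h₁`
    obtain ⟨x₀, ⟨hx₀Ω, hx₀H⟩, -⟩ := hΩrep i x hxG
    have hx₀1 : x₀ ≠ 1 := by
      intro h1; exact hxH (by simpa [h1] using hx₀H)
    have hx₀notH : x = x₀ * (x₀⁻¹ * x) := by group
    have hword : IsRWord Ω (w ++ [(i, x₀)]) := by
      constructor
      · rw [List.map_append]
        unfold List.Chain'; rw [List.isChain_append]
        refine ⟨hw.1, by simp, ?_⟩
        intro a ha b hb
        simp only [List.map_cons, List.map_nil, List.head?_cons, Option.mem_def,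
          Option.some.injEq] at hb
        subst hb
        rw [List.getLast?_map] at ha
        obtain ⟨p, hp, rfl⟩ := Option.map_eq_some_iff.mp ha
        exact hlast p hp
      · intro q hq
        rcases List.mem_append.mp hq with h1 | h1
        · exact hw.2 q h1
        · simp only [List.mem_singleton] at h1; subst h1; exact ⟨hx₀Ω, hx₀1⟩
    have hprod : y * wprod w = wprod (w ++ [(i, x₀)]) * (x₀⁻¹ * x) := by
      have h1 : wprod (w ++ [(i, x₀)]) = wprod w * x₀ := by
        simp [wprod, List.map_append]
      have h2 : y * wprod w = wprod w * x := by
        rw [hydef]; simp only [hxdef]; group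
      rw [h1, h2]; group
    -- uniqueness of normal forms
    have heqpair : ((w ++ [(i, x₀)], x₀⁻¹ * x) : List (I × Γ) × Γ) = (w', h') :=
      (hNF (y * wprod w)).unique ⟨hword, hx₀H, hprod⟩ ⟨hw', hh', heq'⟩
    have hlists : w ++ [(i, x₀)] = w' := congrArg Prod.fst heqpair
    have hlen1 : (w ++ [(i, x₀)]).length = w'.length := by rw [hlists]
    have hlen2 : w'.length = w.length := by
      have := congrArg List.length hfst
      simpa using this
    simp at hlen1
    omega
end

section
/- There exists a unique β ∈ ℝ such that Σ_{i ∈ I} 1/(r_i e^{−βω_i} + 1) = |I| − 1, and this β satisfies β ≥ 0. -/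
/-!
Each summand `1 / (r e^{-βω} + 1)` is continuous and strictly increasing in `β`, tends to `1`
as `β → ∞`, and is at most `1/2` at `β = 0` because `r ≥ 1`. So the sum is a continuous strictly
increasing function with value `≤ |I|/2 ≤ |I| - 1` at `0` and limit `|I| > |I| - 1` at `+∞`; the
intermediate value theorem gives a root in `[0, ∞)`, and strict monotonicity makes it unique.
-/

open Filter Topology Real

theorem strictMono_finset_sum {ι α M : Type*} [Fintype ι] [Nonempty ι] [Preorder α]
    [AddCommMonoid M] [PartialOrder M] [IsOrderedCancelAddMonoid M] {f : ι → α → M}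
    (hf : ∀ i, StrictMono (f i)) : StrictMono fun a ↦ ∑ i, f i a :=
  fun _ _ hab ↦ Finset.sum_lt_sum_of_nonempty Finset.univ_nonempty fun i _ ↦ hf i hab

theorem StrictMono.existsUnique_nonneg_eq {f : ℝ → ℝ} {c L : ℝ} (hmono : StrictMono f)
    (hcont : Continuous f) (h0 : f 0 ≤ c) (hlim : Tendsto f atTop (𝓝 L)) (hcL : c < L) :
    (∃! x, f x = c) ∧ ∀ x, f x = c → 0 ≤ x := by
  have hnonneg : ∀ x, f x = c → 0 ≤ x := fun x hx ↦ hmono.le_iff_le.mp (hx ▸ h0)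
  obtain ⟨b, hcb, hb⟩ := ((hlim.eventually (eventually_ge_nhds hcL)).and
    (eventually_ge_atTop 0)).exists
  obtain ⟨x, -, hx⟩ := intermediate_value_Icc hb hcont.continuousOn ⟨h0, hcb⟩
  exact ⟨⟨x, hx, fun y hy ↦ hmono.injective (hy.trans hx.symm)⟩, hnonneg⟩

section

variable {r ω : ℝ}

lemma mul_exp_add_one_pos (hr : 0 ≤ r) (β : ℝ) : 0 < r * exp (-β * ω) + 1 := by
  positivity

lemma continuous_one_div_mul_exp_add_one (hr : 0 ≤ r) :
    Continuous fun β ↦ 1 / (r * exp (-β * ω) + 1) :=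
  continuous_const.div (by fun_prop) fun β ↦ (mul_exp_add_one_pos hr β).ne'

lemma strictMono_one_div_mul_exp_add_one (hr : 0 < r) (hω : 0 < ω) :
    StrictMono fun β ↦ 1 / (r * exp (-β * ω) + 1) := by
  intro a b hab
  have : exp (-b * ω) < exp (-a * ω) := exp_lt_exp.mpr (by nlinarith)
  exact one_div_lt_one_div_of_lt (mul_exp_add_one_pos hr.le b) (by gcongr)

lemma tendsto_one_div_mul_exp_add_one_atTop (hω : 0 < ω) :
    Tendsto (fun β ↦ 1 / (r * exp (-β * ω) + 1)) atTop (𝓝 1) := by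
  have hexp : Tendsto (fun β ↦ exp (-β * ω)) atTop (𝓝 0) := by
    refine tendsto_exp_atBot.comp ?_
    simpa only [neg_mul, Function.comp_def, id] using
      tendsto_neg_atTop_atBot.comp (tendsto_id.atTop_mul_const hω)
  simpa using ((hexp.const_mul r).add_const 1).inv₀ (by norm_num)

lemma one_div_mul_exp_zero_add_one_le (hr : 1 ≤ r) :
    1 / (r * exp (-0 * ω) + 1) ≤ 1 / 2 := by
  rw [neg_zero, zero_mul, exp_zero, mul_one]
  gcongr
  linarith

end

/-- Let `I` be a finite set with `|I| ≥ 2`, and for each `i ∈ I` let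
`ω i > 0` and `r i ≥ 1` be real numbers.  Then there exists a unique `β ∈ ℝ` such that
`∑ i, 1 / (r i * e^{-β * ω i} + 1) = |I| - 1`, and this `β` satisfies `β ≥ 0`. -/
theorem stmt_7 {I : Type*} [Fintype I] (hI : 2 ≤ Fintype.card I)
    (ω r : I → ℝ) (hω : ∀ i, 0 < ω i) (hr : ∀ i, 1 ≤ r i) :
    (∃! β : ℝ, ∑ i, 1 / (r i * Real.exp (-β * ω i) + 1) = (Fintype.card I : ℝ) - 1) ∧
    (∀ β : ℝ, (∑ i, 1 / (r i * Real.exp (-β * ω i) + 1) = (Fintype.card I : ℝ) - 1) →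
      0 ≤ β) := by
  have : Nonempty I := Fintype.card_pos_iff.mp (by omega)
  have hr₀ : ∀ i, 0 < r i := fun i ↦ one_pos.trans_le (hr i)
  have hcard : (2 : ℝ) ≤ Fintype.card I := by exact_mod_cast hI
  refine StrictMono.existsUnique_nonneg_eq
    (strictMono_finset_sum fun i ↦ strictMono_one_div_mul_exp_add_one (hr₀ i) (hω i))
    (continuous_finsetSum _ fun i _ ↦ continuous_one_div_mul_exp_add_one (hr₀ i).le)
    ?_ (tendsto_finsetSum _ fun i _ ↦ tendsto_one_div_mul_exp_add_one_atTop (hω i))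
    (by simp)
  calc ∑ i, 1 / (r i * exp (-0 * ω i) + 1) ≤ ∑ _i : I, (1 / 2 : ℝ) :=
        Finset.sum_le_sum fun i _ ↦ one_div_mul_exp_zero_add_one_le (hr i)
    _ ≤ Fintype.card I - 1 := by
        simp only [one_div, Finset.sum_const, Finset.card_univ, nsmul_eq_mul]
        linarith
end

section
/- Γ is a hyperbolic group: there exists δ ≥ 0 such that for all x, y, z ∈ Γ, ⟨x|y⟩ ≥ min(⟨x|z⟩, ⟨y|z⟩) − δ, where ⟨x|y⟩ = (d(x,e) + d(y,e) − d(x,y))/2 is the Gromov product at the identity with respect to the word metric d. -/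
/-- The word length of `γ` with respect to a generating set `S`: the least `n` such that `γ`
is a product of `n` elements of `S`. -/
noncomputable def wLen {Γ : Type*} [Group Γ] (S : Set Γ) (γ : Γ) : ℕ :=
  sInf {n : ℕ | ∃ l : List Γ, l.length = n ∧ (∀ s ∈ l, s ∈ S) ∧ l.prod = γ}

/-- The word metric on `Γ` with respect to the generating set `S`. -/
noncomputable def wDist {Γ : Type*} [Group Γ] (S : Set Γ) (x y : Γ) : ℕ :=
  wLen S (x⁻¹ * y)

/-- The Gromov product `⟨x|y⟩ = (d(x,e) + d(y,e) - d(x,y)) / 2` at the identity with respect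
to the word metric for the generating set `S`. -/
noncomputable def gromovProdWord {Γ : Type*} [Group Γ] (S : Set Γ) (x y : Γ) : ℝ :=
  ((wDist S x 1 : ℝ) + (wDist S y 1 : ℝ) - (wDist S x y : ℝ)) / 2

section Aux
variable {I Γ : Type*} [Group Γ]

lemma aux_rep_eq (G : I → Subgroup Γ) (H : Subgroup Γ) (Ω : I → Set Γ)
    (hΩG : ∀ i, Ω i ⊆ (G i : Set Γ))
    (hΩrep : ∀ i, ∀ g ∈ G i, ∃! x, x ∈ Ω i ∧ x⁻¹ * g ∈ H)
    {i : I} {g k : Γ} (hg : g ∈ Ω i) (hk : k ∈ Ω i) (h : g⁻¹ * k ∈ H) : g = k := by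
  obtain ⟨x, -, hu⟩ := hΩrep i k (hΩG i hk)
  have h1 := hu g ⟨hg, h⟩
  have h2 := hu k ⟨hk, by simpa using one_mem H⟩
  rw [h1, h2]

lemma aux_omega_one (G : I → Subgroup Γ) (H : Subgroup Γ) (Ω : I → Set Γ)
    (hΩG : ∀ i, Ω i ⊆ (G i : Set Γ))
    (hΩ1 : ∀ i, (1 : Γ) ∈ Ω i)
    (hΩrep : ∀ i, ∀ g ∈ G i, ∃! x, x ∈ Ω i ∧ x⁻¹ * g ∈ H)
    {i : I} {g : Γ} (hg : g ∈ Ω i) (hgH : g ∈ H) : g = 1 :=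
  (aux_rep_eq G H Ω hΩG hΩrep (hΩ1 i) hg (by simpa using hgH)).symm

/-- letters of a reduced word lie in `G i ∖ H`. -/
lemma aux_letters (G : I → Subgroup Γ) (H : Subgroup Γ) (Ω : I → Set Γ)
    (hΩG : ∀ i, Ω i ⊆ (G i : Set Γ))
    (hΩ1 : ∀ i, (1 : Γ) ∈ Ω i)
    (hΩrep : ∀ i, ∀ g ∈ G i, ∃! x, x ∈ Ω i ∧ x⁻¹ * g ∈ H)
    {w : List (I × Γ)} (hw : IsRWord Ω w) :
    ∀ p ∈ w, p.2 ∈ G p.1 ∧ p.2 ∉ H := by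
  intro p hp
  obtain ⟨h1, h2⟩ := hw.2 p hp
  exact ⟨hΩG p.1 h1, fun hH => h2 (aux_omega_one G H Ω hΩG hΩ1 hΩrep h1 hH)⟩

/-- factor-level facts about `len`. -/
lemma aux_factor (G : I → Subgroup Γ) (H : Subgroup Γ) (a : I → Γ) (len : Γ → ℕ)
    (hHG : ∀ i, H ≤ G i)
    (hcase : ∀ i, (G i : Set Γ).Finite ∨
      (a i ∈ G i ∧ (∀ h ∈ H, a i * h = h * a i) ∧
       (∀ g ∈ G i, ∃ n : ℤ, ∃ h ∈ H, g = a i ^ n * h) ∧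
       (∀ n : ℤ, a i ^ n ∈ H → n = 0)))
    (hlenH : ∀ h ∈ H, len h = 0)
    (hlen1 : ∀ i, (G i : Set Γ).Finite → ∀ g ∈ G i, g ∉ H → len g = 1)
    (hlenZ : ∀ i, ¬ (G i : Set Γ).Finite → ∀ n : ℤ, ∀ h ∈ H, len (a i ^ n * h) = n.natAbs)
    (i : I) :
    (∀ x ∈ G i, ∀ y ∈ G i, len (x * y) ≤ len x + len y) ∧
    (∀ x ∈ G i, x ∉ H →
      (1 ≤ len x ∧ len x⁻¹ = len x ∧ ∀ h ∈ H, ∀ h' ∈ H, len (h * x * h') = len x)) := by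
  by_cases hfin : (G i : Set Γ).Finite
  · constructor
    · intro x hx y hy
      by_cases hxy : x * y ∈ H
      · simp [hlenH _ hxy]
      · rw [hlen1 i hfin _ (mul_mem hx hy) hxy]
        by_cases hxH : x ∈ H
        · have hyH : y ∉ H := fun hyH => hxy (mul_mem hxH hyH)
          have := hlen1 i hfin y hy hyH; omega
        · have := hlen1 i hfin x hx hxH; omega
    · intro x hx hxH
      have l1 := hlen1 i hfin x hx hxH
      have hxi : x⁻¹ ∈ G i := inv_mem hx
      have hxiH : x⁻¹ ∉ H := fun h => hxH (by simpa using inv_mem h)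
      refine ⟨by omega, by rw [hlen1 i hfin _ hxi hxiH, l1], ?_⟩
      intro h hh h' hh'
      have hm : h * x * h' ∈ G i := mul_mem (mul_mem (hHG i hh) hx) (hHG i hh')
      have hmH : h * x * h' ∉ H := by
        intro hc
        refine hxH ?_
        have hx' : x = h⁻¹ * (h * x * h') * h'⁻¹ := by group
        rw [hx']
        exact mul_mem (mul_mem (inv_mem hh) hc) (inv_mem hh')
      rw [hlen1 i hfin _ hm hmH, l1]
  · obtain ⟨haG, hcomm, hdec, hinj⟩ := (hcase i).resolve_left hfin
    have hcz : ∀ (n : ℤ) (h : Γ), h ∈ H → h * a i ^ n = a i ^ n * h := by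
      intro n h hh
      have hc : Commute (a i) h := hcomm h hh
      exact ((hc.zpow_left n).symm).eq
    constructor
    · intro x hx y hy
      obtain ⟨p, h₀, hh₀, rfl⟩ := hdec x hx
      obtain ⟨q, h₁, hh₁, rfl⟩ := hdec y hy
      have : a i ^ p * h₀ * (a i ^ q * h₁) = a i ^ (p + q) * (h₀ * h₁) := by
        rw [zpow_add]
        calc a i ^ p * h₀ * (a i ^ q * h₁) = a i ^ p * (h₀ * a i ^ q) * h₁ := by group
        _ = a i ^ p * (a i ^ q * h₀) * h₁ := by rw [hcz q h₀ hh₀]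
        _ = a i ^ p * a i ^ q * (h₀ * h₁) := by group
      rw [this, hlenZ i hfin p h₀ hh₀, hlenZ i hfin q h₁ hh₁,
        hlenZ i hfin (p+q) _ (mul_mem hh₀ hh₁)]
      omega
    · intro x hx hxH
      obtain ⟨p, h₀, hh₀, rfl⟩ := hdec x hx
      have hp : p ≠ 0 := by
        intro h0; rw [h0] at hxH; simp only [zpow_zero, one_mul] at hxH; exact hxH hh₀
      refine ⟨?_, ?_, ?_⟩
      · rw [hlenZ i hfin p h₀ hh₀]; omega
      · have : (a i ^ p * h₀)⁻¹ = a i ^ (-p) * h₀⁻¹ := by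
          rw [mul_inv_rev, ← zpow_neg, ← hcz (-p) h₀⁻¹ (inv_mem hh₀)]
        rw [this, hlenZ i hfin (-p) _ (inv_mem hh₀), hlenZ i hfin p h₀ hh₀]
        omega
      · intro h hh h' hh'
        have : h * (a i ^ p * h₀) * h' = a i ^ p * (h * h₀ * h') := by
          rw [← mul_assoc, hcz p h hh]; group
        rw [this, hlenZ i hfin p _ (mul_mem (mul_mem hh hh₀) hh'),
          hlenZ i hfin p h₀ hh₀]

lemma aux_push (G : I → Subgroup Γ) (H : Subgroup Γ) (a : I → Γ) (Ω : I → Set Γ) (len : Γ → ℕ)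
    (hHG : ∀ i, H ≤ G i)
    (hcase : ∀ i, (G i : Set Γ).Finite ∨
      (a i ∈ G i ∧ (∀ h ∈ H, a i * h = h * a i) ∧
       (∀ g ∈ G i, ∃ n : ℤ, ∃ h ∈ H, g = a i ^ n * h) ∧
       (∀ n : ℤ, a i ^ n ∈ H → n = 0)))
    (hΩrep : ∀ i, ∀ g ∈ G i, ∃! x, x ∈ Ω i ∧ x⁻¹ * g ∈ H)
    (hlenH : ∀ h ∈ H, len h = 0)
    (hlen1 : ∀ i, (G i : Set Γ).Finite → ∀ g ∈ G i, g ∉ H → len g = 1)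
    (hlenZ : ∀ i, ¬ (G i : Set Γ).Finite → ∀ n : ℤ, ∀ h ∈ H, len (a i ^ n * h) = n.natAbs) :
    ∀ (l : List (I × Γ)), (l.map Prod.fst).Chain' (· ≠ ·) →
      (∀ p ∈ l, p.2 ∈ G p.1 ∧ p.2 ∉ H) → ∀ h ∈ H,
      ∃ w h'', IsRWord Ω w ∧ h'' ∈ H ∧ w.map Prod.fst = l.map Prod.fst ∧
        (w.map (fun p => len p.2)).sum = (l.map (fun p => len p.2)).sum ∧
        h * (l.map Prod.snd).prod = wprod w * h'' := by
  intro l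
  induction l with
  | nil =>
    intro _ _ h hh
    exact ⟨[], h, ⟨by simp [IsRWord, List.Chain'], by simp⟩, hh, by simp, by simp, by simp [wprod]⟩
  | cons p t ih =>
    intro hchain hlet h hh
    obtain ⟨j, x⟩ := p
    obtain ⟨hx, hxH⟩ := hlet (j, x) (List.mem_cons_self)
    have hhx : h * x ∈ G j := mul_mem (hHG j hh) hx
    obtain ⟨g, ⟨hgΩ, hgh⟩, -⟩ := hΩrep j (h * x) hhx
    set h₁ : Γ := g⁻¹ * (h * x) with hh₁def
    have hh₁ : h₁ ∈ H := hgh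
    have hprod : h * x = g * h₁ := by rw [hh₁def]; group
    have hgne : g ≠ 1 := by
      intro hg1
      rw [hg1] at hprod
      rw [one_mul] at hprod
      apply hxH
      have : x = h⁻¹ * h₁ := by rw [← hprod]; group
      rw [this]; exact mul_mem (inv_mem hh) hh₁
    have hgG : g ∈ G j := by
      have : g = (h * x) * h₁⁻¹ := by rw [hprod]; group
      rw [this]; exact mul_mem hhx (inv_mem (hHG j hh₁))
    have hleng : len g = len x := by
      have hfac := (aux_factor G H a len hHG hcase hlenH hlen1 hlenZ j).2 x hx hxH
      have : g = h * x * h₁⁻¹ := by rw [hprod]; group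
      rw [this, hfac.2.2 h hh h₁⁻¹ (inv_mem hh₁)]
    obtain ⟨w', h'', hRw', hh'', hfst', hsum', hprod'⟩ :=
      ih (by simpa [List.Chain'] using hchain.tail) (fun q hq => hlet q (List.mem_cons_of_mem _ hq)) h₁ hh₁
    refine ⟨(j, g) :: w', h'', ⟨?_, ?_⟩, hh'', by simp [hfst'], by simp [hsum', hleng], ?_⟩
    · have : ((j, g) :: w').map Prod.fst = j :: t.map Prod.fst := by simp [hfst']
      rw [this]
      simpa using hchain
    · intro q hq
      rcases List.mem_cons.mp hq with rfl | hq'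
      · exact ⟨hgΩ, hgne⟩
      · exact hRw'.2 q hq'
    · have : ((j, g) :: w').map Prod.snd = g :: w'.map Prod.snd := by simp
      show h * ((x :: t.map Prod.snd).prod) = wprod ((j, g) :: w') * h''
      rw [List.prod_cons]
      calc h * (x * (t.map Prod.snd).prod) = (h * x) * (t.map Prod.snd).prod := by group
      _ = g * (h₁ * (t.map Prod.snd).prod) := by rw [hprod]; group
      _ = g * (wprod w' * h'') := by rw [hprod']
      _ = wprod ((j, g) :: w') * h'' := by simp [wprod]; group

lemma aux_lenC (G : I → Subgroup Γ) (H : Subgroup Γ) (a : I → Γ) (Ω : I → Set Γ) (len : Γ → ℕ)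
    (hHG : ∀ i, H ≤ G i)
    (hcase : ∀ i, (G i : Set Γ).Finite ∨
      (a i ∈ G i ∧ (∀ h ∈ H, a i * h = h * a i) ∧
       (∀ g ∈ G i, ∃ n : ℤ, ∃ h ∈ H, g = a i ^ n * h) ∧
       (∀ n : ℤ, a i ^ n ∈ H → n = 0)))
    (hΩrep : ∀ i, ∀ g ∈ G i, ∃! x, x ∈ Ω i ∧ x⁻¹ * g ∈ H)
    (hlenH : ∀ h ∈ H, len h = 0)
    (hlen1 : ∀ i, (G i : Set Γ).Finite → ∀ g ∈ G i, g ∉ H → len g = 1)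
    (hlenZ : ∀ i, ¬ (G i : Set Γ).Finite → ∀ n : ℤ, ∀ h ∈ H, len (a i ^ n * h) = n.natAbs)
    (hlenAdd : ∀ w : List (I × Γ), ∀ h ∈ H, IsRWord Ω w →
      len (wprod w * h) = (w.map (fun p => len p.2)).sum) :
    ∀ (l : List (I × Γ)), (l.map Prod.fst).Chain' (· ≠ ·) →
      (∀ p ∈ l, p.2 ∈ G p.1 ∧ p.2 ∉ H) → ∀ h ∈ H, ∀ h' ∈ H,
      len (h * (l.map Prod.snd).prod * h') = (l.map (fun p => len p.2)).sum := by
  intro l hchain hlet h hh h' hh'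
  obtain ⟨w, h'', hRw, hh'', hfst, hsum, hprod⟩ :=
    aux_push G H a Ω len hHG hcase hΩrep hlenH hlen1 hlenZ l hchain hlet h hh
  rw [← hsum]
  have : h * (l.map Prod.snd).prod * h' = wprod w * (h'' * h') := by rw [hprod]; group
  rw [this, hlenAdd w _ (mul_mem hh'' hh') hRw]
lemma aux_len_hmul
    (G : I → Subgroup Γ) (H : Subgroup Γ) (a : I → Γ) (Ω : I → Set Γ) (len : Γ → ℕ)
    (hHG : ∀ i, H ≤ G i)
    (hcase : ∀ i, (G i : Set Γ).Finite ∨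
      (a i ∈ G i ∧ (∀ h ∈ H, a i * h = h * a i) ∧
       (∀ g ∈ G i, ∃ n : ℤ, ∃ h ∈ H, g = a i ^ n * h) ∧
       (∀ n : ℤ, a i ^ n ∈ H → n = 0)))
    (hΩG : ∀ i, Ω i ⊆ (G i : Set Γ))
    (hΩ1 : ∀ i, (1 : Γ) ∈ Ω i)
    (hΩrep : ∀ i, ∀ g ∈ G i, ∃! x, x ∈ Ω i ∧ x⁻¹ * g ∈ H)
    (hΩa : ∀ i, ¬ (G i : Set Γ).Finite → Ω i = {g : Γ | ∃ n : ℤ, g = a i ^ n})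
    (hNF : ∀ γ : Γ, ∃! wh : List (I × Γ) × Γ,
      IsRWord Ω wh.1 ∧ wh.2 ∈ H ∧ γ = wprod wh.1 * wh.2)
    (hlenH : ∀ h ∈ H, len h = 0)
    (hlen1 : ∀ i, (G i : Set Γ).Finite → ∀ g ∈ G i, g ∉ H → len g = 1)
    (hlenZ : ∀ i, ¬ (G i : Set Γ).Finite → ∀ n : ℤ, ∀ h ∈ H, len (a i ^ n * h) = n.natAbs)
    (hlenAdd : ∀ w : List (I × Γ), ∀ h ∈ H, IsRWord Ω w →
      len (wprod w * h) = (w.map (fun p => len p.2)).sum) :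
    ∀ γ : Γ, ∀ h ∈ H, ∀ h' ∈ H, len (h * γ * h') = len γ := by
  intro γ h hh h' hh'
  obtain ⟨⟨w, h₀⟩, ⟨hRw, hh₀, hγ⟩, -⟩ := hNF γ
  have hlet := aux_letters G H Ω hΩG hΩ1 hΩrep hRw
  have h1 : len γ = (w.map (fun p => len p.2)).sum := by rw [hγ]; exact hlenAdd w h₀ hh₀ hRw
  have h2 : h * γ * h' = h * (w.map Prod.snd).prod * (h₀ * h') := by
    rw [hγ]; show h * (wprod w * h₀) * h' = _ ; rw [wprod]; group
  rw [h2, aux_lenC G H a Ω len hHG hcase hΩrep hlenH hlen1 hlenZ hlenAdd w hRw.1 hlet h hh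
    (h₀ * h') (mul_mem hh₀ hh'), h1]

lemma aux_len_inv
    (G : I → Subgroup Γ) (H : Subgroup Γ) (a : I → Γ) (Ω : I → Set Γ) (len : Γ → ℕ)
    (hHG : ∀ i, H ≤ G i)
    (hcase : ∀ i, (G i : Set Γ).Finite ∨
      (a i ∈ G i ∧ (∀ h ∈ H, a i * h = h * a i) ∧
       (∀ g ∈ G i, ∃ n : ℤ, ∃ h ∈ H, g = a i ^ n * h) ∧
       (∀ n : ℤ, a i ^ n ∈ H → n = 0)))
    (hΩG : ∀ i, Ω i ⊆ (G i : Set Γ))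
    (hΩ1 : ∀ i, (1 : Γ) ∈ Ω i)
    (hΩrep : ∀ i, ∀ g ∈ G i, ∃! x, x ∈ Ω i ∧ x⁻¹ * g ∈ H)
    (hΩa : ∀ i, ¬ (G i : Set Γ).Finite → Ω i = {g : Γ | ∃ n : ℤ, g = a i ^ n})
    (hNF : ∀ γ : Γ, ∃! wh : List (I × Γ) × Γ,
      IsRWord Ω wh.1 ∧ wh.2 ∈ H ∧ γ = wprod wh.1 * wh.2)
    (hlenH : ∀ h ∈ H, len h = 0)
    (hlen1 : ∀ i, (G i : Set Γ).Finite → ∀ g ∈ G i, g ∉ H → len g = 1)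
    (hlenZ : ∀ i, ¬ (G i : Set Γ).Finite → ∀ n : ℤ, ∀ h ∈ H, len (a i ^ n * h) = n.natAbs)
    (hlenAdd : ∀ w : List (I × Γ), ∀ h ∈ H, IsRWord Ω w →
      len (wprod w * h) = (w.map (fun p => len p.2)).sum) :
    ∀ γ : Γ, len γ⁻¹ = len γ := by
  intro γ
  obtain ⟨⟨w, h₀⟩, ⟨hRw, hh₀, hγ⟩, -⟩ := hNF γ
  have hlet := aux_letters G H Ω hΩG hΩ1 hΩrep hRw
  set l' : List (I × Γ) := (w.map (fun p => (p.1, p.2⁻¹))).reverse with hl'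
  have hfst : l'.map Prod.fst = (w.map Prod.fst).reverse := by
    simp [hl', List.map_reverse, List.map_map, Function.comp]
  have hchain' : (l'.map Prod.fst).Chain' (· ≠ ·) := by
    rw [hfst]
    exact List.isChain_reverse.mpr (hRw.1.imp fun _ _ h => Ne.symm h)
  have hlet' : ∀ p ∈ l', p.2 ∈ G p.1 ∧ p.2 ∉ H := by
    intro p hp
    rw [hl', List.mem_reverse, List.mem_map] at hp
    obtain ⟨q, hq, rfl⟩ := hp
    obtain ⟨hqG, hqH⟩ := hlet q hq
    exact ⟨inv_mem hqG, fun hc => hqH (by simpa using inv_mem hc)⟩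
  have hsum : (l'.map (fun p => len p.2)).sum = (w.map (fun p => len p.2)).sum := by
    have e1 : l'.map (fun p => len p.2) = (w.map (fun p => len p.2⁻¹)).reverse := by
      simp [hl', List.map_reverse, List.map_map, Function.comp]
    rw [e1, List.sum_reverse]
    refine congrArg _ (List.map_congr_left ?_)
    intro q hq
    obtain ⟨hqG, hqH⟩ := hlet q hq
    exact ((aux_factor G H a len hHG hcase hlenH hlen1 hlenZ q.1).2 q.2 hqG hqH).2.1
  have hprod : (l'.map Prod.snd).prod = ((w.map Prod.snd).prod)⁻¹ := by
    rw [List.prod_inv_reverse]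
    simp only [hl', List.map_reverse, List.map_map]
    rfl
  have h2 : γ⁻¹ = h₀⁻¹ * (l'.map Prod.snd).prod * 1 := by
    rw [hprod, hγ, wprod]; group
  rw [h2, aux_lenC G H a Ω len hHG hcase hΩrep hlenH hlen1 hlenZ hlenAdd l' hchain' hlet'
    h₀⁻¹ (inv_mem hh₀) 1 (one_mem H), hsum, hγ, hlenAdd w h₀ hh₀ hRw]
lemma aux_lenC'
    (G : I → Subgroup Γ) (H : Subgroup Γ) (a : I → Γ) (Ω : I → Set Γ) (len : Γ → ℕ)
    (hHG : ∀ i, H ≤ G i)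
    (hcase : ∀ i, (G i : Set Γ).Finite ∨
      (a i ∈ G i ∧ (∀ h ∈ H, a i * h = h * a i) ∧
       (∀ g ∈ G i, ∃ n : ℤ, ∃ h ∈ H, g = a i ^ n * h) ∧
       (∀ n : ℤ, a i ^ n ∈ H → n = 0)))
    (hΩG : ∀ i, Ω i ⊆ (G i : Set Γ))
    (hΩ1 : ∀ i, (1 : Γ) ∈ Ω i)
    (hΩrep : ∀ i, ∀ g ∈ G i, ∃! x, x ∈ Ω i ∧ x⁻¹ * g ∈ H)
    (hΩa : ∀ i, ¬ (G i : Set Γ).Finite → Ω i = {g : Γ | ∃ n : ℤ, g = a i ^ n})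
    (hNF : ∀ γ : Γ, ∃! wh : List (I × Γ) × Γ,
      IsRWord Ω wh.1 ∧ wh.2 ∈ H ∧ γ = wprod wh.1 * wh.2)
    (hlenH : ∀ h ∈ H, len h = 0)
    (hlen1 : ∀ i, (G i : Set Γ).Finite → ∀ g ∈ G i, g ∉ H → len g = 1)
    (hlenZ : ∀ i, ¬ (G i : Set Γ).Finite → ∀ n : ℤ, ∀ h ∈ H, len (a i ^ n * h) = n.natAbs)
    (hlenAdd : ∀ w : List (I × Γ), ∀ h ∈ H, IsRWord Ω w →
      len (wprod w * h) = (w.map (fun p => len p.2)).sum) :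
    ∀ (l : List (I × Γ)), (l.map Prod.fst).Chain' (· ≠ ·) →
      (∀ p ∈ l, p.2 ∈ G p.1 ∧ p.2 ∉ H) → ∀ h' ∈ H,
      len ((l.map Prod.snd).prod * h') = (l.map (fun p => len p.2)).sum := by
  intro l hc hl h' hh'
  have := aux_lenC G H a Ω len hHG hcase hΩrep hlenH hlen1 hlenZ hlenAdd l hc hl
    1 (one_mem H) h' hh'
  simpa using this

lemma aux_lenE
    (G : I → Subgroup Γ) (H : Subgroup Γ) (a : I → Γ) (Ω : I → Set Γ) (len : Γ → ℕ)
    (hHG : ∀ i, H ≤ G i)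
    (hcase : ∀ i, (G i : Set Γ).Finite ∨
      (a i ∈ G i ∧ (∀ h ∈ H, a i * h = h * a i) ∧
       (∀ g ∈ G i, ∃ n : ℤ, ∃ h ∈ H, g = a i ^ n * h) ∧
       (∀ n : ℤ, a i ^ n ∈ H → n = 0)))
    (hΩG : ∀ i, Ω i ⊆ (G i : Set Γ))
    (hΩ1 : ∀ i, (1 : Γ) ∈ Ω i)
    (hΩrep : ∀ i, ∀ g ∈ G i, ∃! x, x ∈ Ω i ∧ x⁻¹ * g ∈ H)
    (hΩa : ∀ i, ¬ (G i : Set Γ).Finite → Ω i = {g : Γ | ∃ n : ℤ, g = a i ^ n})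
    (hNF : ∀ γ : Γ, ∃! wh : List (I × Γ) × Γ,
      IsRWord Ω wh.1 ∧ wh.2 ∈ H ∧ γ = wprod wh.1 * wh.2)
    (hlenH : ∀ h ∈ H, len h = 0)
    (hlen1 : ∀ i, (G i : Set Γ).Finite → ∀ g ∈ G i, g ∉ H → len g = 1)
    (hlenZ : ∀ i, ¬ (G i : Set Γ).Finite → ∀ n : ℤ, ∀ h ∈ H, len (a i ^ n * h) = n.natAbs)
    (hlenAdd : ∀ w : List (I × Γ), ∀ h ∈ H, IsRWord Ω w →
      len (wprod w * h) = (w.map (fun p => len p.2)).sum) :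
    ∀ (α : Γ) (i : I), ∀ x ∈ G i, len (α * x) ≤ len α + len x := by
  intro α i x hx
  obtain ⟨⟨w, h₀⟩, ⟨hRw, hh₀, hα⟩, -⟩ := hNF α
  have hRw : IsRWord Ω w := hRw
  have hh₀ : h₀ ∈ H := hh₀
  have hα : α = wprod w * h₀ := hα
  have hlet := aux_letters G H Ω hΩG hΩ1 hΩrep hRw
  have hlenα : len α = (w.map (fun p => len p.2)).sum := by
    rw [hα]; exact hlenAdd w h₀ hh₀ hRw
  by_cases hxH : x ∈ H
  · have e : α * x = wprod w * (h₀ * x) := by rw [hα]; group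
    rw [e, hlenAdd w _ (mul_mem hh₀ hxH) hRw, ← hlenα]
    omega
  · have hfaci := aux_factor G H a len hHG hcase hlenH hlen1 hlenZ i
    have hz : h₀ * x ∈ G i := mul_mem (hHG i hh₀) hx
    have hzH : h₀ * x ∉ H := by
      intro hc
      refine hxH ?_
      have e : x = h₀⁻¹ * (h₀ * x) := by group
      rw [e]; exact mul_mem (inv_mem hh₀) hc
    have hlenz : len (h₀ * x) = len x := by
      have := (hfaci.2 x hx hxH).2.2 h₀ hh₀ 1 (one_mem H)
      simpa using this
    rcases List.eq_nil_or_concat w with rfl | ⟨w₀, p, rfl⟩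
    · have e : α * x = h₀ * x := by
        rw [hα]; simp [wprod]
      rw [e, hlenz, hlenα]
      simp
    · obtain ⟨j, g⟩ := p
      simp only [List.concat_eq_append] at hRw hα hlet hlenα
      have hgG : g ∈ G j := (hlet (j, g) (by simp)).1
      have hgH : g ∉ H := (hlet (j, g) (by simp)).2
      have hwprod : wprod (w₀ ++ [(j, g)]) = (w₀.map Prod.snd).prod * g := by
        simp [wprod]
      have hchain : (w₀.map Prod.fst ++ [j]).Chain' (· ≠ ·) := by
        have := hRw.1; simpa using this
      have hsplit := List.isChain_append.mp hchain
      have hsumw : ((w₀ ++ [(j, g)]).map (fun p => len p.2)).sum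
          = (w₀.map (fun p => len p.2)).sum + len g := by simp
      have hlet₀ : ∀ p ∈ w₀, p.2 ∈ G p.1 ∧ p.2 ∉ H := by
        intro q hq; exact hlet q (by simp [hq])
      by_cases hij : j = i
      · subst hij
        set y := g * (h₀ * x) with hy
        have hyG : y ∈ G j := mul_mem hgG hz
        by_cases hyH : y ∈ H
        · have e : α * x = (w₀.map Prod.snd).prod * y := by
            rw [hα, hwprod, hy]; group
          rw [e, aux_lenC' G H a Ω len hHG hcase hΩG hΩ1 hΩrep hΩa hNF hlenH hlen1 hlenZ
            hlenAdd w₀ hsplit.1 hlet₀ y hyH, hlenα, hsumw]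
          omega
        · have e : α * x = ((w₀ ++ [(j, y)]).map Prod.snd).prod * 1 := by
            rw [hα, hwprod, hy]; simp; group
          have hchain2 : (((w₀ ++ [(j, y)]).map Prod.fst)).Chain' (· ≠ ·) := by
            simpa using hchain
          have hlet2 : ∀ p ∈ w₀ ++ [(j, y)], p.2 ∈ G p.1 ∧ p.2 ∉ H := by
            intro q hq
            rcases List.mem_append.mp hq with hq' | hq'
            · exact hlet₀ q hq'
            · simp at hq'; subst hq'; exact ⟨hyG, hyH⟩
          rw [e, aux_lenC' G H a Ω len hHG hcase hΩG hΩ1 hΩrep hΩa hNF hlenH hlen1 hlenZ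
            hlenAdd _ hchain2 hlet2 1 (one_mem H), hlenα, hsumw]
          have hylen : len y ≤ len g + len x := by
            have := hfaci.1 g hgG (h₀ * x) hz
            rw [hlenz] at this
            exact this
          simp only [List.map_append, List.sum_append, List.map_cons, List.map_nil]
          simp
          omega
      · have e : α * x = (((w₀ ++ [(j, g)]) ++ [(i, h₀ * x)]).map Prod.snd).prod * 1 := by
          rw [hα, hwprod]; simp [wprod]; group
        have hchain2 : ((((w₀ ++ [(j, g)]) ++ [(i, h₀ * x)]).map Prod.fst)).Chain' (· ≠ ·) := by
          simp only [List.map_append]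
          refine List.isChain_append.mpr ⟨by simpa [List.Chain'] using hchain, by simp, ?_⟩
          intro u hu v hv
          simp only [List.map_append, List.map_cons, List.map_nil, List.getLast?_concat,
            List.head?_cons, Option.mem_def, Option.some.injEq] at hu hv
          subst hu; subst hv
          exact hij
        have hlet2 : ∀ p ∈ (w₀ ++ [(j, g)]) ++ [(i, h₀ * x)], p.2 ∈ G p.1 ∧ p.2 ∉ H := by
          intro q hq
          rcases List.mem_append.mp hq with hq' | hq'
          · exact hlet q hq'
          · simp at hq'; subst hq'; exact ⟨hz, hzH⟩
        rw [e, aux_lenC' G H a Ω len hHG hcase hΩG hΩ1 hΩrep hΩa hNF hlenH hlen1 hlenZ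
          hlenAdd _ hchain2 hlet2 1 (one_mem H), hlenα]
        simp [hlenz]
        try omega

lemma aux_sub
    (G : I → Subgroup Γ) (H : Subgroup Γ) (a : I → Γ) (Ω : I → Set Γ) (len : Γ → ℕ)
    (hHG : ∀ i, H ≤ G i)
    (hcase : ∀ i, (G i : Set Γ).Finite ∨
      (a i ∈ G i ∧ (∀ h ∈ H, a i * h = h * a i) ∧
       (∀ g ∈ G i, ∃ n : ℤ, ∃ h ∈ H, g = a i ^ n * h) ∧
       (∀ n : ℤ, a i ^ n ∈ H → n = 0)))
    (hΩG : ∀ i, Ω i ⊆ (G i : Set Γ))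
    (hΩ1 : ∀ i, (1 : Γ) ∈ Ω i)
    (hΩrep : ∀ i, ∀ g ∈ G i, ∃! x, x ∈ Ω i ∧ x⁻¹ * g ∈ H)
    (hΩa : ∀ i, ¬ (G i : Set Γ).Finite → Ω i = {g : Γ | ∃ n : ℤ, g = a i ^ n})
    (hNF : ∀ γ : Γ, ∃! wh : List (I × Γ) × Γ,
      IsRWord Ω wh.1 ∧ wh.2 ∈ H ∧ γ = wprod wh.1 * wh.2)
    (hlenH : ∀ h ∈ H, len h = 0)
    (hlen1 : ∀ i, (G i : Set Γ).Finite → ∀ g ∈ G i, g ∉ H → len g = 1)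
    (hlenZ : ∀ i, ¬ (G i : Set Γ).Finite → ∀ n : ℤ, ∀ h ∈ H, len (a i ^ n * h) = n.natAbs)
    (hlenAdd : ∀ w : List (I × Γ), ∀ h ∈ H, IsRWord Ω w →
      len (wprod w * h) = (w.map (fun p => len p.2)).sum) :
    ∀ α β : Γ, len (α * β) ≤ len α + len β := by
  have key : ∀ (l : List (I × Γ)), (∀ p ∈ l, p.2 ∈ G p.1) → ∀ α : Γ,
      len (α * (l.map Prod.snd).prod) ≤ len α + (l.map (fun p => len p.2)).sum := by
    intro l
    induction l with
    | nil => intro _ α; simp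
    | cons p t ih =>
      intro hl α
      have e : α * ((p :: t).map Prod.snd).prod = (α * p.2) * (t.map Prod.snd).prod := by
        simp [mul_assoc]
      rw [e]
      calc len ((α * p.2) * (t.map Prod.snd).prod)
          ≤ len (α * p.2) + (t.map (fun p => len p.2)).sum :=
            ih (fun q hq => hl q (List.mem_cons_of_mem _ hq)) (α * p.2)
        _ ≤ len α + len p.2 + (t.map (fun p => len p.2)).sum := by
            have := aux_lenE G H a Ω len hHG hcase hΩG hΩ1 hΩrep hΩa hNF hlenH hlen1 hlenZ
              hlenAdd α p.1 p.2 (hl p (List.mem_cons_self))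
            omega
        _ = len α + ((p :: t).map (fun p => len p.2)).sum := by simp; omega
  intro α β
  obtain ⟨⟨w, h₀⟩, ⟨hRw, hh₀, hβ⟩, -⟩ := hNF β
  have hRw : IsRWord Ω w := hRw
  have hh₀ : h₀ ∈ H := hh₀
  have hβ : β = wprod w * h₀ := hβ
  have hlet := aux_letters G H Ω hΩG hΩ1 hΩrep hRw
  have hlenβ : len β = (w.map (fun p => len p.2)).sum := by
    rw [hβ]; exact hlenAdd w h₀ hh₀ hRw
  have e : α * β = (α * (w.map Prod.snd).prod) * h₀ := by
    rw [hβ, wprod]; group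
  have e2 : len (α * β) = len (α * (w.map Prod.snd).prod) := by
    rw [e]
    have := aux_len_hmul G H a Ω len hHG hcase hΩG hΩ1 hΩrep hΩa hNF hlenH hlen1 hlenZ
      hlenAdd (α * (w.map Prod.snd).prod) 1 (one_mem H) h₀ hh₀
    simpa using this
  rw [e2, hlenβ]
  exact key w (fun q hq => (hlet q hq).1) α
lemma aux_rev (G : I → Subgroup Γ) (H : Subgroup Γ) (a : I → Γ) (len : Γ → ℕ)
    (hHG : ∀ i, H ≤ G i)
    (hcase : ∀ i, (G i : Set Γ).Finite ∨
      (a i ∈ G i ∧ (∀ h ∈ H, a i * h = h * a i) ∧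
       (∀ g ∈ G i, ∃ n : ℤ, ∃ h ∈ H, g = a i ^ n * h) ∧
       (∀ n : ℤ, a i ^ n ∈ H → n = 0)))
    (hlenH : ∀ h ∈ H, len h = 0)
    (hlen1 : ∀ i, (G i : Set Γ).Finite → ∀ g ∈ G i, g ∉ H → len g = 1)
    (hlenZ : ∀ i, ¬ (G i : Set Γ).Finite → ∀ n : ℤ, ∀ h ∈ H, len (a i ^ n * h) = n.natAbs)
    (l : List (I × Γ)) (hlet : ∀ p ∈ l, p.2 ∈ G p.1 ∧ p.2 ∉ H) :
    ((l.map (fun p => (p.1, p.2⁻¹))).reverse.map Prod.fst) = (l.map Prod.fst).reverse ∧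
    (((l.map (fun p => (p.1, p.2⁻¹))).reverse.map Prod.snd)).prod = ((l.map Prod.snd).prod)⁻¹ ∧
    ((l.map (fun p => (p.1, p.2⁻¹))).reverse.map (fun p => len p.2)).sum
      = (l.map (fun p => len p.2)).sum ∧
    (∀ p ∈ (l.map (fun p => (p.1, p.2⁻¹))).reverse, p.2 ∈ G p.1 ∧ p.2 ∉ H) := by
  refine ⟨?_, ?_, ?_, ?_⟩
  · simp [List.map_reverse, List.map_map, Function.comp]
  · rw [List.prod_inv_reverse]
    simp only [List.map_reverse, List.map_map]
    rfl
  · have e1 : (l.map (fun p => (p.1, p.2⁻¹))).reverse.map (fun p => len p.2)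
        = (l.map (fun p => len p.2⁻¹)).reverse := by
      simp [List.map_reverse, List.map_map, Function.comp]
    rw [e1, List.sum_reverse]
    refine congrArg _ (List.map_congr_left ?_)
    intro q hq
    obtain ⟨hqG, hqH⟩ := hlet q hq
    exact ((aux_factor G H a len hHG hcase hlenH hlen1 hlenZ q.1).2 q.2 hqG hqH).2.1
  · intro p hp
    rw [List.mem_reverse, List.mem_map] at hp
    obtain ⟨q, hq, rfl⟩ := hp
    obtain ⟨hqG, hqH⟩ := hlet q hq
    exact ⟨inv_mem hqG, fun hc => hqH (by simpa using inv_mem hc)⟩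

lemma aux_first
    (G : I → Subgroup Γ) (H : Subgroup Γ) (a : I → Γ) (Ω : I → Set Γ) (len : Γ → ℕ)
    (hHG : ∀ i, H ≤ G i)
    (hcase : ∀ i, (G i : Set Γ).Finite ∨
      (a i ∈ G i ∧ (∀ h ∈ H, a i * h = h * a i) ∧
       (∀ g ∈ G i, ∃ n : ℤ, ∃ h ∈ H, g = a i ^ n * h) ∧
       (∀ n : ℤ, a i ^ n ∈ H → n = 0)))
    (hΩG : ∀ i, Ω i ⊆ (G i : Set Γ))
    (hΩ1 : ∀ i, (1 : Γ) ∈ Ω i)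
    (hΩrep : ∀ i, ∀ g ∈ G i, ∃! x, x ∈ Ω i ∧ x⁻¹ * g ∈ H)
    (hΩa : ∀ i, ¬ (G i : Set Γ).Finite → Ω i = {g : Γ | ∃ n : ℤ, g = a i ^ n})
    (hNF : ∀ γ : Γ, ∃! wh : List (I × Γ) × Γ,
      IsRWord Ω wh.1 ∧ wh.2 ∈ H ∧ γ = wprod wh.1 * wh.2)
    (hlenH : ∀ h ∈ H, len h = 0)
    (hlen1 : ∀ i, (G i : Set Γ).Finite → ∀ g ∈ G i, g ∉ H → len g = 1)
    (hlenZ : ∀ i, ¬ (G i : Set Γ).Finite → ∀ n : ℤ, ∀ h ∈ H, len (a i ^ n * h) = n.natAbs)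
    (hlenAdd : ∀ w : List (I × Γ), ∀ h ∈ H, IsRWord Ω w →
      len (wprod w * h) = (w.map (fun p => len p.2)).sum) :
    ∀ u : Γ, u ∉ H → ∃ (i : I) (g : Γ) (t : List (I × Γ)) (h0 : Γ),
      h0 ∈ H ∧ IsRWord Ω ((i, g) :: t) ∧ u = wprod ((i, g) :: t) * h0 ∧
      g ∈ Ω i ∧ g ∈ G i ∧ g ∉ H ∧ 1 ≤ len g ∧
      len u = len g + len (g⁻¹ * u) ∧ g⁻¹ * u = wprod t * h0 := by
  intro u huH
  obtain ⟨⟨w, h0⟩, ⟨hRw, hh0, hueq⟩, -⟩ := hNF u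
  have hRw : IsRWord Ω w := hRw
  have hh0 : h0 ∈ H := hh0
  have hueq : u = wprod w * h0 := hueq
  cases w with
  | nil =>
    exfalso
    apply huH
    rw [hueq]
    simpa [wprod] using hh0
  | cons p t =>
    obtain ⟨i, g⟩ := p
    have hgΩ : g ∈ Ω i := (hRw.2 (i, g) (List.mem_cons_self)).1
    have hgne : g ≠ 1 := (hRw.2 (i, g) (List.mem_cons_self)).2
    have hgG : g ∈ G i := hΩG i hgΩ
    have hgH : g ∉ H := fun hc => hgne (aux_omega_one G H Ω hΩG hΩ1 hΩrep hgΩ hc)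
    have hRt : IsRWord Ω t := ⟨by simpa [List.Chain'] using hRw.1.tail, fun q hq => hRw.2 q (List.mem_cons_of_mem _ hq)⟩
    have hstrip : g⁻¹ * u = wprod t * h0 := by
      rw [hueq, wprod, List.map_cons, List.prod_cons, wprod]; group
    have hlen1g : 1 ≤ len g :=
      ((aux_factor G H a len hHG hcase hlenH hlen1 hlenZ i).2 g hgG hgH).1
    refine ⟨i, g, t, h0, hh0, hRw, hueq, hgΩ, hgG, hgH, hlen1g, ?_, hstrip⟩
    have e2 : len (g⁻¹ * u) = (t.map (fun p => len p.2)).sum := by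
      rw [hstrip, hlenAdd _ h0 hh0 hRt]
    have e1 : len u = (((i, g) :: t).map (fun p => len p.2)).sum := by
      rw [hueq]; exact hlenAdd _ h0 hh0 hRw
    rw [e1, e2]; simp

lemma aux_N2
    (G : I → Subgroup Γ) (H : Subgroup Γ) (a : I → Γ) (Ω : I → Set Γ) (len : Γ → ℕ)
    (hHG : ∀ i, H ≤ G i)
    (hcase : ∀ i, (G i : Set Γ).Finite ∨
      (a i ∈ G i ∧ (∀ h ∈ H, a i * h = h * a i) ∧
       (∀ g ∈ G i, ∃ n : ℤ, ∃ h ∈ H, g = a i ^ n * h) ∧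
       (∀ n : ℤ, a i ^ n ∈ H → n = 0)))
    (hΩG : ∀ i, Ω i ⊆ (G i : Set Γ))
    (hΩ1 : ∀ i, (1 : Γ) ∈ Ω i)
    (hΩrep : ∀ i, ∀ g ∈ G i, ∃! x, x ∈ Ω i ∧ x⁻¹ * g ∈ H)
    (hΩa : ∀ i, ¬ (G i : Set Γ).Finite → Ω i = {g : Γ | ∃ n : ℤ, g = a i ^ n})
    (hNF : ∀ γ : Γ, ∃! wh : List (I × Γ) × Γ,
      IsRWord Ω wh.1 ∧ wh.2 ∈ H ∧ γ = wprod wh.1 * wh.2)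
    (hlenH : ∀ h ∈ H, len h = 0)
    (hlen1 : ∀ i, (G i : Set Γ).Finite → ∀ g ∈ G i, g ∉ H → len g = 1)
    (hlenZ : ∀ i, ¬ (G i : Set Γ).Finite → ∀ n : ℤ, ∀ h ∈ H, len (a i ^ n * h) = n.natAbs)
    (hlenAdd : ∀ w : List (I × Γ), ∀ h ∈ H, IsRWord Ω w →
      len (wprod w * h) = (w.map (fun p => len p.2)).sum) :
    ∀ (u v : Γ) (iu : I) (gu : Γ) (tu : List (I × Γ)) (hu0 : Γ)
      (iv : I) (gv : Γ) (tv : List (I × Γ)) (hv0 : Γ),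
      hu0 ∈ H → hv0 ∈ H → IsRWord Ω ((iu, gu) :: tu) → IsRWord Ω ((iv, gv) :: tv) →
      u = wprod ((iu, gu) :: tu) * hu0 → v = wprod ((iv, gv) :: tv) * hv0 → iu ≠ iv →
      len (u⁻¹ * v) = len u + len v := by
  intro u v iu gu tu hu0 iv gv tv hv0 hhu0 hhv0 hRu hRv hueq hveq hne
  have hletu := aux_letters G H Ω hΩG hΩ1 hΩrep hRu
  have hletv := aux_letters G H Ω hΩG hΩ1 hΩrep hRv
  set wu : List (I × Γ) := (iu, gu) :: tu with hwu
  set wv : List (I × Γ) := (iv, gv) :: tv with hwv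
  obtain ⟨hrf, hrp, hrs, hrl⟩ := aux_rev G H a len hHG hcase hlenH hlen1 hlenZ wu hletu
  set L : List (I × Γ) := (wu.map (fun p => (p.1, p.2⁻¹))).reverse ++ wv with hL
  have hchain : (L.map Prod.fst).Chain' (· ≠ ·) := by
    rw [hL, List.map_append, hrf]
    refine List.isChain_append.mpr ⟨List.isChain_reverse.mpr (hRu.1.imp fun _ _ h => Ne.symm h),
      hRv.1, ?_⟩
    intro p hp q hq
    rw [List.getLast?_reverse] at hp
    rw [hwu] at hp
    simp at hp
    rw [hwv] at hq
    simp at hq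
    rw [← hp, ← hq]
    exact hne
  have hletL : ∀ p ∈ L, p.2 ∈ G p.1 ∧ p.2 ∉ H := by
    intro p hp
    rcases List.mem_append.mp hp with h' | h'
    · exact hrl p h'
    · exact hletv p h'
  have halg : u⁻¹ * v = hu0⁻¹ * (L.map Prod.snd).prod * hv0 := by
    rw [hL, List.map_append, List.prod_append, hrp, hueq, hveq, wprod, wprod]
    group
  rw [halg, aux_lenC G H a Ω len hHG hcase hΩrep hlenH hlen1 hlenZ hlenAdd L hchain hletL
    hu0⁻¹ (inv_mem hhu0) hv0 hhv0, hL, List.map_append, List.sum_append, hrs,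
    hueq, hveq, hlenAdd _ hu0 hhu0 hRu, hlenAdd _ hv0 hhv0 hRv]

lemma aux_N3
    (G : I → Subgroup Γ) (H : Subgroup Γ) (a : I → Γ) (Ω : I → Set Γ) (len : Γ → ℕ)
    (hHG : ∀ i, H ≤ G i)
    (hcase : ∀ i, (G i : Set Γ).Finite ∨
      (a i ∈ G i ∧ (∀ h ∈ H, a i * h = h * a i) ∧
       (∀ g ∈ G i, ∃ n : ℤ, ∃ h ∈ H, g = a i ^ n * h) ∧
       (∀ n : ℤ, a i ^ n ∈ H → n = 0)))
    (hΩG : ∀ i, Ω i ⊆ (G i : Set Γ))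
    (hΩ1 : ∀ i, (1 : Γ) ∈ Ω i)
    (hΩrep : ∀ i, ∀ g ∈ G i, ∃! x, x ∈ Ω i ∧ x⁻¹ * g ∈ H)
    (hΩa : ∀ i, ¬ (G i : Set Γ).Finite → Ω i = {g : Γ | ∃ n : ℤ, g = a i ^ n})
    (hNF : ∀ γ : Γ, ∃! wh : List (I × Γ) × Γ,
      IsRWord Ω wh.1 ∧ wh.2 ∈ H ∧ γ = wprod wh.1 * wh.2)
    (hlenH : ∀ h ∈ H, len h = 0)
    (hlen1 : ∀ i, (G i : Set Γ).Finite → ∀ g ∈ G i, g ∉ H → len g = 1)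
    (hlenZ : ∀ i, ¬ (G i : Set Γ).Finite → ∀ n : ℤ, ∀ h ∈ H, len (a i ^ n * h) = n.natAbs)
    (hlenAdd : ∀ w : List (I × Γ), ∀ h ∈ H, IsRWord Ω w →
      len (wprod w * h) = (w.map (fun p => len p.2)).sum) :
    ∀ (u v : Γ) (i : I) (gu : Γ) (tu : List (I × Γ)) (hu0 : Γ)
      (gv : Γ) (tv : List (I × Γ)) (hv0 : Γ),
      hu0 ∈ H → hv0 ∈ H → IsRWord Ω ((i, gu) :: tu) → IsRWord Ω ((i, gv) :: tv) →
      u = wprod ((i, gu) :: tu) * hu0 → v = wprod ((i, gv) :: tv) * hv0 →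
      gu⁻¹ * gv ∉ H →
      len (u⁻¹ * v) + len gu + len gv = len u + len v + len (gu⁻¹ * gv) := by
  intro u v i gu tu hu0 gv tv hv0 hhu0 hhv0 hRu hRv hueq hveq hne
  have hletu := aux_letters G H Ω hΩG hΩ1 hΩrep hRu
  have hletv := aux_letters G H Ω hΩG hΩ1 hΩrep hRv
  have hRtu : IsRWord Ω tu := ⟨by simpa [List.Chain'] using hRu.1.tail, fun q hq => hRu.2 q (List.mem_cons_of_mem _ hq)⟩
  have hRtv : IsRWord Ω tv := ⟨by simpa [List.Chain'] using hRv.1.tail, fun q hq => hRv.2 q (List.mem_cons_of_mem _ hq)⟩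
  have hlettu : ∀ p ∈ tu, p.2 ∈ G p.1 ∧ p.2 ∉ H := fun q hq => hletu q (List.mem_cons_of_mem _ hq)
  have hlettv : ∀ p ∈ tv, p.2 ∈ G p.1 ∧ p.2 ∉ H := fun q hq => hletv q (List.mem_cons_of_mem _ hq)
  have hguG : gu ∈ G i := (hletu (i, gu) (List.mem_cons_self)).1
  have hgvG : gv ∈ G i := (hletv (i, gv) (List.mem_cons_self)).1
  obtain ⟨hrf, hrp, hrs, hrl⟩ := aux_rev G H a len hHG hcase hlenH hlen1 hlenZ tu hlettu
  set L : List (I × Γ) := (tu.map (fun p => (p.1, p.2⁻¹))).reverse ++ ((i, gu⁻¹ * gv) :: tv)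
    with hL
  have hchain : (L.map Prod.fst).Chain' (· ≠ ·) := by
    rw [hL, List.map_append, hrf]
    refine List.isChain_append.mpr ⟨List.isChain_reverse.mpr (hRtu.1.imp fun _ _ h => Ne.symm h),
      ?_, ?_⟩
    · have := hRv.1
      simpa [List.Chain'] using this
    · intro p hp q hq
      rw [List.getLast?_reverse] at hp
      simp at hq
      have := hRu.1
      rw [List.map_cons] at this
      have h2 := (List.isChain_cons.mp this).1
      rw [← hq]
      exact fun hc => (h2 p hp) hc.symm
  have hletL : ∀ p ∈ L, p.2 ∈ G p.1 ∧ p.2 ∉ H := by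
    intro p hp
    rcases List.mem_append.mp hp with h' | h'
    · exact hrl p h'
    · rcases List.mem_cons.mp h' with rfl | h''
      · exact ⟨mul_mem (inv_mem hguG) hgvG, hne⟩
      · exact hlettv p h''
  have halg : u⁻¹ * v = hu0⁻¹ * (L.map Prod.snd).prod * hv0 := by
    rw [hL, List.map_append, List.prod_append, hrp, List.map_cons, List.prod_cons,
      hueq, hveq, wprod, wprod, List.map_cons, List.prod_cons, List.map_cons, List.prod_cons]
    group
  rw [halg, aux_lenC G H a Ω len hHG hcase hΩrep hlenH hlen1 hlenZ hlenAdd L hchain hletL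
    hu0⁻¹ (inv_mem hhu0) hv0 hhv0, hL, List.map_append, List.sum_append, hrs,
    hueq, hveq, hlenAdd _ hu0 hhu0 hRu, hlenAdd _ hv0 hhv0 hRv]
  simp
  omega

lemma aux_Q
    (G : I → Subgroup Γ) (H : Subgroup Γ) (a : I → Γ) (Ω : I → Set Γ) (len : Γ → ℕ)
    (hHG : ∀ i, H ≤ G i)
    (hcase : ∀ i, (G i : Set Γ).Finite ∨
      (a i ∈ G i ∧ (∀ h ∈ H, a i * h = h * a i) ∧
       (∀ g ∈ G i, ∃ n : ℤ, ∃ h ∈ H, g = a i ^ n * h) ∧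
       (∀ n : ℤ, a i ^ n ∈ H → n = 0)))
    (hΩG : ∀ i, Ω i ⊆ (G i : Set Γ))
    (hΩ1 : ∀ i, (1 : Γ) ∈ Ω i)
    (hΩrep : ∀ i, ∀ g ∈ G i, ∃! x, x ∈ Ω i ∧ x⁻¹ * g ∈ H)
    (hΩa : ∀ i, ¬ (G i : Set Γ).Finite → Ω i = {g : Γ | ∃ n : ℤ, g = a i ^ n})
    (hNF : ∀ γ : Γ, ∃! wh : List (I × Γ) × Γ,
      IsRWord Ω wh.1 ∧ wh.2 ∈ H ∧ γ = wprod wh.1 * wh.2)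
    (hlenH : ∀ h ∈ H, len h = 0)
    (hlen1 : ∀ i, (G i : Set Γ).Finite → ∀ g ∈ G i, g ∉ H → len g = 1)
    (hlenZ : ∀ i, ¬ (G i : Set Γ).Finite → ∀ n : ℤ, ∀ h ∈ H, len (a i ^ n * h) = n.natAbs)
    (hlenAdd : ∀ w : List (I × Γ), ∀ h ∈ H, IsRWord Ω w →
      len (wprod w * h) = (w.map (fun p => len p.2)).sum) :
    ∀ (i : I) (g k m : Γ), g ∈ Ω i → k ∈ Ω i → m ∈ Ω i → g ≠ 1 → k ≠ 1 → m ≠ 1 →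
      g ≠ k → g ≠ m → k ≠ m →
      min ((len g : ℤ) + len m - len (g⁻¹ * m)) ((len k : ℤ) + len m - len (k⁻¹ * m)) ≤
        (len g : ℤ) + len k - len (g⁻¹ * k) := by
  intro i g k m hgΩ hkΩ hmΩ hg1 hk1 hm1 hgk hgm hkm
  have hnH : ∀ p q : Γ, p ∈ Ω i → q ∈ Ω i → p ≠ q → p⁻¹ * q ∉ H := by
    intro p q hp hq hpq hc
    exact hpq (aux_rep_eq G H Ω hΩG hΩrep hp hq hc)
  by_cases hfin : (G i : Set Γ).Finite
  · have hlen : ∀ p q : Γ, p ∈ Ω i → q ∈ Ω i → p ≠ q → len (p⁻¹ * q) = 1 := by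
      intro p q hp hq hpq
      exact hlen1 i hfin _ (mul_mem (inv_mem (hΩG i hp)) (hΩG i hq)) (hnH p q hp hq hpq)
    have hlg : len g = 1 := hlen1 i hfin g (hΩG i hgΩ)
      (fun hc => hg1 (aux_omega_one G H Ω hΩG hΩ1 hΩrep hgΩ hc))
    have hlk : len k = 1 := hlen1 i hfin k (hΩG i hkΩ)
      (fun hc => hk1 (aux_omega_one G H Ω hΩG hΩ1 hΩrep hkΩ hc))
    have hlm : len m = 1 := hlen1 i hfin m (hΩG i hmΩ)
      (fun hc => hm1 (aux_omega_one G H Ω hΩG hΩ1 hΩrep hmΩ hc))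
    rw [hlg, hlk, hlm, hlen g k hgΩ hkΩ hgk, hlen g m hgΩ hmΩ hgm, hlen k m hkΩ hmΩ hkm]
    simp
  · have hΩa' := hΩa i hfin
    rw [hΩa'] at hgΩ hkΩ hmΩ
    obtain ⟨p, rfl⟩ := hgΩ
    obtain ⟨q, rfl⟩ := hkΩ
    obtain ⟨r, rfl⟩ := hmΩ
    have hlz : ∀ n : ℤ, len (a i ^ n) = n.natAbs := by
      intro n
      simpa using hlenZ i hfin n 1 (one_mem H)
    have hd : ∀ n n' : ℤ, (a i ^ n)⁻¹ * a i ^ n' = a i ^ (n' - n) := by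
      intro n n'
      rw [← zpow_neg, ← zpow_add]
      ring_nf
    rw [hd, hd, hd, hlz, hlz, hlz, hlz, hlz, hlz]
    rcases le_total ((p.natAbs : ℤ) + r.natAbs - (r - p).natAbs)
      ((q.natAbs : ℤ) + r.natAbs - (r - q).natAbs) with hle | hle
    · rw [min_eq_left hle]; omega
    · rw [min_eq_right hle]; omega
end Aux

/-- The doubled Gromov product for the auxiliary length function. -/
noncomputable def auxA {Γ : Type*} [Group Γ] (len : Γ → ℕ) (u v : Γ) : ℤ :=
  (len u : ℤ) + len v - len (u⁻¹ * v)

section Aux2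
variable {I Γ : Type*} [Group Γ]

lemma aux_Apair
    (G : I → Subgroup Γ) (H : Subgroup Γ) (a : I → Γ) (Ω : I → Set Γ) (len : Γ → ℕ)
    (hHG : ∀ i, H ≤ G i)
    (hcase : ∀ i, (G i : Set Γ).Finite ∨
      (a i ∈ G i ∧ (∀ h ∈ H, a i * h = h * a i) ∧
       (∀ g ∈ G i, ∃ n : ℤ, ∃ h ∈ H, g = a i ^ n * h) ∧
       (∀ n : ℤ, a i ^ n ∈ H → n = 0)))
    (hΩG : ∀ i, Ω i ⊆ (G i : Set Γ))
    (hΩ1 : ∀ i, (1 : Γ) ∈ Ω i)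
    (hΩrep : ∀ i, ∀ g ∈ G i, ∃! x, x ∈ Ω i ∧ x⁻¹ * g ∈ H)
    (hΩa : ∀ i, ¬ (G i : Set Γ).Finite → Ω i = {g : Γ | ∃ n : ℤ, g = a i ^ n})
    (hNF : ∀ γ : Γ, ∃! wh : List (I × Γ) × Γ,
      IsRWord Ω wh.1 ∧ wh.2 ∈ H ∧ γ = wprod wh.1 * wh.2)
    (hlenH : ∀ h ∈ H, len h = 0)
    (hlen1 : ∀ i, (G i : Set Γ).Finite → ∀ g ∈ G i, g ∉ H → len g = 1)
    (hlenZ : ∀ i, ¬ (G i : Set Γ).Finite → ∀ n : ℤ, ∀ h ∈ H, len (a i ^ n * h) = n.natAbs)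
    (hlenAdd : ∀ w : List (I × Γ), ∀ h ∈ H, IsRWord Ω w →
      len (wprod w * h) = (w.map (fun p => len p.2)).sum) :
    ∀ (u v : Γ) (iu : I) (gu : Γ) (tu : List (I × Γ)) (hu0 : Γ)
      (iv : I) (gv : Γ) (tv : List (I × Γ)) (hv0 : Γ),
      hu0 ∈ H → hv0 ∈ H → IsRWord Ω ((iu, gu) :: tu) → IsRWord Ω ((iv, gv) :: tv) →
      u = wprod ((iu, gu) :: tu) * hu0 → v = wprod ((iv, gv) :: tv) * hv0 →
      (iu ≠ iv → auxA len u v = 0) ∧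
      (iu = iv → gu ≠ gv → auxA len u v = (len gu : ℤ) + len gv - len (gu⁻¹ * gv)) := by
  intro u v iu gu tu hu0 iv gv tv hv0 hhu0 hhv0 hRu hRv hueq hveq
  constructor
  · intro hne
    have := aux_N2 G H a Ω len hHG hcase hΩG hΩ1 hΩrep hΩa hNF hlenH hlen1 hlenZ hlenAdd
      u v iu gu tu hu0 iv gv tv hv0 hhu0 hhv0 hRu hRv hueq hveq hne
    simp only [auxA]
    omega
  · intro heq hne
    subst heq
    have hguΩ : gu ∈ Ω iu := (hRu.2 (iu, gu) (List.mem_cons_self)).1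
    have hgvΩ : gv ∈ Ω iu := (hRv.2 (iu, gv) (List.mem_cons_self)).1
    have hnH : gu⁻¹ * gv ∉ H := fun hc => hne (aux_rep_eq G H Ω hΩG hΩrep hguΩ hgvΩ hc)
    have := aux_N3 G H a Ω len hHG hcase hΩG hΩ1 hΩrep hΩa hNF hlenH hlen1 hlenZ hlenAdd
      u v iu gu tu hu0 gv tv hv0 hhu0 hhv0 hRu hRv hueq hveq hnH
    simp only [auxA]
    omega

lemma aux_main
    (G : I → Subgroup Γ) (H : Subgroup Γ) (a : I → Γ) (Ω : I → Set Γ) (len : Γ → ℕ)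
    (hHG : ∀ i, H ≤ G i)
    (hcase : ∀ i, (G i : Set Γ).Finite ∨
      (a i ∈ G i ∧ (∀ h ∈ H, a i * h = h * a i) ∧
       (∀ g ∈ G i, ∃ n : ℤ, ∃ h ∈ H, g = a i ^ n * h) ∧
       (∀ n : ℤ, a i ^ n ∈ H → n = 0)))
    (hΩG : ∀ i, Ω i ⊆ (G i : Set Γ))
    (hΩ1 : ∀ i, (1 : Γ) ∈ Ω i)
    (hΩrep : ∀ i, ∀ g ∈ G i, ∃! x, x ∈ Ω i ∧ x⁻¹ * g ∈ H)
    (hΩa : ∀ i, ¬ (G i : Set Γ).Finite → Ω i = {g : Γ | ∃ n : ℤ, g = a i ^ n})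
    (hNF : ∀ γ : Γ, ∃! wh : List (I × Γ) × Γ,
      IsRWord Ω wh.1 ∧ wh.2 ∈ H ∧ γ = wprod wh.1 * wh.2)
    (hlenH : ∀ h ∈ H, len h = 0)
    (hlen1 : ∀ i, (G i : Set Γ).Finite → ∀ g ∈ G i, g ∉ H → len g = 1)
    (hlenZ : ∀ i, ¬ (G i : Set Γ).Finite → ∀ n : ℤ, ∀ h ∈ H, len (a i ^ n * h) = n.natAbs)
    (hlenAdd : ∀ w : List (I × Γ), ∀ h ∈ H, IsRWord Ω w →
      len (wprod w * h) = (w.map (fun p => len p.2)).sum) :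
    ∀ x y z : Γ, min (auxA len x z) (auxA len y z) ≤ auxA len x y := by
  have hsub' := aux_sub G H a Ω len hHG hcase hΩG hΩ1 hΩrep hΩa hNF hlenH hlen1 hlenZ hlenAdd
  have hinv' := aux_len_inv G H a Ω len hHG hcase hΩG hΩ1 hΩrep hΩa hNF hlenH hlen1 hlenZ hlenAdd
  have hhmul := aux_len_hmul G H a Ω len hHG hcase hΩG hΩ1 hΩrep hΩa hNF hlenH hlen1 hlenZ hlenAdd
  have hApos : ∀ u v : Γ, 0 ≤ auxA len u v := by
    intro u v
    have h1 : len (u⁻¹ * v) ≤ len u⁻¹ + len v := hsub' u⁻¹ v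
    rw [hinv' u] at h1
    simp only [auxA]
    omega
  have hAsymm : ∀ u v : Γ, auxA len u v = auxA len v u := by
    intro u v
    have e : len (u⁻¹ * v) = len (v⁻¹ * u) := by
      rw [← hinv' (u⁻¹ * v)]
      simp [mul_inv_rev]
    simp only [auxA]
    omega
  have hAH : ∀ u v : Γ, u ∈ H → auxA len u v = 0 := by
    intro u v hu
    have h1 : len u = 0 := hlenH u hu
    have h2 : len (u⁻¹ * v) = len v := by
      have := hhmul v u⁻¹ (inv_mem hu) 1 (one_mem H)
      simpa using this
    simp only [auxA]
    omega
  have hQsymm : ∀ (gu gv : Γ),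
      (len gu : ℤ) + len gv - len (gu⁻¹ * gv) = (len gv : ℤ) + len gu - len (gv⁻¹ * gu) := by
    intro gu gv
    have e : len (gu⁻¹ * gv) = len (gv⁻¹ * gu) := by
      rw [← hinv' (gu⁻¹ * gv)]
      simp [mul_inv_rev]
    omega
  suffices key : ∀ N, ∀ x y z : Γ, len x + len y + len z < N →
      min (auxA len x z) (auxA len y z) ≤ auxA len x y by
    intro x y z
    exact key (len x + len y + len z + 1) x y z (by omega)
  intro N
  induction N with
  | zero => intro x y z h; omega
  | succ n ih =>
    intro x y z hN
    by_cases hxH : x ∈ H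
    · rw [hAH x y hxH]
      calc min (auxA len x z) (auxA len y z) ≤ auxA len x z := min_le_left _ _
        _ = 0 := hAH x z hxH
    by_cases hyH : y ∈ H
    · rw [hAsymm x y, hAH y x hyH]
      calc min (auxA len x z) (auxA len y z) ≤ auxA len y z := min_le_right _ _
        _ = 0 := hAH y z hyH
    by_cases hzH : z ∈ H
    · calc min (auxA len x z) (auxA len y z) ≤ auxA len x z := min_le_left _ _
        _ = 0 := by rw [hAsymm]; exact hAH z x hzH
        _ ≤ auxA len x y := hApos x y
    obtain ⟨ix, gx, tx, hx0, hhx0, hRx, hxeq, hgxΩ, hgxG, hgxH, hgx1, hlenx, hxstrip⟩ :=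
      aux_first G H a Ω len hHG hcase hΩG hΩ1 hΩrep hΩa hNF hlenH hlen1 hlenZ hlenAdd x hxH
    obtain ⟨iy, gy, ty, hy0, hhy0, hRy, hyeq, hgyΩ, hgyG, hgyH, hgy1, hleny, hystrip⟩ :=
      aux_first G H a Ω len hHG hcase hΩG hΩ1 hΩrep hΩa hNF hlenH hlen1 hlenZ hlenAdd y hyH
    obtain ⟨iz, gz, tz, hz0, hhz0, hRz, hzeq, hgzΩ, hgzG, hgzH, hgz1, hlenz, hzstrip⟩ :=
      aux_first G H a Ω len hHG hcase hΩG hΩ1 hΩrep hΩa hNF hlenH hlen1 hlenZ hlenAdd z hzH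
    have hPxy := aux_Apair G H a Ω len hHG hcase hΩG hΩ1 hΩrep hΩa hNF hlenH hlen1 hlenZ hlenAdd
      x y ix gx tx hx0 iy gy ty hy0 hhx0 hhy0 hRx hRy hxeq hyeq
    have hPxz := aux_Apair G H a Ω len hHG hcase hΩG hΩ1 hΩrep hΩa hNF hlenH hlen1 hlenZ hlenAdd
      x z ix gx tx hx0 iz gz tz hz0 hhx0 hhz0 hRx hRz hxeq hzeq
    have hPyz := aux_Apair G H a Ω len hHG hcase hΩG hΩ1 hΩrep hΩa hNF hlenH hlen1 hlenZ hlenAdd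
      y z iy gy ty hy0 iz gz tz hz0 hhy0 hhz0 hRy hRz hyeq hzeq
    -- a helper: stripping a common first letter
    have hstripA : ∀ u v : Γ, ∀ g : Γ,
        len u = len g + len (g⁻¹ * u) → len v = len g + len (g⁻¹ * v) →
        auxA len u v = 2 * (len g : ℤ) + auxA len (g⁻¹ * u) (g⁻¹ * v) := by
      intro u v g hu hv
      have e : (g⁻¹ * u)⁻¹ * (g⁻¹ * v) = u⁻¹ * v := by group
      simp only [auxA, e]
      omega
    by_cases hpxy : (ix, gx) = ((iy, gy) : I × Γ)
    · have hixy : ix = iy := congrArg Prod.fst hpxy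
      have hgxy : gx = gy := congrArg Prod.snd hpxy
      by_cases hpxz : (ix, gx) = ((iz, gz) : I × Γ)
      · -- strip a common letter from all three
        have hixz : ix = iz := congrArg Prod.fst hpxz
        have hgxz : gx = gz := congrArg Prod.snd hpxz
        rw [← hgxy] at hleny
        rw [← hgxz] at hlenz
        have e1 := hstripA x y gx hlenx hleny
        have e2 := hstripA x z gx hlenx hlenz
        have e3 := hstripA y z gx hleny hlenz
        have hb : len (gx⁻¹ * x) + len (gx⁻¹ * y) + len (gx⁻¹ * z) < n := by omega
        have hrec := ih (gx⁻¹ * x) (gx⁻¹ * y) (gx⁻¹ * z) hb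
        rw [e1, e2, e3]
        rcases le_total (auxA len (gx⁻¹ * x) (gx⁻¹ * z)) (auxA len (gx⁻¹ * y) (gx⁻¹ * z))
          with hle | hle
        · rw [min_eq_left hle] at hrec
          rw [min_eq_left (by omega)]
          omega
        · rw [min_eq_right hle] at hrec
          rw [min_eq_right (by omega)]
          omega
      · -- x and y share the first letter, z does not
        rw [← hgxy] at hleny
        have e1 := hstripA x y gx hlenx hleny
        have hxy_ge : 2 * (len gx : ℤ) ≤ auxA len x y := by
          have := hApos (gx⁻¹ * x) (gx⁻¹ * y)
          omega
        by_cases hixz : ix = iz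
        · have hgxz : gx ≠ gz := fun hc => hpxz (by rw [hixz, hc])
          have hAxz := hPxz.2 hixz hgxz
          have hgzG' : gz ∈ G ix := by rw [hixz]; exact hgzG
          have htri : (len gz : ℤ) ≤ len gx + len (gx⁻¹ * gz) := by
            have h1 := (aux_factor G H a len hHG hcase hlenH hlen1 hlenZ ix).1 gx hgxG
              (gx⁻¹ * gz) (mul_mem (inv_mem hgxG) hgzG')
            have e : gx * (gx⁻¹ * gz) = gz := by group
            rw [e] at h1
            omega
          calc min (auxA len x z) (auxA len y z) ≤ auxA len x z := min_le_left _ _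
            _ ≤ 2 * (len gx : ℤ) := by rw [hAxz]; omega
            _ ≤ auxA len x y := hxy_ge
        · have hAxz := hPxz.1 hixz
          calc min (auxA len x z) (auxA len y z) ≤ auxA len x z := min_le_left _ _
            _ = 0 := hAxz
            _ ≤ auxA len x y := hApos x y
    · by_cases hpyz : (iy, gy) = ((iz, gz) : I × Γ)
      · -- y and z share the first letter, x does not
        have hiyz : iy = iz := congrArg Prod.fst hpyz
        have hgyz : gy = gz := congrArg Prod.snd hpyz
        have hkey : auxA len x z = auxA len x y := by
          by_cases hixy : ix = iy
          · have hgxy : gx ≠ gy := fun hc => hpxy (by rw [hixy, hc])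
            have hixz : ix = iz := hixy.trans hiyz
            have hgxz : gx ≠ gz := by rw [← hgyz]; exact hgxy
            rw [hPxz.2 hixz hgxz, hPxy.2 hixy hgxy, ← hgyz]
          · have hixz : ix ≠ iz := fun hc => hixy (hc.trans hiyz.symm)
            rw [hPxz.1 hixz, hPxy.1 hixy]
        calc min (auxA len x z) (auxA len y z) ≤ auxA len x z := min_le_left _ _
          _ = auxA len x y := hkey
      · by_cases hpxz : (ix, gx) = ((iz, gz) : I × Γ)
        · -- x and z share the first letter, y does not
          have hixz : ix = iz := congrArg Prod.fst hpxz
          have hgxz : gx = gz := congrArg Prod.snd hpxz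
          have hkey : auxA len y z = auxA len x y := by
            by_cases hixy : ix = iy
            · have hgxy : gx ≠ gy := fun hc => hpxy (by rw [hixy, hc])
              have hiyz : iy = iz := hixy.symm.trans hixz
              have hgyz : gy ≠ gz := by rw [← hgxz]; exact fun hc => hgxy hc.symm
              rw [hPyz.2 hiyz hgyz, hPxy.2 hixy hgxy, ← hgxz, hQsymm]
            · have hiyz : iy ≠ iz := fun hc => hixy (hixz.trans hc.symm)
              rw [hPyz.1 hiyz, hPxy.1 hixy]
          calc min (auxA len x z) (auxA len y z) ≤ auxA len y z := min_le_right _ _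
            _ = auxA len x y := hkey
        · -- all first letters pairwise distinct
          by_cases hixy : ix = iy
          · by_cases hixz : ix = iz
            · -- all in the same factor
              have hgxy : gx ≠ gy := fun hc => hpxy (by rw [hixy, hc])
              have hgxz : gx ≠ gz := fun hc => hpxz (by rw [hixz, hc])
              have hgyz : gy ≠ gz := fun hc => hpyz (by rw [hixy.symm.trans hixz, hc])
              have hiyz : iy = iz := hixy.symm.trans hixz
              rw [hPxy.2 hixy hgxy, hPxz.2 hixz hgxz, hPyz.2 hiyz hgyz]
              have hgyΩ' : gy ∈ Ω ix := by rw [hixy]; exact hgyΩ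
              have hgzΩ' : gz ∈ Ω ix := by rw [hixz]; exact hgzΩ
              have hgy1' : gy ≠ 1 := (hRy.2 (iy, gy) (List.mem_cons_self)).2
              have hgx1' : gx ≠ 1 := (hRx.2 (ix, gx) (List.mem_cons_self)).2
              have hgz1' : gz ≠ 1 := (hRz.2 (iz, gz) (List.mem_cons_self)).2
              exact aux_Q G H a Ω len hHG hcase hΩG hΩ1 hΩrep hΩa hNF hlenH hlen1 hlenZ hlenAdd
                ix gx gy gz hgxΩ hgyΩ' hgzΩ' hgx1' hgy1' hgz1' hgxy hgxz hgyz
            · have hAxz := hPxz.1 hixz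
              calc min (auxA len x z) (auxA len y z) ≤ auxA len x z := min_le_left _ _
                _ = 0 := hAxz
                _ ≤ auxA len x y := hApos x y
          · -- ix ≠ iy, so A x y = 0 and one of A x z, A y z is 0
            rw [hPxy.1 hixy]
            by_cases hixz : ix = iz
            · have hiyz : iy ≠ iz := fun hc => hixy (hixz.trans hc.symm)
              calc min (auxA len x z) (auxA len y z) ≤ auxA len y z := min_le_right _ _
                _ = 0 := hPyz.1 hiyz
            · calc min (auxA len x z) (auxA len y z) ≤ auxA len x z := min_le_left _ _
                _ = 0 := hPxz.1 hixz

end Aux2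
section Aux3
variable {I Γ : Type*} [Group Γ]
lemma aux_gen
    (G : I → Subgroup Γ) (H : Subgroup Γ) (a : I → Γ) (Ω : I → Set Γ) (len : Γ → ℕ)
    (hHG : ∀ i, H ≤ G i)
    (hcase : ∀ i, (G i : Set Γ).Finite ∨
      (a i ∈ G i ∧ (∀ h ∈ H, a i * h = h * a i) ∧
       (∀ g ∈ G i, ∃ n : ℤ, ∃ h ∈ H, g = a i ^ n * h) ∧
       (∀ n : ℤ, a i ^ n ∈ H → n = 0)))
    (hΩG : ∀ i, Ω i ⊆ (G i : Set Γ))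
    (hΩ1 : ∀ i, (1 : Γ) ∈ Ω i)
    (hΩrep : ∀ i, ∀ g ∈ G i, ∃! x, x ∈ Ω i ∧ x⁻¹ * g ∈ H)
    (hΩa : ∀ i, ¬ (G i : Set Γ).Finite → Ω i = {g : Γ | ∃ n : ℤ, g = a i ^ n})
    (hNF : ∀ γ : Γ, ∃! wh : List (I × Γ) × Γ,
      IsRWord Ω wh.1 ∧ wh.2 ∈ H ∧ γ = wprod wh.1 * wh.2)
    (hlenH : ∀ h ∈ H, len h = 0)
    (hlen1 : ∀ i, (G i : Set Γ).Finite → ∀ g ∈ G i, g ∉ H → len g = 1)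
    (hlenZ : ∀ i, ¬ (G i : Set Γ).Finite → ∀ n : ℤ, ∀ h ∈ H, len (a i ^ n * h) = n.natAbs)
    (hlenAdd : ∀ w : List (I × Γ), ∀ h ∈ H, IsRWord Ω w →
      len (wprod w * h) = (w.map (fun p => len p.2)).sum) :
    ∀ (i : I) (x : Γ), x ∈ G i → x ∉ H →
      ∃ l : List Γ, (∀ s ∈ l, ∃ i', s ∈ G i' ∧ len s ≤ 1) ∧ l.prod = x ∧ l.length = len x := by
  intro i x hx hxH
  by_cases hfin : (G i : Set Γ).Finite
  · refine ⟨[x], ?_, by simp, by simp [hlen1 i hfin x hx hxH]⟩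
    intro s hs
    rw [List.mem_singleton] at hs
    exact ⟨i, hs ▸ hx, le_of_eq (by rw [hs, hlen1 i hfin x hx hxH])⟩
  · obtain ⟨haG, hcomm, hdec, hinj⟩ := (hcase i).resolve_left hfin
    obtain ⟨n, h₀, hh₀, rfl⟩ := hdec x hx
    have hn : n ≠ 0 := by
      intro h0; rw [h0] at hxH; simp only [zpow_zero, one_mul] at hxH; exact hxH hh₀
    have hsign : n.sign.natAbs = 1 := Int.natAbs_sign_of_ne_zero hn
    have hlenx : len (a i ^ n * h₀) = n.natAbs := hlenZ i hfin n h₀ hh₀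
    have hlens : len (a i ^ n.sign) = 1 := by
      have := hlenZ i hfin n.sign 1 (one_mem H)
      rw [mul_one] at this
      rw [this, hsign]
    have hlensh : len (a i ^ n.sign * h₀) = 1 := by rw [hlenZ i hfin n.sign h₀ hh₀, hsign]
    refine ⟨List.replicate (n.natAbs - 1) (a i ^ n.sign) ++ [a i ^ n.sign * h₀], ?_, ?_, ?_⟩
    · intro s hs
      rcases List.mem_append.mp hs with hs' | hs'
      · rw [List.eq_of_mem_replicate hs']
        exact ⟨i, zpow_mem haG _, by rw [hlens]⟩
      · simp at hs'
        subst hs'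
        exact ⟨i, mul_mem (zpow_mem haG _) (hHG i hh₀), by rw [hlensh]⟩
    · rw [List.prod_append, List.prod_replicate, List.prod_singleton]
      rw [← zpow_natCast (a i ^ n.sign) (n.natAbs - 1), ← zpow_mul, ← mul_assoc, ← zpow_add]
      congr 2
      have h1 : 1 ≤ n.natAbs := by omega
      have h2 : ((n.natAbs - 1 : ℕ) : ℤ) = (n.natAbs : ℤ) - 1 := by omega
      rw [h2]
      have h3 := Int.sign_mul_natAbs n
      ring_nf
      ring_nf at h3
      omega
    · simp [hlenx]
      omega

lemma aux_wordgen
    (G : I → Subgroup Γ) (H : Subgroup Γ) (a : I → Γ) (Ω : I → Set Γ) (len : Γ → ℕ)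
    (hHG : ∀ i, H ≤ G i)
    (hcase : ∀ i, (G i : Set Γ).Finite ∨
      (a i ∈ G i ∧ (∀ h ∈ H, a i * h = h * a i) ∧
       (∀ g ∈ G i, ∃ n : ℤ, ∃ h ∈ H, g = a i ^ n * h) ∧
       (∀ n : ℤ, a i ^ n ∈ H → n = 0)))
    (hΩG : ∀ i, Ω i ⊆ (G i : Set Γ))
    (hΩ1 : ∀ i, (1 : Γ) ∈ Ω i)
    (hΩrep : ∀ i, ∀ g ∈ G i, ∃! x, x ∈ Ω i ∧ x⁻¹ * g ∈ H)
    (hΩa : ∀ i, ¬ (G i : Set Γ).Finite → Ω i = {g : Γ | ∃ n : ℤ, g = a i ^ n})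
    (hNF : ∀ γ : Γ, ∃! wh : List (I × Γ) × Γ,
      IsRWord Ω wh.1 ∧ wh.2 ∈ H ∧ γ = wprod wh.1 * wh.2)
    (hlenH : ∀ h ∈ H, len h = 0)
    (hlen1 : ∀ i, (G i : Set Γ).Finite → ∀ g ∈ G i, g ∉ H → len g = 1)
    (hlenZ : ∀ i, ¬ (G i : Set Γ).Finite → ∀ n : ℤ, ∀ h ∈ H, len (a i ^ n * h) = n.natAbs)
    (hlenAdd : ∀ w : List (I × Γ), ∀ h ∈ H, IsRWord Ω w →
      len (wprod w * h) = (w.map (fun p => len p.2)).sum) :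
    ∀ w : List (I × Γ), IsRWord Ω w →
      ∃ l : List Γ, (∀ s ∈ l, ∃ i', s ∈ G i' ∧ len s ≤ 1) ∧ l.prod = wprod w ∧
        l.length = (w.map (fun p => len p.2)).sum := by
  intro w
  induction w with
  | nil => intro _; exact ⟨[], by simp, by simp [wprod], by simp⟩
  | cons p t ih =>
    intro hRw
    have hRt : IsRWord Ω t :=
      ⟨by simpa [List.Chain'] using hRw.1.tail, fun q hq => hRw.2 q (List.mem_cons_of_mem _ hq)⟩
    obtain ⟨l₂, hm₂, hp₂, hl₂⟩ := ih hRt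
    obtain ⟨hpG, hpH⟩ := aux_letters G H Ω hΩG hΩ1 hΩrep hRw p (List.mem_cons_self)
    obtain ⟨l₁, hm₁, hp₁, hl₁⟩ := aux_gen G H a Ω len hHG hcase hΩG hΩ1 hΩrep hΩa hNF hlenH
      hlen1 hlenZ hlenAdd p.1 p.2 hpG hpH
    refine ⟨l₁ ++ l₂, ?_, ?_, ?_⟩
    · intro s hs
      rcases List.mem_append.mp hs with h' | h'
      · exact hm₁ s h'
      · exact hm₂ s h'
    · rw [List.prod_append, hp₁, hp₂]
      simp [wprod]
    · simp [hl₁, hl₂]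

lemma aux_wlen_le [Nonempty I]
    (G : I → Subgroup Γ) (H : Subgroup Γ) (a : I → Γ) (Ω : I → Set Γ) (len : Γ → ℕ)
    (hHG : ∀ i, H ≤ G i)
    (hcase : ∀ i, (G i : Set Γ).Finite ∨
      (a i ∈ G i ∧ (∀ h ∈ H, a i * h = h * a i) ∧
       (∀ g ∈ G i, ∃ n : ℤ, ∃ h ∈ H, g = a i ^ n * h) ∧
       (∀ n : ℤ, a i ^ n ∈ H → n = 0)))
    (hΩG : ∀ i, Ω i ⊆ (G i : Set Γ))
    (hΩ1 : ∀ i, (1 : Γ) ∈ Ω i)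
    (hΩrep : ∀ i, ∀ g ∈ G i, ∃! x, x ∈ Ω i ∧ x⁻¹ * g ∈ H)
    (hΩa : ∀ i, ¬ (G i : Set Γ).Finite → Ω i = {g : Γ | ∃ n : ℤ, g = a i ^ n})
    (hNF : ∀ γ : Γ, ∃! wh : List (I × Γ) × Γ,
      IsRWord Ω wh.1 ∧ wh.2 ∈ H ∧ γ = wprod wh.1 * wh.2)
    (hlenH : ∀ h ∈ H, len h = 0)
    (hlen1 : ∀ i, (G i : Set Γ).Finite → ∀ g ∈ G i, g ∉ H → len g = 1)
    (hlenZ : ∀ i, ¬ (G i : Set Γ).Finite → ∀ n : ℤ, ∀ h ∈ H, len (a i ^ n * h) = n.natAbs)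
    (hlenAdd : ∀ w : List (I × Γ), ∀ h ∈ H, IsRWord Ω w →
      len (wprod w * h) = (w.map (fun p => len p.2)).sum) :
    ∀ γ : Γ, wLen {g : Γ | ∃ i, g ∈ G i ∧ len g ≤ 1} γ ≤ len γ + 1 := by
  intro γ
  obtain ⟨⟨w, h₀⟩, ⟨hRw, hh₀, hγ⟩, -⟩ := hNF γ
  have hRw : IsRWord Ω w := hRw
  have hh₀ : h₀ ∈ H := hh₀
  have hγ : γ = wprod w * h₀ := hγ
  obtain ⟨l, hm, hp, hl⟩ := aux_wordgen G H a Ω len hHG hcase hΩG hΩ1 hΩrep hΩa hNF hlenH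
    hlen1 hlenZ hlenAdd w hRw
  have i₀ : I := Classical.arbitrary I
  have hlenγ : len γ = (w.map (fun p => len p.2)).sum := by
    rw [hγ]; exact hlenAdd w h₀ hh₀ hRw
  apply Nat.sInf_le
  refine ⟨l ++ [h₀], by simp [hl, hlenγ], ?_, by rw [List.prod_append, hp, List.prod_singleton, ← hγ.symm]⟩
  · intro s hs
    rcases List.mem_append.mp hs with h' | h'
    · exact hm s h'
    · simp at h'
      subst h'
      exact ⟨i₀, hHG i₀ hh₀, by rw [hlenH _ hh₀]; omega⟩

lemma aux_wlen_ge [Nonempty I]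
    (G : I → Subgroup Γ) (H : Subgroup Γ) (a : I → Γ) (Ω : I → Set Γ) (len : Γ → ℕ)
    (hHG : ∀ i, H ≤ G i)
    (hcase : ∀ i, (G i : Set Γ).Finite ∨
      (a i ∈ G i ∧ (∀ h ∈ H, a i * h = h * a i) ∧
       (∀ g ∈ G i, ∃ n : ℤ, ∃ h ∈ H, g = a i ^ n * h) ∧
       (∀ n : ℤ, a i ^ n ∈ H → n = 0)))
    (hΩG : ∀ i, Ω i ⊆ (G i : Set Γ))
    (hΩ1 : ∀ i, (1 : Γ) ∈ Ω i)
    (hΩrep : ∀ i, ∀ g ∈ G i, ∃! x, x ∈ Ω i ∧ x⁻¹ * g ∈ H)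
    (hΩa : ∀ i, ¬ (G i : Set Γ).Finite → Ω i = {g : Γ | ∃ n : ℤ, g = a i ^ n})
    (hNF : ∀ γ : Γ, ∃! wh : List (I × Γ) × Γ,
      IsRWord Ω wh.1 ∧ wh.2 ∈ H ∧ γ = wprod wh.1 * wh.2)
    (hlenH : ∀ h ∈ H, len h = 0)
    (hlen1 : ∀ i, (G i : Set Γ).Finite → ∀ g ∈ G i, g ∉ H → len g = 1)
    (hlenZ : ∀ i, ¬ (G i : Set Γ).Finite → ∀ n : ℤ, ∀ h ∈ H, len (a i ^ n * h) = n.natAbs)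
    (hlenAdd : ∀ w : List (I × Γ), ∀ h ∈ H, IsRWord Ω w →
      len (wprod w * h) = (w.map (fun p => len p.2)).sum) :
    ∀ γ : Γ, len γ ≤ wLen {g : Γ | ∃ i, g ∈ G i ∧ len g ≤ 1} γ := by
  have hprodle : ∀ l : List Γ, (∀ s ∈ l, ∃ i', s ∈ G i' ∧ len s ≤ 1) → len l.prod ≤ l.length := by
    intro l
    induction l with
    | nil => intro _; simp [hlenH 1 (one_mem H)]
    | cons s t ih =>
      intro hm
      rw [List.prod_cons]
      calc len (s * t.prod) ≤ len s + len t.prod :=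
            aux_sub G H a Ω len hHG hcase hΩG hΩ1 hΩrep hΩa hNF hlenH hlen1 hlenZ hlenAdd s t.prod
      _ ≤ 1 + t.length := by
            obtain ⟨i', -, h1⟩ := hm s (List.mem_cons_self)
            have h2 := ih (fun q hq => hm q (List.mem_cons_of_mem _ hq))
            omega
      _ = (s :: t).length := by simp; omega
  intro γ
  have hne : {n : ℕ | ∃ l : List Γ, l.length = n ∧
      (∀ s ∈ l, s ∈ {g : Γ | ∃ i, g ∈ G i ∧ len g ≤ 1}) ∧ l.prod = γ}.Nonempty := by
    obtain ⟨⟨w, h₀⟩, ⟨hRw, hh₀, hγ⟩, -⟩ := hNF γ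
    have hRw : IsRWord Ω w := hRw
    have hh₀ : h₀ ∈ H := hh₀
    have hγ : γ = wprod w * h₀ := hγ
    obtain ⟨l, hm, hp, hl⟩ := aux_wordgen G H a Ω len hHG hcase hΩG hΩ1 hΩrep hΩa hNF hlenH
      hlen1 hlenZ hlenAdd w hRw
    have i₀ : I := Classical.arbitrary I
    refine ⟨(l ++ [h₀]).length, l ++ [h₀], rfl, ?_, by rw [List.prod_append, hp, List.prod_singleton, ← hγ.symm]⟩
    intro s hs
    rcases List.mem_append.mp hs with h' | h'
    · exact hm s h'
    · simp at h'
      subst h'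
      exact ⟨i₀, hHG i₀ hh₀, by rw [hlenH _ hh₀]; omega⟩
  obtain ⟨l, hlen, hm, hp⟩ := Nat.sInf_mem hne
  rw [wLen, ← hlen, ← hp]
  exact hprodle l hm

end Aux3

/-- The amalgamated free product `Γ = ∗_H G i` (each `G i` finite or
`ℤ × H`, `H` finite) is a hyperbolic group: there exists `δ ≥ 0` such that for all
`x, y, z ∈ Γ`, `⟨x|y⟩ ≥ min (⟨x|z⟩) (⟨y|z⟩) - δ`, the Gromov product being taken at the
identity with respect to the word metric for `S = {g ∈ ⋃ᵢ G i : |g| ≤ 1}`. -/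
theorem stmt_10 {I Γ : Type*} [Fintype I] [DecidableEq I] [Group Γ]
    (G : I → Subgroup Γ) (H : Subgroup Γ) (a : I → Γ)
    (Ω : I → Set Γ) (len : Γ → ℕ)
    (hHG : ∀ i, H ≤ G i)
    (hHfin : (H : Set Γ).Finite)
    (hcase : ∀ i, (G i : Set Γ).Finite ∨
      (a i ∈ G i ∧ (∀ h ∈ H, a i * h = h * a i) ∧
       (∀ g ∈ G i, ∃ n : ℤ, ∃ h ∈ H, g = a i ^ n * h) ∧
       (∀ n : ℤ, a i ^ n ∈ H → n = 0)))
    (hΩG : ∀ i, Ω i ⊆ (G i : Set Γ))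
    (hΩ1 : ∀ i, (1 : Γ) ∈ Ω i)
    (hΩrep : ∀ i, ∀ g ∈ G i, ∃! x, x ∈ Ω i ∧ x⁻¹ * g ∈ H)
    (hΩa : ∀ i, ¬ (G i : Set Γ).Finite → Ω i = {g : Γ | ∃ n : ℤ, g = a i ^ n})
    (hNF : ∀ γ : Γ, ∃! wh : List (I × Γ) × Γ,
      IsRWord Ω wh.1 ∧ wh.2 ∈ H ∧ γ = wprod wh.1 * wh.2)
    (hlenH : ∀ h ∈ H, len h = 0)
    (hlen1 : ∀ i, (G i : Set Γ).Finite → ∀ g ∈ G i, g ∉ H → len g = 1)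
    (hlenZ : ∀ i, ¬ (G i : Set Γ).Finite → ∀ n : ℤ, ∀ h ∈ H, len (a i ^ n * h) = n.natAbs)
    (hlenAdd : ∀ w : List (I × Γ), ∀ h ∈ H, IsRWord Ω w →
      len (wprod w * h) = (w.map (fun p => len p.2)).sum) :
    ∃ δ : ℝ, 0 ≤ δ ∧ ∀ x y z : Γ,
      gromovProdWord {g : Γ | ∃ i, g ∈ G i ∧ len g ≤ 1} x y ≥
        min (gromovProdWord {g : Γ | ∃ i, g ∈ G i ∧ len g ≤ 1} x z)
            (gromovProdWord {g : Γ | ∃ i, g ∈ G i ∧ len g ≤ 1} y z) - δ := by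
  
  classical
  refine ⟨2, by norm_num, ?_⟩
  intro x y z
  rcases isEmpty_or_nonempty I with hI | hI
  · have hw0 : ∀ γ : Γ, wLen {g : Γ | ∃ i, g ∈ G i ∧ len g ≤ 1} γ = 0 := by
      intro γ
      rcases eq_or_ne γ 1 with rfl | hγ
      · have h0 : 0 ∈ {n : ℕ | ∃ l : List Γ, l.length = n ∧
            (∀ s ∈ l, s ∈ {g : Γ | ∃ i, g ∈ G i ∧ len g ≤ 1}) ∧ l.prod = 1} :=
          ⟨[], rfl, by simp, by simp⟩
        have h1 := Nat.sInf_le h0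
        rw [wLen]
        omega
      · have he : {n : ℕ | ∃ l : List Γ, l.length = n ∧
            (∀ s ∈ l, s ∈ {g : Γ | ∃ i, g ∈ G i ∧ len g ≤ 1}) ∧ l.prod = γ} = ∅ := by
          ext n
          simp only [Set.mem_setOf_eq, Set.mem_empty_iff_false, iff_false]
          rintro ⟨l, -, hmem, hprod⟩
          cases l with
          | nil => rw [List.prod_nil] at hprod; exact hγ hprod.symm
          | cons s t =>
            obtain ⟨i, -, -⟩ := hmem s (List.mem_cons_self)
            exact hI.false i
        rw [wLen, he, Nat.sInf_empty]
    simp only [gromovProdWord, wDist, hw0]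
    norm_num
  · set S : Set Γ := {g : Γ | ∃ i, g ∈ G i ∧ len g ≤ 1} with hSdef
    have hLinv := aux_len_inv G H a Ω len hHG hcase hΩG hΩ1 hΩrep hΩa hNF hlenH hlen1 hlenZ hlenAdd
    have hge := aux_wlen_ge G H a Ω len hHG hcase hΩG hΩ1 hΩrep hΩa hNF hlenH hlen1 hlenZ hlenAdd
    have hle := aux_wlen_le G H a Ω len hHG hcase hΩG hΩ1 hΩrep hΩa hNF hlenH hlen1 hlenZ hlenAdd
    have hm := aux_main G H a Ω len hHG hcase hΩG hΩ1 hΩrep hΩa hNF hlenH hlen1 hlenZ hlenAdd x y z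
    have hb : ∀ u : Γ, (len u : ℝ) ≤ wLen S u⁻¹ ∧ (wLen S u⁻¹ : ℝ) ≤ len u + 1 := by
      intro u
      have h1 := hge u⁻¹
      have h2 := hle u⁻¹
      rw [hLinv u] at h1 h2
      constructor
      · exact_mod_cast h1
      · exact_mod_cast h2
    have hb2 : ∀ u v : Γ, (len (u⁻¹ * v) : ℝ) ≤ wLen S (u⁻¹ * v) ∧
        (wLen S (u⁻¹ * v) : ℝ) ≤ len (u⁻¹ * v) + 1 := by
      intro u v
      exact ⟨by exact_mod_cast hge (u⁻¹ * v), by exact_mod_cast hle (u⁻¹ * v)⟩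
    have e : ∀ u v : Γ, gromovProdWord S u v =
        ((wLen S u⁻¹ : ℝ) + (wLen S v⁻¹ : ℝ) - (wLen S (u⁻¹ * v) : ℝ)) / 2 := by
      intro u v
      simp [gromovProdWord, wDist]
    rw [ge_iff_le, e x y, e x z, e y z]
    rcases le_total (auxA len x z) (auxA len y z) with hmin | hmin
    · have hA : auxA len x z ≤ auxA len x y := by
        rw [min_eq_left hmin] at hm; exact hm
      have hAR : (len x : ℝ) + len z - len (x⁻¹ * z) ≤ (len x : ℝ) + len y - len (x⁻¹ * y) := by
        simp only [auxA] at hA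
        exact_mod_cast hA
      have hminle := min_le_left (((wLen S x⁻¹ : ℝ) + (wLen S z⁻¹ : ℝ) - (wLen S (x⁻¹ * z) : ℝ)) / 2)
        (((wLen S y⁻¹ : ℝ) + (wLen S z⁻¹ : ℝ) - (wLen S (y⁻¹ * z) : ℝ)) / 2)
      have b1 := hb x; have b2 := hb y; have b3 := hb z
      have c1 := hb2 x y; have c2 := hb2 x z; have c3 := hb2 y z
      linarith [b1.1, b1.2, b2.1, b2.2, b3.1, b3.2, c1.1, c1.2, c2.1, c2.2, c3.1, c3.2]
    · have hA : auxA len y z ≤ auxA len x y := by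
        rw [min_eq_right hmin] at hm; exact hm
      have hAR : (len y : ℝ) + len z - len (y⁻¹ * z) ≤ (len x : ℝ) + len y - len (x⁻¹ * y) := by
        simp only [auxA] at hA
        exact_mod_cast hA
      have hminle := min_le_right (((wLen S x⁻¹ : ℝ) + (wLen S z⁻¹ : ℝ) - (wLen S (x⁻¹ * z) : ℝ)) / 2)
        (((wLen S y⁻¹ : ℝ) + (wLen S z⁻¹ : ℝ) - (wLen S (y⁻¹ * z) : ℝ)) / 2)
      have b1 := hb x; have b2 := hb y; have b3 := hb z
      have c1 := hb2 x y; have c2 := hb2 x z; have c3 := hb2 y z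
      linarith [b1.1, b1.2, b2.1, b2.2, b3.1, b3.2, c1.1, c1.2, c2.1, c2.2, c3.1, c3.2]
end
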